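/- arXiv:1607.05314 — 8 statements merged into one kernel-verified Lean document; each statement's English description precedes it below -/
import Mathlib

section
/- Let m and n be non-negative integers with m ≤ n. Then, as an identity of rational numbers, ∑_{j=0}^{m} ∑_{i=0}^{j} C(2n, n+i) · C(2m, m+j) = 4^{n+m}/8 + (1/4)·C(2n+2m, n+m) + (1/2)·C(2n,n)·C(2m,m) + (4^m/4)·C(2n,n) − (1/8)·∑_{ℓ=0}^{n−m} C(2n−2ℓ, n−ℓ) · C(2m+2ℓ, m+ℓ). -/
open Finset

namespace KS10

def ch (a b : ℕ) : ℚ := (a.choose b : ℚ)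
def hc (s : ℕ) : ℚ := ch (2*s) s

lemma ch_zero {a b : ℕ} (h : a < b) : ch a b = 0 := by
  simp [ch, Nat.choose_eq_zero_of_lt h]

lemma pascal (a b : ℕ) : ch (a+1) (b+1) = ch a b + ch a (b+1) := by
  unfold ch; exact_mod_cast congrArg (Nat.cast (R := ℚ)) (Nat.choose_succ_succ a b)

lemma pascal2 (a b : ℕ) : ch (a+2) (b+2) = ch a b + 2*ch a (b+1) + ch a (b+2) := by
  have h1 : ch (a+2) (b+2) = ch (a+1) (b+1) + ch (a+1) (b+2) := pascal (a+1) (b+1)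
  have h2 : ch (a+1) (b+2) = ch a (b+1) + ch a (b+2) := pascal a (b+1)
  have h3 : ch (a+1) (b+1) = ch a b + ch a (b+1) := pascal a b
  rw [h1, h2, h3]; ring

lemma ch_flip {N i j : ℕ} (hij : i + j = N) : ch N i = ch N j := by
  have hi : i ≤ N := by omega
  have : N - i = j := by omega
  rw [ch, ch, ← Nat.choose_symm hi, this]

lemma two_ch (x : ℕ) : 2 * ch (2*x+1) (x+1) = hc (x+1) := by
  have hs : ch (2*x+1) x = ch (2*x+1) (x+1) := ch_flip (by omega)
  have hp : ch (2*x+2) (x+1) = ch (2*x+1) x + ch (2*x+1) (x+1) := pascal (2*x+1) x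
  have hh : hc (x+1) = ch (2*x+2) (x+1) := by
    unfold hc; rw [show 2*(x+1) = 2*x+2 from by ring]
  rw [hh, hp, hs]; ring

lemma hc_succ (s : ℕ) : hc (s+1) = 2*hc s + 2*ch (2*s) (s+1) := by
  have h1 : ch (2*s+1) (s+1) = ch (2*s) s + ch (2*s) (s+1) := pascal (2*s) s
  have h2 : 2 * ch (2*s+1) (s+1) = hc (s+1) := two_ch s
  rw [← h2, h1]; unfold hc; ring

/-- row sum fold -/
lemma sumB (m : ℕ) : 2 * ∑ j ∈ range (m+1), ch (2*m) (m+j) = 4^m + hc m := by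
  have base : ∑ i ∈ range (2*m+1), ch (2*m) i = 4^m := by
    have c : (∑ i ∈ range (2*m+1), ((2*m).choose i : ℚ)) = (2:ℚ)^(2*m) := by
      exact_mod_cast Nat.sum_range_choose (2*m)
    rw [pow_mul] at c
    norm_num at c
    simpa [ch] using c
  have split : ∑ i ∈ range m, ch (2*m) i + ∑ i ∈ Ico m (2*m+1), ch (2*m) i
      = ∑ i ∈ range (2*m+1), ch (2*m) i := by
    simp only [range_eq_Ico]
    exact sum_Ico_consecutive _ (by omega) (by omega)
  have hB : ∑ i ∈ Ico m (2*m+1), ch (2*m) i = ∑ k ∈ range (m+1), ch (2*m) (m+k) := by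
    rw [sum_Ico_eq_sum_range]
    rw [show 2*m+1-m = m+1 from by omega]
  have hA : ∑ i ∈ range m, ch (2*m) i = ∑ i ∈ range m, ch (2*m) (m+1+i) := by
    rw [← sum_range_reflect]
    apply sum_congr rfl
    intro i hi
    have hi' : i < m := mem_range.mp hi
    exact ch_flip (by omega)
  have peel : ∑ k ∈ range (m+1), ch (2*m) (m+k)
      = ∑ k ∈ range m, ch (2*m) (m+1+k) + hc m := by
    rw [sum_range_succ' (fun k => ch (2*m) (m+k)) m]
    have e : ∀ k, ch (2*m) (m+(k+1)) = ch (2*m) (m+1+k) := by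
      intro k; congr 1; omega
    simp only [e, Nat.add_zero]
    rfl
  rw [hB, hA] at split
  rw [peel] at split ⊢
  rw [base] at split
  linarith [split]

/-- diagonal Vandermonde fold -/
lemma sumAB {m n : ℕ} (hmn : m ≤ n) :
    2 * ∑ k ∈ range (m+1), ch (2*n) (n+k) * ch (2*m) (m+k) = hc (n+m) + hc n * hc m := by
  have base : hc (n+m) = ∑ k ∈ range (n+m+1), ch (2*n) k * ch (2*m) (n+m-k) := by
    have v : ((2*n+2*m).choose (n+m) : ℚ)
        = ∑ k ∈ range (n+m+1), ((2*n).choose k : ℚ) * ((2*m).choose (n+m-k) : ℚ) := by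
      rw [Nat.add_choose_eq, Finset.Nat.sum_antidiagonal_eq_sum_range_succ_mk]
      push_cast; rfl
    unfold hc ch
    rw [show 2*(n+m) = 2*n+2*m from by ring]
    exact v
  have split : ∑ k ∈ range n, ch (2*n) k * ch (2*m) (n+m-k)
      + ∑ k ∈ Ico n (n+m+1), ch (2*n) k * ch (2*m) (n+m-k)
      = ∑ k ∈ range (n+m+1), ch (2*n) k * ch (2*m) (n+m-k) := by
    simp only [range_eq_Ico]
    exact sum_Ico_consecutive _ (by omega) (by omega)
  have hB : ∑ k ∈ Ico n (n+m+1), ch (2*n) k * ch (2*m) (n+m-k)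
      = ∑ j ∈ range (m+1), ch (2*n) (n+j) * ch (2*m) (m+j) := by
    rw [sum_Ico_eq_sum_range]
    rw [show n+m+1-n = m+1 from by omega]
    apply sum_congr rfl
    intro j hj
    have hj' : j < m + 1 := mem_range.mp hj
    rw [show n+m-(n+j) = m-j from by omega]
    congr 1
    exact ch_flip (by omega)
  have hA : ∑ k ∈ range n, ch (2*n) k * ch (2*m) (n+m-k)
      = ∑ i ∈ range n, ch (2*n) (n+1+i) * ch (2*m) (m+1+i) := by
    rw [← sum_range_reflect]
    apply sum_congr rfl
    intro i hi
    have hi' : i < n := mem_range.mp hi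
    rw [show n+m-(n-1-i) = m+1+i from by omega]
    congr 1
    exact ch_flip (by omega)
  have hA2 : ∑ i ∈ range n, ch (2*n) (n+1+i) * ch (2*m) (m+1+i)
      = ∑ i ∈ range m, ch (2*n) (n+1+i) * ch (2*m) (m+1+i) := by
    symm
    apply sum_subset (range_subset_range.mpr hmn)
    intro i _ hi2
    have : m ≤ i := by
      by_contra hcon
      exact hi2 (mem_range.mpr (by omega))
    rw [ch_zero (a := 2*m) (by omega)]
    ring
  have peel : ∑ k ∈ range (m+1), ch (2*n) (n+k) * ch (2*m) (m+k)
      = ∑ i ∈ range m, ch (2*n) (n+1+i) * ch (2*m) (m+1+i) + hc n * hc m := by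
    rw [sum_range_succ' (fun k => ch (2*n) (n+k) * ch (2*m) (m+k)) m]
    have e : ∀ k, ch (2*n) (n+(k+1)) * ch (2*m) (m+(k+1))
        = ch (2*n) (n+1+k) * ch (2*m) (m+1+k) := by
      intro k; congr 2 <;> omega
    simp only [e, Nat.add_zero]
    rfl
  rw [hB, hA, hA2] at split
  rw [peel, ← base] at split
  linarith [split]

/-- off-diagonal Vandermonde split -/
lemma vand1 (m n : ℕ) :
    ch (2*n+2*m) (n+m+1)
      = (∑ k ∈ range (m+1), ch (2*n) (n+1+k) * ch (2*m) (m+k))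
      + ∑ k ∈ range (n+1), ch (2*m) (m+1+k) * ch (2*n) (n+k) := by
  have base : ch (2*n+2*m) (n+m+1) = ∑ k ∈ range (n+m+2), ch (2*n) k * ch (2*m) (n+m+1-k) := by
    unfold ch
    rw [Nat.add_choose_eq, Finset.Nat.sum_antidiagonal_eq_sum_range_succ_mk]
    push_cast; rfl
  have split : ∑ k ∈ range (n+1), ch (2*n) k * ch (2*m) (n+m+1-k)
      + ∑ k ∈ Ico (n+1) (n+m+2), ch (2*n) k * ch (2*m) (n+m+1-k)
      = ∑ k ∈ range (n+m+2), ch (2*n) k * ch (2*m) (n+m+1-k) := by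
    simp only [range_eq_Ico]
    exact sum_Ico_consecutive _ (by omega) (by omega)
  have hB : ∑ k ∈ Ico (n+1) (n+m+2), ch (2*n) k * ch (2*m) (n+m+1-k)
      = ∑ j ∈ range (m+1), ch (2*n) (n+1+j) * ch (2*m) (m+j) := by
    rw [sum_Ico_eq_sum_range]
    rw [show n+m+2-(n+1) = m+1 from by omega]
    apply sum_congr rfl
    intro j hj
    have hj' : j < m + 1 := mem_range.mp hj
    rw [show n+m+1-(n+1+j) = m-j from by omega]
    congr 1
    exact ch_flip (by omega)
  have hA : ∑ k ∈ range (n+1), ch (2*n) k * ch (2*m) (n+m+1-k)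
      = ∑ i ∈ range (n+1), ch (2*m) (m+1+i) * ch (2*n) (n+i) := by
    rw [← sum_range_reflect]
    apply sum_congr rfl
    intro i hi
    have hi' : i < n+1 := mem_range.mp hi
    rw [show n+1-1-i = n-i from by omega]
    rw [show n+m+1-(n-i) = m+1+i from by omega]
    rw [ch_flip (N := 2*n) (i := n-i) (j := n+i) (by omega)]
    ring
  rw [hB, hA] at split
  rw [base]
  linarith [split]


/-- one-sided correlation sums -/
def Etl (r m n : ℕ) : ℚ := ∑ k ∈ range (m+1), ch (2*n) (n+r+k) * ch (2*m) (m+k)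
def Eo (r m n : ℕ) : ℚ := ∑ k ∈ range (n+1), ch (2*m) (m+r+k) * ch (2*n) (n+k)

/-- the summand of the non-closed part -/
def Vv (r x y : ℕ) : ℚ := 2 * ch (2*x+1) (x+r) * hc y - hc (x+1) * ch (2*y) (y+r)

lemma Vv_zero (x y : ℕ) : Vv 0 x y = 0 := by
  unfold Vv
  rw [show x+0 = x from rfl, show y+0 = y from rfl]
  rw [ch_flip (N := 2*x+1) (i := x) (j := x+1) (by omega)]
  rw [two_ch x]
  unfold hc
  ring

lemma Eo_zero {m n : ℕ} (hmn : m ≤ n) : Eo 0 m n = Etl 0 m n := by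
  unfold Eo Etl
  rw [show m+0 = m from rfl, show n+0 = n from rfl]
  have flip : ∑ k ∈ range (m+1), ch (2*n) (n+k) * ch (2*m) (m+k)
      = ∑ k ∈ range (m+1), ch (2*m) (m+k) * ch (2*n) (n+k) :=
    sum_congr rfl (fun k _ => mul_comm _ _)
  rw [flip]
  refine (sum_subset (range_subset_range.mpr (by omega)) ?_).symm
  intro k hk1 hk2
  have hk : m < k := by
    have := mem_range.not.mp hk2
    omega
  rw [ch_zero (show 2*m < m+k by omega)]
  ring

lemma shift1 (f : ℕ → ℚ) (n : ℕ) : ∑ k ∈ range (n+1), f (k+1) = ∑ k ∈ range (n+2), f k - f 0 := by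
  rw [sum_range_succ' f (n+1)]; ring

lemma shift2 (f : ℕ → ℚ) (n : ℕ) :
    ∑ k ∈ range (n+1), f (k+2) = ∑ k ∈ range (n+3), f k - f 0 - f 1 := by
  rw [sum_range_succ' f (n+2), sum_range_succ' (fun k => f (k+1)) (n+1)]; ring


/-- Pascal recurrence for `Etl` -/
lemma Etl_succ (r m n : ℕ) :
    Etl (r+1) m (n+1) = Etl r m n + 2*Etl (r+1) m n + Etl (r+2) m n := by
  unfold Etl
  rw [mul_sum, ← sum_add_distrib, ← sum_add_distrib]
  apply sum_congr rfl
  intro k _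
  have p := pascal2 (2*n) (n+r+k)
  rw [show 2*n+2 = 2*(n+1) from by ring, show n+r+k+2 = n+1+(r+1)+k from by ring,
      show n+r+k+1 = n+(r+1)+k from by ring] at p
  rw [p, show n+(r+2)+k = n+(r+1)+k+1 from by ring]
  ring

/-- Pascal recurrence for `Eo` (with boundary corrections) -/
lemma Eo_succ (r m n : ℕ) :
    Eo (r+1) m (n+1) = Eo r m n + 2*Eo (r+1) m n + Eo (r+2) m n
      + ch (2*m) (m+r+1) * ch (2*n) (n+1) - ch (2*m) (m+r) * hc n := by
  have peel : Eo (r+1) m (n+1)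
      = ∑ k ∈ range (n+1), ch (2*m) (m+r+2+k) * ch (2*(n+1)) (n+2+k)
        + ch (2*m) (m+r+1) * hc (n+1) := by
    unfold Eo
    rw [sum_range_succ' (fun k => ch (2*m) (m+(r+1)+k) * ch (2*(n+1)) (n+1+k)) (n+1)]
    congr 1
    · apply sum_congr rfl
      intro k _
      rw [show m+(r+1)+(k+1) = m+r+2+k from by ring, show n+1+(k+1) = n+2+k from by ring]
  have expand : ∀ k, ch (2*(n+1)) (n+2+k)
      = ch (2*n) (n+k) + 2*ch (2*n) (n+1+k) + ch (2*n) (n+2+k) := by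
    intro k
    have p := pascal2 (2*n) (n+k)
    rw [show 2*n+2 = 2*(n+1) from by ring, show n+k+2 = n+2+k from by ring,
        show n+k+1 = n+1+k from by ring] at p
    exact p
  have main : ∑ k ∈ range (n+1), ch (2*m) (m+r+2+k) * ch (2*(n+1)) (n+2+k)
      = Eo (r+2) m n
        + 2*(Eo (r+1) m n - ch (2*m) (m+r+1) * hc n)
        + (Eo r m n - ch (2*m) (m+r) * hc n - ch (2*m) (m+r+1) * ch (2*n) (n+1)) := by
    have e1 : ∑ k ∈ range (n+1), ch (2*m) (m+r+2+k) * ch (2*n) (n+k) = Eo (r+2) m n := by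
      unfold Eo
      apply sum_congr rfl
      intro k _
      rw [show m+(r+2)+k = m+r+2+k from by ring]
    have e2 : ∑ k ∈ range (n+1), ch (2*m) (m+r+2+k) * ch (2*n) (n+1+k)
        = Eo (r+1) m n - ch (2*m) (m+r+1) * hc n := by
      have s1 := shift1 (fun j => ch (2*m) (m+r+1+j) * ch (2*n) (n+j)) n
      have lhseq : ∑ k ∈ range (n+1), ch (2*m) (m+r+2+k) * ch (2*n) (n+1+k)
          = ∑ k ∈ range (n+1), (fun j => ch (2*m) (m+r+1+j) * ch (2*n) (n+j)) (k+1) := by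
        apply sum_congr rfl
        intro k _
        simp only
        rw [show m+r+1+(k+1) = m+r+2+k from by ring, show n+(k+1) = n+1+k from by ring]
      rw [lhseq, s1]
      have top : ∑ k ∈ range (n+2), ch (2*m) (m+r+1+k) * ch (2*n) (n+k)
          = Eo (r+1) m n := by
        rw [sum_range_succ]
        rw [ch_zero (show 2*n < n+(n+1) by omega)]
        unfold Eo
        rw [mul_zero, add_zero]
        apply sum_congr rfl
        intro k _
        rw [show m+(r+1)+k = m+r+1+k from by ring]
      rw [top]
      simp [hc]
    have e3 : ∑ k ∈ range (n+1), ch (2*m) (m+r+2+k) * ch (2*n) (n+2+k)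
        = Eo r m n - ch (2*m) (m+r) * hc n - ch (2*m) (m+r+1) * ch (2*n) (n+1) := by
      have s2 := shift2 (fun j => ch (2*m) (m+r+j) * ch (2*n) (n+j)) n
      have lhseq : ∑ k ∈ range (n+1), ch (2*m) (m+r+2+k) * ch (2*n) (n+2+k)
          = ∑ k ∈ range (n+1), (fun j => ch (2*m) (m+r+j) * ch (2*n) (n+j)) (k+2) := by
        apply sum_congr rfl
        intro k _
        simp only
        rw [show m+r+(k+2) = m+r+2+k from by ring, show n+(k+2) = n+2+k from by ring]
      rw [lhseq, s2]
      have top : ∑ k ∈ range (n+3), ch (2*m) (m+r+k) * ch (2*n) (n+k) = Eo r m n := by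
        rw [sum_range_succ, sum_range_succ]
        rw [ch_zero (show 2*n < n+(n+1) by omega), ch_zero (show 2*n < n+(n+2) by omega)]
        unfold Eo
        ring
      rw [top]
      simp [hc]
    calc ∑ k ∈ range (n+1), ch (2*m) (m+r+2+k) * ch (2*(n+1)) (n+2+k)
        = ∑ k ∈ range (n+1), (ch (2*m) (m+r+2+k) * ch (2*n) (n+k)
            + 2*(ch (2*m) (m+r+2+k) * ch (2*n) (n+1+k))
            + ch (2*m) (m+r+2+k) * ch (2*n) (n+2+k)) := by
          apply sum_congr rfl
          intro k _
          rw [expand k]; ring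
      _ = _ := by
          rw [sum_add_distrib, sum_add_distrib, ← mul_sum, e1, e2, e3]
  rw [peel, main, hc_succ n]
  ring

/-- local Pascal identity for `Vv` -/
lemma Vpascal (r x y : ℕ) :
    Vv (r+1) x (y+1) = Vv r x y + 2*Vv (r+1) x y + Vv (r+2) x y
      + 2*ch (2*x+1) (x+r+1) * hc (y+1) - 2*ch (2*x+3) (x+r+2) * hc y := by
  unfold Vv
  have py : ch (2*(y+1)) (y+1+(r+1)) = ch (2*y) (y+r) + 2*ch (2*y) (y+r+1) + ch (2*y) (y+r+2) := by
    rw [show 2*(y+1) = 2*y+2 from by ring, show y+1+(r+1) = y+r+2 from by ring]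
    exact pascal2 (2*y) (y+r)
  have px : ch (2*x+3) (x+r+2) = ch (2*x+1) (x+r) + 2*ch (2*x+1) (x+r+1) + ch (2*x+1) (x+r+2) := by
    have p := pascal2 (2*x+1) (x+r)
    rw [show 2*x+1+2 = 2*x+3 from by ring] at p
    exact p
  rw [py, px, show y+(r+1) = y+r+1 from by ring, show x+(r+1) = x+r+1 from by ring,
      show y+(r+2) = y+r+2 from by ring, show x+(r+2) = x+r+2 from by ring]
  ring


/-- KEY LEMMA: the antisymmetric part of the one-sided correlations -/
lemma key (m : ℕ) : ∀ d r, 2*(Etl r m (m+d) - Eo r m (m+d))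
    = ∑ t ∈ range d, Vv r (m+t) (m+(d-1-t)) := by
  intro d
  induction d with
  | zero =>
      intro r
      simp only [range_zero, sum_empty, Nat.add_zero]
      have : Etl r m m = Eo r m m := by
        unfold Etl Eo
        rfl
      rw [this]; ring
  | succ d IH =>
      intro r
      match r with
      | 0 =>
          rw [Eo_zero (show m ≤ m+(d+1) by omega)]
          simp [Vv_zero]
      | r'+1 =>
          rw [show m+(d+1) = (m+d)+1 from rfl]
          rw [Etl_succ r' m (m+d), Eo_succ r' m (m+d)]
          simp only [Nat.add_sub_cancel]
          set F : ℕ → ℚ := fun t => 2*ch (2*(m+t)+1) (m+t+r'+1) * hc (m+(d-t)) with hF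
          have point : ∀ t ∈ range d, Vv (r'+1) (m+t) (m+(d-t))
              = Vv r' (m+t) (m+(d-1-t)) + 2*Vv (r'+1) (m+t) (m+(d-1-t))
                + Vv (r'+2) (m+t) (m+(d-1-t)) + (F t - F (t+1)) := by
            intro t ht
            have htd : t < d := mem_range.mp ht
            have h1 : m+(d-t) = m+(d-1-t)+1 := by omega
            have h2 : F t = 2*ch (2*(m+t)+1) (m+t+r'+1) * hc (m+(d-1-t)+1) := by
              rw [hF]; simp only; rw [h1]
            have h3 : F (t+1) = 2*ch (2*(m+t)+3) (m+t+r'+2) * hc (m+(d-1-t)) := by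
              rw [hF]; simp only
              rw [show m+(d-(t+1)) = m+(d-1-t) from by omega,
                  show 2*(m+(t+1))+1 = 2*(m+t)+3 from by ring,
                  show m+(t+1)+r'+1 = m+t+r'+2 from by ring]
            rw [h1, h2, h3, Vpascal r' (m+t) (m+(d-1-t))]
            ring
          rw [sum_range_succ (fun t => Vv (r'+1) (m+t) (m+(d-t))) d]
          rw [sum_congr rfl point]
          rw [show (∑ t ∈ range d, (Vv r' (m+t) (m+(d-1-t)) + 2*Vv (r'+1) (m+t) (m+(d-1-t))
                + Vv (r'+2) (m+t) (m+(d-1-t)) + (F t - F (t+1))))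
              = (∑ t ∈ range d, Vv r' (m+t) (m+(d-1-t)))
                + 2*(∑ t ∈ range d, Vv (r'+1) (m+t) (m+(d-1-t)))
                + (∑ t ∈ range d, Vv (r'+2) (m+t) (m+(d-1-t)))
                + ∑ t ∈ range d, (F t - F (t+1)) from by
            rw [mul_sum, ← sum_add_distrib, ← sum_add_distrib, ← sum_add_distrib]]
          rw [sum_range_sub' F d]
          have bF0 : F 0 = 2*ch (2*m+1) (m+r'+1) * hc (m+d) := by
            rw [hF]; simp only
            rw [show m+(d-0) = m+d from by omega, show 2*(m+0)+1 = 2*m+1 from by ring,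
                show m+0+r'+1 = m+r'+1 from by ring]
          have bFd : F d = 2*ch (2*(m+d)+1) (m+d+r'+1) * hc m := by
            rw [hF]; simp only
            rw [show m+(d-d) = m from by omega]
          have bV : Vv (r'+1) (m+d) (m+(d-d))
              = 2*ch (2*(m+d)+1) (m+d+r'+1) * hc m - hc (m+d+1) * ch (2*m) (m+r'+1) := by
            rw [show m+(d-d) = m from by omega]
            unfold Vv
            rw [show m+d+(r'+1) = m+d+r'+1 from by ring, show m+(r'+1) = m+r'+1 from by ring]
          have pasc : ch (2*m+1) (m+r'+1) = ch (2*m) (m+r') + ch (2*m) (m+r'+1) :=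
            pascal (2*m) (m+r')
          have hsucc : hc (m+d+1) = 2*hc (m+d) + 2*ch (2*(m+d)) (m+d+1) := hc_succ (m+d)
          have IH0 := IH r'
          have IH1 := IH (r'+1)
          have IH2 := IH (r'+2)
          rw [bF0, bFd, bV, pasc]
          linear_combination IH0 + 2*IH1 + IH2 + ch (2*m) (m+r'+1) * hsucc


def LHSq (m n : ℕ) : ℚ := ∑ j ∈ range (m+1), ∑ i ∈ range (j+1), ch (2*n) (n+i) * ch (2*m) (m+j)
def Lc (m d : ℕ) : ℚ := ∑ ℓ ∈ range (d+1), hc (m+(d-ℓ)) * hc (m+ℓ)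

/-- quadrupling of partial sums of a binomial row -/
lemma Ssucc (n : ℕ) : ∀ j, ∑ i ∈ range (j+1), ch (2*(n+1)) ((n+1)+i)
    = 4*(∑ i ∈ range (j+1), ch (2*n) (n+i)) + ch (2*n) (n+1) - hc n
      + ch (2*n) (n+j+1) - ch (2*n) (n+j) := by
  intro j
  induction j with
  | zero =>
      simp only [Nat.zero_add, sum_range_one, Nat.add_zero]
      rw [show ch (2*(n+1)) (n+1) = hc (n+1) from rfl, hc_succ n]
      rw [show ch (2*n) (n+0+1) = ch (2*n) (n+1) from by norm_num]
      unfold hc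
      ring
  | succ j IH =>
      rw [sum_range_succ (fun i => ch (2*(n+1)) ((n+1)+i)) (j+1),
          sum_range_succ (fun i => ch (2*n) (n+i)) (j+1), IH]
      have p : ch (2*(n+1)) ((n+1)+(j+1)) = ch (2*n) (n+j) + 2*ch (2*n) (n+j+1) + ch (2*n) (n+j+2) := by
        rw [show 2*(n+1) = 2*n+2 from by ring, show (n+1)+(j+1) = (n+j)+2 from by ring]
        exact pascal2 (2*n) (n+j)
      rw [p, show n+(j+1)+1 = n+j+2 from by ring, show n+(j+1) = n+j+1 from by ring]
      ring

/-- symmetrization of a triangular double sum -/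
lemma sym (f : ℕ → ℚ) (p : ℕ) : 2 * ∑ j ∈ range p, ∑ i ∈ range (j+1), f i * f j
    = (∑ j ∈ range p, f j) * (∑ j ∈ range p, f j) + ∑ j ∈ range p, f j * f j := by
  induction p with
  | zero => simp
  | succ p IH =>
      rw [sum_range_succ (fun j => ∑ i ∈ range (j+1), f i * f j) p,
          sum_range_succ f p, sum_range_succ (fun j => f j * f j) p]
      have inner : ∑ i ∈ range (p+1), f i * f p = (∑ j ∈ range p, f j) * f p + f p * f p := by
        rw [← sum_mul, sum_range_succ f p]
        ring
      rw [inner]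
      linear_combination IH

/-- main auxiliary: the theorem in canonical form -/
lemma mainAux (m : ℕ) : ∀ d, LHSq m (m+d)
    = 4^(2*m+d)/8 + hc (2*m+d)/4 + hc (m+d) * hc m / 2 + 4^m * hc (m+d)/4 - Lc m d / 8 := by
  intro d
  induction d with
  | zero =>
      have e2 : 2 * LHSq m (m+0) = (∑ j ∈ range (m+1), ch (2*m) (m+j)) * (∑ j ∈ range (m+1), ch (2*m) (m+j))
          + ∑ j ∈ range (m+1), ch (2*m) (m+j) * ch (2*m) (m+j) := by
        unfold LHSq
        rw [show m+0 = m from rfl]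
        exact sym (fun i => ch (2*m) (m+i)) (m+1)
      have hQ : 2 * ∑ j ∈ range (m+1), ch (2*m) (m+j) * ch (2*m) (m+j) = hc (2*m+0) + hc m * hc m := by
        have := sumAB (le_refl m)
        rw [show m+m = 2*m+0 from by ring] at this
        exact this
      have hB := sumB m
      have hLc : Lc m 0 = hc m * hc m := by
        unfold Lc
        rw [sum_range_one]
        rw [show m+(0-0) = m from by omega]
      rw [show m+0 = m from rfl] at e2 ⊢
      rw [hLc]
      have h4 : (4:ℚ)^(2*m+0) = 4^m * 4^m := by
        rw [show 2*m+0 = m+m from by ring, pow_add]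
      rw [h4]
      linear_combination e2/2 + hQ/4 + ((2*(∑ j ∈ range (m+1), ch (2*m) (m+j)) + 4^m + hc m)/8) * hB
  | succ d IH =>
      have hLHS : LHSq m ((m+d)+1)
          = 4*LHSq m (m+d)
            + (ch (2*(m+d)) ((m+d)+1) - hc (m+d)) * (∑ j ∈ range (m+1), ch (2*m) (m+j))
            + Etl 1 m (m+d) - Etl 0 m (m+d) := by
        have c1 : LHSq m ((m+d)+1)
            = ∑ j ∈ range (m+1), (4*(∑ i ∈ range (j+1), ch (2*(m+d)) ((m+d)+i) * ch (2*m) (m+j))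
              + (ch (2*(m+d)) ((m+d)+1) - hc (m+d)) * ch (2*m) (m+j)
              + ch (2*(m+d)) ((m+d)+1+j) * ch (2*m) (m+j)
              - ch (2*(m+d)) ((m+d)+0+j) * ch (2*m) (m+j)) := by
          unfold LHSq
          apply sum_congr rfl
          intro j _
          rw [← sum_mul, Ssucc (m+d) j, ← sum_mul]
          rw [show (m+d)+1+j = (m+d)+j+1 from by ring, show (m+d)+0+j = (m+d)+j from by ring]
          ring
        rw [c1, sum_sub_distrib, sum_add_distrib, sum_add_distrib, ← mul_sum, ← mul_sum]
        unfold LHSq Etl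
        ring
      have hEtl0 : 2 * Etl 0 m (m+d) = hc (2*m+d) + hc (m+d) * hc m := by
        have e : Etl 0 m (m+d) = ∑ k ∈ range (m+1), ch (2*(m+d)) ((m+d)+k) * ch (2*m) (m+k) := by
          unfold Etl
          apply sum_congr rfl
          intro k _
          rw [show (m+d)+0+k = (m+d)+k from by ring]
        rw [e]
        have := sumAB (Nat.le_add_right m d)
        rw [show (m+d)+m = 2*m+d from by ring] at this
        exact this
      have hV : ch (2*(2*m+d)) ((2*m+d)+1) = Etl 1 m (m+d) + Eo 1 m (m+d) := by
        rw [show 2*(2*m+d) = 2*(m+d)+2*m from by ring, show (2*m+d)+1 = (m+d)+m+1 from by ring]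
        unfold Etl Eo
        exact vand1 m (m+d)
      have hKey := key m d 1
      set Γ : ℚ := ∑ ℓ ∈ range (d+1), hc (m+ℓ) * ch (2*(m+(d-ℓ))) ((m+(d-ℓ))+1) with hΓdef
      have hΔ : ∑ t ∈ range d, Vv 1 (m+t) (m+(d-1-t))
          = Lc m d - Γ - hc m * hc (m+d) + hc m * ch (2*(m+d)) ((m+d)+1) := by
        set g : ℕ → ℚ := fun ℓ => hc (m+ℓ) * hc (m+(d-ℓ)) - hc (m+ℓ) * ch (2*(m+(d-ℓ))) ((m+(d-ℓ))+1) with hg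
        have point : ∀ t ∈ range d, Vv 1 (m+t) (m+(d-1-t)) = g (t+1) := by
          intro t ht
          have htd : t < d := mem_range.mp ht
          rw [hg]; simp only
          unfold Vv
          rw [show m+t+1 = (m+t)+1 from rfl]
          rw [show (2:ℚ) * ch (2*(m+t)+1) ((m+t)+1) = hc ((m+t)+1) from two_ch (m+t)]
          rw [show m+(d-(t+1)) = m+(d-1-t) from by omega]
          rw [show (m+(d-1-t))+1 = m+(d-1-t)+1 from rfl]
          ring
        rw [sum_congr rfl point]
        have peel : ∑ t ∈ range d, g (t+1) = ∑ ℓ ∈ range (d+1), g ℓ - g 0 := by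
          rw [sum_range_succ' g d]; ring
        rw [peel]
        have split : ∑ ℓ ∈ range (d+1), g ℓ = Lc m d - Γ := by
          rw [hg]
          rw [sum_sub_distrib]
          unfold Lc
          congr 1
          apply sum_congr rfl
          intro ℓ _
          ring
        rw [split, hg]
        simp only
        rw [show m+0 = m from rfl, show d-0 = d from rfl]
        ring
      have hΓrel : Lc m (d+1) = hc ((m+d)+1) * hc m + 2*Lc m d + 2*Γ := by
        unfold Lc
        rw [sum_range_succ (fun ℓ => hc (m+((d+1)-ℓ)) * hc (m+ℓ)) (d+1)]
        have point : ∀ ℓ ∈ range (d+1), hc (m+((d+1)-ℓ)) * hc (m+ℓ)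
            = 2*(hc (m+(d-ℓ)) * hc (m+ℓ)) + 2*(hc (m+ℓ) * ch (2*(m+(d-ℓ))) ((m+(d-ℓ))+1)) := by
          intro ℓ hℓ
          have hld : ℓ < d+1 := mem_range.mp hℓ
          rw [show m+((d+1)-ℓ) = (m+(d-ℓ))+1 from by omega, hc_succ (m+(d-ℓ))]
          ring
        rw [sum_congr rfl point, sum_add_distrib, ← mul_sum, ← mul_sum]
        rw [show m+((d+1)-(d+1)) = m from by omega, show m+(d+1) = (m+d)+1 from rfl]
        ring
      have hcs1 : hc ((m+d)+1) = 2*hc (m+d) + 2*ch (2*(m+d)) ((m+d)+1) := hc_succ (m+d)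
      have hcs2 : hc ((2*m+d)+1) = 2*hc (2*m+d) + 2*ch (2*(2*m+d)) ((2*m+d)+1) := hc_succ (2*m+d)
      have hB := sumB m
      rw [show m+(d+1) = (m+d)+1 from rfl, show 2*m+(d+1) = (2*m+d)+1 from rfl]
      rw [hLHS, hcs1, hcs2, hΓrel, hcs1]
      linear_combination 4*IH - hEtl0/2 - hV/2 + hKey/4 + hΔ/4
        + ((ch (2*(m+d)) ((m+d)+1) - hc (m+d))/2) * hB

end KS10

/-- Lemma 2.1 (Lemma 10) of Krattenthaler–Schneider, case `m ≤ n`. -/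
theorem binomial_double_sum_lemma10 (m n : ℕ) (h : m ≤ n) :
    ∑ j ∈ Finset.range (m + 1), ∑ i ∈ Finset.range (j + 1),
      ((2 * n).choose (n + i) : ℚ) * ((2 * m).choose (m + j) : ℚ)
    = (4 : ℚ) ^ (n + m) / 8
      + (1 / 4 : ℚ) * ((2 * n + 2 * m).choose (n + m) : ℚ)
      + (1 / 2 : ℚ) * ((2 * n).choose n : ℚ) * ((2 * m).choose m : ℚ)
      + (4 : ℚ) ^ m / 4 * ((2 * n).choose n : ℚ)
      - (1 / 8 : ℚ) * ∑ ℓ ∈ Finset.range (n - m + 1),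
          ((2 * n - 2 * ℓ).choose (n - ℓ) : ℚ) * ((2 * m + 2 * ℓ).choose (m + ℓ) : ℚ) := by
  obtain ⟨d, rfl⟩ : ∃ d, n = m + d := ⟨n - m, by omega⟩
  have hL : (∑ j ∈ Finset.range (m + 1), ∑ i ∈ Finset.range (j + 1),
      ((2 * (m+d)).choose ((m+d) + i) : ℚ) * ((2 * m).choose (m + j) : ℚ))
      = KS10.LHSq m (m+d) := rfl
  have hLsum : (∑ ℓ ∈ Finset.range (m + d - m + 1),
      ((2 * (m+d) - 2 * ℓ).choose ((m+d) - ℓ) : ℚ) * ((2 * m + 2 * ℓ).choose (m + ℓ) : ℚ))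
      = KS10.Lc m d := by
    rw [show m + d - m = d from by omega]
    unfold KS10.Lc
    apply Finset.sum_congr rfl
    intro ℓ hℓ
    have hld : ℓ < d + 1 := Finset.mem_range.mp hℓ
    rw [show 2*(m+d) - 2*ℓ = 2*(m+(d-ℓ)) from by omega,
        show (m+d) - ℓ = m+(d-ℓ) from by omega,
        show 2*m+2*ℓ = 2*(m+ℓ) from by ring]
    rfl
  rw [hL, hLsum]
  rw [show m + d + m = 2*m+d from by ring]
  rw [show 2*(m+d)+2*m = 2*(2*m+d) from by ring]
  rw [show ((2*(2*m+d)).choose (2*m+d) : ℚ) = KS10.hc (2*m+d) from rfl]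
  rw [show ((2*(m+d)).choose (m+d) : ℚ) = KS10.hc (m+d) from rfl]
  rw [show ((2*m).choose m : ℚ) = KS10.hc m from rfl]
  linear_combination KS10.mainAux m d
end

section
/- Let m and n be non-negative integers with m ≤ n. Then, as an identity of rational numbers, ∑_{j=0}^{m} ∑_{i=0}^{j} i · C(2n, n+i) · C(2m, m+j) = −(n/4)·C(2n+2m, n+m) + n·(4^m/4)·C(2n,n) + (n/8)·∑_{ℓ=0}^{n−m} C(2n−2ℓ, n−ℓ)·C(2m+2ℓ, m+ℓ) − (n/2)·∑_{ℓ=0}^{n−m−1} C(2n−2ℓ−2, n−ℓ−1)·C(2m+2ℓ, m+ℓ), where the last sum is empty when m = n. -/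
open Finset

private def cc (k : ℕ) : ℚ := (Nat.centralBinom k : ℚ)
private def ct (k : ℕ) : ℚ := (catalan k : ℚ)
private def TT (m n : ℕ) : ℚ :=
  ∑ j ∈ range (m + 1), ((2 * n + 1).choose (n + 1 + j) : ℚ) * ((2 * m).choose (m + j) : ℚ)
private def QQ (m n : ℕ) : ℚ :=
  ∑ ℓ ∈ range (n + 1 - m), ct (n - ℓ) * cc (m + ℓ)

private lemma cc_eq (k : ℕ) : cc k = ((2 * k).choose k : ℚ) := by
  rw [cc, Nat.centralBinom_eq_two_mul_choose]

private lemma hne (k : ℕ) : ((k : ℚ) + 1) ≠ 0 := by positivity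

private lemma f2 (k : ℕ) : cc k = ((k : ℚ) + 1) * ct k := by
  have h := succ_mul_catalan_eq_centralBinom k
  rw [cc, ct, ← h]; push_cast; ring

private lemma f1 (k : ℕ) : cc (k + 1) = 4 * cc k - 2 * ct k := by
  have h : ((k : ℚ) + 1) * cc (k + 1) = 2 * (2 * k + 1) * cc k := by
    rw [cc, cc]; exact_mod_cast congrArg (fun x : ℕ => (x : ℚ)) (Nat.succ_mul_centralBinom_succ k)
  apply mul_left_cancel₀ (hne k)
  rw [h]; linear_combination (-2 : ℚ) * f2 k

private lemma f4 (m : ℕ) : ((2 * m).choose (m + 1) : ℚ) = cc m - ct m := by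
  have hn : (2 * m).choose (m + 1) * (m + 1) = (2 * m).choose m * m := by
    rw [Nat.choose_succ_right_eq]; congr 1; omega
  have h' : ((2 * m).choose (m + 1) : ℚ) * ((m : ℚ) + 1) = cc m * m := by
    rw [cc_eq]; exact_mod_cast congrArg (fun x : ℕ => (x : ℚ)) hn
  apply mul_left_cancel₀ (hne m)
  linear_combination h' - f2 m

private lemma pasQ (N k : ℕ) : ((N + 1).choose (k + 1) : ℚ) = (N.choose k : ℚ) + (N.choose (k + 1) : ℚ) := by
  exact_mod_cast Nat.choose_succ_succ N k

private lemma f3 (n : ℕ) : ((2 * n + 1).choose (n + 1) : ℚ) = cc (n + 1) / 2 := by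
  have h1 : (2 * (n + 1)).choose (n + 1) = (2 * n + 1).choose n + (2 * n + 1).choose (n + 1) := by
    rw [show 2 * (n + 1) = (2 * n + 1) + 1 by ring]; exact Nat.choose_succ_succ _ _
  have h2 := Nat.choose_symm_half n
  rw [cc_eq, h1, h2]; push_cast; ring

private lemma central2 (n : ℕ) : ((2 * n + 2).choose (n + 1) : ℚ) = 2 * ((2 * n + 1).choose (n + 1) : ℚ) := by
  rw [f3, cc_eq]
  rw [show 2 * (n + 1) = 2 * n + 2 by ring]
  ring
-- inner telescoping sum
private lemma innerSumKS (k : ℕ) : ∀ j : ℕ,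
    ∑ i ∈ range (j + 1), (i : ℚ) * ((2 * (k + 1)).choose ((k + 1) + i) : ℚ)
    = ((k : ℚ) + 1) * (((2 * k + 1).choose (k + 1) : ℚ) - ((2 * k + 1).choose (k + 1 + j) : ℚ)) := by
  intro j
  induction j with
  | zero => simp
  | succ j ih =>
    rw [Finset.sum_range_succ, ih]
    have hA := Nat.add_one_mul_choose_eq (2 * k + 1) (k + 1 + j)
    have hA' : ((2 : ℚ) * k + 2) * ((2 * k + 1).choose (k + 1 + j) : ℚ)
        = ((2 * k + 2).choose (k + 2 + j) : ℚ) * ((k : ℚ) + 2 + j) := by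
      rw [show 2 * k + 1 + 1 = 2 * k + 2 by ring, show k + 1 + j + 1 = k + 2 + j by ring] at hA
      exact_mod_cast congrArg (fun x : ℕ => (x : ℚ)) hA
    have hP : ((2 * k + 2).choose (k + 2 + j) : ℚ)
        = ((2 * k + 1).choose (k + 1 + j) : ℚ) + ((2 * k + 1).choose (k + 2 + j) : ℚ) := by
      have := pasQ (2 * k + 1) (k + 1 + j)
      rw [show 2 * k + 1 + 1 = 2 * k + 2 by ring, show k + 1 + j + 1 = k + 2 + j by ring] at this
      exact this
    rw [show 2 * (k + 1) = 2 * k + 2 by ring, show k + 1 + (j + 1) = k + 2 + j by ring]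
    push_cast
    linear_combination (-1 : ℚ) * hA' - ((k : ℚ) + 1) * hP

-- row sum of binomial coefficients
private lemma rowsum (m : ℕ) :
    2 * (∑ j ∈ range (m + 1), ((2 * m).choose (m + j) : ℚ)) = 4 ^ m + cc m := by
  have H := Nat.sum_range_choose (2 * m)
  have h3 : ∑ j ∈ range m, (2 * m).choose j = ∑ j ∈ range m, (2 * m).choose (m + 1 + j) := by
    rw [← Finset.sum_range_reflect (fun i => (2 * m).choose (m + 1 + i)) m]
    apply Finset.sum_congr rfl
    intro j hj
    simp only [Finset.mem_range] at hj
    rw [show m + 1 + (m - 1 - j) = 2 * m - j by omega, Nat.choose_symm (by omega)]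
  have h4 : ∑ j ∈ range (m + 1), (2 * m).choose (m + j)
      = ∑ j ∈ range m, (2 * m).choose (m + 1 + j) + (2 * m).choose m := by
    rw [Finset.sum_range_succ']
    congr 1
    apply Finset.sum_congr rfl
    intro j _
    congr 1
    omega
  have h1 : ∑ i ∈ range (2 * m + 1), (2 * m).choose i
      = ∑ i ∈ range m, (2 * m).choose i + ∑ j ∈ range (m + 1), (2 * m).choose (m + j) := by
    have hsplit := Finset.sum_Ico_consecutive (f := fun i => (2 * m).choose i)
      (Nat.zero_le m) (show m ≤ 2 * m + 1 by omega)
    have hIb : ∑ i ∈ Finset.Ico m (2 * m + 1), (2 * m).choose i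
        = ∑ j ∈ range (m + 1), (2 * m).choose (m + j) := by
      rw [Finset.sum_Ico_eq_sum_range]
      apply Finset.sum_congr _ (fun i _ => rfl)
      congr 1
      omega
    rw [Finset.range_eq_Ico, ← hsplit, hIb, ← Finset.range_eq_Ico]
  have hNat : ∑ i ∈ range m, (2 * m).choose i
      + ∑ j ∈ range (m + 1), (2 * m).choose (m + j) = 2 ^ (2 * m) := by
    rw [← h1, H]
  have hq3 := congrArg (fun x : ℕ => (x : ℚ)) h3
  have hq4 := congrArg (fun x : ℕ => (x : ℚ)) h4
  have hqN := congrArg (fun x : ℕ => (x : ℚ)) hNat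
  push_cast at hq3 hq4 hqN
  rw [cc_eq]
  rw [show (4 : ℚ) ^ m = 2 ^ (2 * m) by rw [pow_mul]; norm_num]
  linarith [hq3, hq4, hqN]

-- Catalan–central binomial convolution
private lemma conv_refl (N : ℕ) :
    ∑ k ∈ range (N + 1), ct k * cc (N - k) = ∑ k ∈ range (N + 1), ct (N - k) * cc k := by
  rw [← Finset.sum_range_reflect (fun k => ct (N - k) * cc k) (N + 1)]
  apply Finset.sum_congr rfl
  intro j hj
  simp only [Finset.mem_range] at hj
  rw [show N + 1 - 1 - j = N - j by omega, Nat.sub_sub_self (by omega)]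

private lemma ctc_conv (N : ℕ) :
    ∑ k ∈ range (N + 1), ct k * cc (N - k) = cc (N + 1) / 2 := by
  have hcat : ct (N + 1) = ∑ k ∈ range (N + 1), ct k * ct (N - k) := by
    rw [ct, catalan_succ N]
    rw [← Fin.sum_univ_eq_sum_range (fun i => ct i * ct (N - i)) (N + 1)]
    push_cast [ct]
    rfl
  have key : ∑ k ∈ range (N + 1), (ct k * cc (N - k) + ct (N - k) * cc k)
      = ((N : ℚ) + 2) * ∑ k ∈ range (N + 1), ct k * ct (N - k) := by
    rw [Finset.mul_sum]
    apply Finset.sum_congr rfl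
    intro j hj
    simp only [Finset.mem_range] at hj
    rw [f2 (N - j), f2 j]
    have hc : ((N - j : ℕ) : ℚ) = (N : ℚ) - j := by
      rw [Nat.cast_sub (by omega)]
    rw [hc]; ring
  have h2 : ∑ k ∈ range (N + 1), ct k * cc (N - k) + ∑ k ∈ range (N + 1), ct (N - k) * cc k
      = ((N : ℚ) + 2) * ct (N + 1) := by
    rw [← Finset.sum_add_distrib, key, hcat]
  have hf := f2 (N + 1)
  push_cast at hf
  rw [← conv_refl] at h2
  linarith [h2, hf]

private lemma ctc_conv' (N : ℕ) :
    ∑ ℓ ∈ range (N + 1), ct (N - ℓ) * cc ℓ = cc (N + 1) / 2 := by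
  rw [← conv_refl, ctc_conv]
-- generic double-Pascal summation lemma
private lemma genSum (D A a b : ℕ → ℚ) (hD : ∀ j, D j = A j + A (j + 1))
    (hA : ∀ j, A (j + 1) = a j + a (j + 1)) :
    ∀ M : ℕ, ∑ j ∈ range (M + 1), D j * b j
      = A 0 * b 0 + (∑ t ∈ range M, (a t + a (t + 1)) * b (t + 1))
        + ∑ j ∈ range (M + 1), (a j + a (j + 1)) * b j := by
  intro M
  induction M with
  | zero =>
    rw [Finset.sum_range_one, Finset.sum_range_one, Finset.sum_range_zero, hD 0, hA 0]
    ring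
  | succ M ih =>
    rw [Finset.sum_range_succ (fun j => D j * b j) (M + 1), ih,
      Finset.sum_range_succ (fun t => (a t + a (t + 1)) * b (t + 1)) M,
      Finset.sum_range_succ (fun j => (a j + a (j + 1)) * b j) (M + 1),
      hD (M + 1), hA (M + 1), hA M]
    ring

private def aa (n j : ℕ) : ℚ := ((2 * n + 1).choose (n + 1 + j) : ℚ)
private def bb (m j : ℕ) : ℚ := ((2 * m).choose (m + j) : ℚ)

private lemma bb_vanish (m t : ℕ) (ht : m + 1 ≤ t) : bb m t = 0 := by
  rw [bb, Nat.choose_eq_zero_of_lt (by omega)]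
  norm_num

private lemma step_T (m n : ℕ) :
    TT m (n + 1) = TT (m + 1) n
      + ((2 * n + 1).choose (n + 1) : ℚ) * (((2 * m).choose m : ℚ) - ((2 * m).choose (m + 1) : ℚ)) := by
  have h1 : ∀ j : ℕ, ((2 * (n + 1) + 1).choose ((n + 1) + 1 + j) : ℚ)
      = ((2 * n + 2).choose (n + 1 + j) : ℚ) + ((2 * n + 2).choose (n + 1 + (j + 1)) : ℚ) := by
    intro j
    have h := pasQ (2 * n + 2) (n + 1 + j)
    rw [show 2 * n + 2 + 1 = 2 * (n + 1) + 1 by ring] at h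
    rw [show n + 1 + (j + 1) = n + 1 + j + 1 by ring]
    rw [show (n + 1) + 1 + j = n + 1 + j + 1 by ring]
    exact h
  have h2 : ∀ j : ℕ, ((2 * n + 2).choose (n + 1 + (j + 1)) : ℚ) = aa n j + aa n (j + 1) := by
    intro j
    have h := pasQ (2 * n + 1) (n + 1 + j)
    rw [show 2 * n + 1 + 1 = 2 * n + 2 by ring] at h
    rw [show n + 1 + (j + 1) = n + 1 + j + 1 by ring, aa, aa,
      show n + 1 + (j + 1) = n + 1 + j + 1 by ring]
    exact h
  have claim1 : TT m (n + 1)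
      = 2 * aa n 0 * bb m 0 + (∑ t ∈ range m, (aa n t + aa n (t + 1)) * bb m (t + 1))
        + ∑ j ∈ range (m + 1), (aa n j + aa n (j + 1)) * bb m j := by
    have hg := genSum (fun j => ((2 * (n + 1) + 1).choose ((n + 1) + 1 + j) : ℚ))
      (fun j => ((2 * n + 2).choose (n + 1 + j) : ℚ)) (aa n) (bb m) h1 h2 m
    have h0 : ((2 * n + 2).choose (n + 1 + 0) : ℚ) = 2 * aa n 0 := central2 n
    calc TT m (n + 1) = ((2 * n + 2).choose (n + 1 + 0) : ℚ) * bb m 0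
        + (∑ t ∈ range m, (aa n t + aa n (t + 1)) * bb m (t + 1))
        + ∑ j ∈ range (m + 1), (aa n j + aa n (j + 1)) * bb m j := hg
      _ = _ := by rw [h0]
  have h1' : ∀ j : ℕ, ((2 * (m + 1)).choose ((m + 1) + j) : ℚ)
      = ((2 * m + 1).choose (m + j) : ℚ) + ((2 * m + 1).choose (m + (j + 1)) : ℚ) := by
    intro j
    have h := pasQ (2 * m + 1) (m + j)
    rw [show 2 * m + 1 + 1 = 2 * (m + 1) by ring, show m + j + 1 = (m + 1) + j by ring] at h
    rw [show m + (j + 1) = m + j + 1 by ring]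
    rw [show (m + 1) + j = m + j + 1 by ring] at h ⊢
    exact h
  have h2' : ∀ j : ℕ, ((2 * m + 1).choose (m + (j + 1)) : ℚ) = bb m j + bb m (j + 1) := by
    intro j
    have h := pasQ (2 * m) (m + j)
    rw [show 2 * m + 1 = 2 * m + 1 by ring] at h
    rw [show m + (j + 1) = m + j + 1 by ring, bb, bb,
      show m + (j + 1) = m + j + 1 by ring]
    exact h
  have claim2 : TT (m + 1) n
      = (bb m 0 + bb m 1) * aa n 0 + (∑ t ∈ range (m + 1), (bb m t + bb m (t + 1)) * aa n (t + 1))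
        + ∑ j ∈ range (m + 2), (bb m j + bb m (j + 1)) * aa n j := by
    have hg := genSum (fun j => ((2 * (m + 1)).choose ((m + 1) + j) : ℚ))
      (fun j => ((2 * m + 1).choose (m + j) : ℚ)) (bb m) (aa n) h1' h2' (m + 1)
    have h0 : ((2 * m + 1).choose (m + 0) : ℚ) = bb m 0 + bb m 1 := by
      have h := h2' 0
      norm_num at h ⊢
      rw [← Nat.choose_symm_half m]
      exact h
    have hc : TT (m + 1) n
        = ∑ j ∈ range (m + 1 + 1), ((2 * (m + 1)).choose ((m + 1) + j) : ℚ) * aa n j := by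
      rw [TT]
      apply Finset.sum_congr rfl
      intro j _
      rw [aa]
      ring
    rw [hc, hg, h0]
  -- padding
  have eX1 : (∑ t ∈ range m, (aa n t + aa n (t + 1)) * bb m (t + 1))
      = ∑ t ∈ range (m + 2), (aa n t + aa n (t + 1)) * bb m (t + 1) := by
    rw [Finset.sum_range_succ, Finset.sum_range_succ,
      bb_vanish m (m + 1) le_rfl, bb_vanish m (m + 1 + 1) (by omega)]
    ring
  have eX2 : (∑ j ∈ range (m + 1), (aa n j + aa n (j + 1)) * bb m j)
      = ∑ j ∈ range (m + 2), (aa n j + aa n (j + 1)) * bb m j := by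
    rw [Finset.sum_range_succ (fun j => (aa n j + aa n (j + 1)) * bb m j) (m + 1),
      bb_vanish m (m + 1) le_rfl]
    ring
  have eY1 : (∑ t ∈ range (m + 1), (bb m t + bb m (t + 1)) * aa n (t + 1))
      = ∑ t ∈ range (m + 2), (bb m t + bb m (t + 1)) * aa n (t + 1) := by
    rw [Finset.sum_range_succ (fun t => (bb m t + bb m (t + 1)) * aa n (t + 1)) (m + 1),
      bb_vanish m (m + 1) le_rfl, bb_vanish m (m + 1 + 1) (by omega)]
    ring
  have key : (∑ t ∈ range (m + 2), (aa n t + aa n (t + 1)) * bb m (t + 1))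
      + (∑ j ∈ range (m + 2), (aa n j + aa n (j + 1)) * bb m j)
      = (∑ t ∈ range (m + 2), (bb m t + bb m (t + 1)) * aa n (t + 1))
      + (∑ j ∈ range (m + 2), (bb m j + bb m (j + 1)) * aa n j) := by
    rw [← Finset.sum_add_distrib, ← Finset.sum_add_distrib]
    apply Finset.sum_congr rfl
    intro j _
    ring
  have ea0 : ((2 * n + 1).choose (n + 1) : ℚ) = aa n 0 := rfl
  have eb0 : ((2 * m).choose m : ℚ) = bb m 0 := rfl
  have eb1 : ((2 * m).choose (m + 1) : ℚ) = bb m 1 := rfl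
  rw [claim1, claim2, eX1, eX2, eY1, ea0, eb0, eb1]
  linarith [key]
private lemma step_Q (m n : ℕ) (hmn : m ≤ n) :
    QQ m (n + 1) = ct (n + 1) * cc m + ct m * cc (n + 1) + QQ (m + 1) n := by
  rw [QQ, show n + 1 + 1 - m = (n + 1 - m) + 1 by omega, Finset.sum_range_succ']
  have hsum : ∑ i ∈ range (n + 1 - m), ct (n + 1 - (i + 1)) * cc (m + (i + 1))
      = ∑ i ∈ range (n - m), ct (n - i) * cc (m + 1 + i) + ct m * cc (n + 1) := by
    rw [show n + 1 - m = (n - m) + 1 by omega, Finset.sum_range_succ]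
    congr 1
    · apply Finset.sum_congr rfl
      intro i hi
      simp only [Finset.mem_range] at hi
      rw [show n + 1 - (i + 1) = n - i by omega, show m + (i + 1) = m + 1 + i by omega]
    · rw [show n + 1 - (n - m + 1) = m by omega, show m + (n - m + 1) = n + 1 by omega]
  rw [hsum, QQ, show n + 1 - (m + 1) = n - m by omega]
  simp only [Nat.sub_zero, Nat.add_zero]
  ring

private lemma mainKS : ∀ m n : ℕ, m ≤ n + 1 →
    TT m n = 1/8 * cc m * cc (n + 1) + 1/4 * cc (m + n + 1) + 1/4 * QQ m n := by
  intro m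
  induction m with
  | zero =>
    intro n _
    have hT : TT 0 n = ((2 * n + 1).choose (n + 1) : ℚ) := by
      rw [TT]; simp
    have hQ : QQ 0 n = cc (n + 1) / 2 := by
      rw [QQ]
      have h := ctc_conv' n
      simp only [Nat.sub_zero, Nat.zero_add]
      exact h
    have hc0 : cc 0 = 1 := by rw [cc_eq]; norm_num
    rw [hT, hQ, f3 n, hc0, show 0 + n + 1 = n + 1 by omega]
    ring
  | succ m ih =>
    intro n hmn
    have hmn' : m ≤ n := by omega
    have hstep := step_T m n
    have hIH := ih (n + 1) (by omega)
    have hQs := step_Q m n hmn'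
    have hb0 : ((2 * m).choose m : ℚ) = cc m := (cc_eq m).symm
    rw [hb0, f4 m, f3 n] at hstep
    have hcc : cc (m + (n + 1) + 1) = cc (m + 1 + n + 1) := by
      rw [show m + (n + 1) + 1 = m + 1 + n + 1 by ring]
    have hf1n := f1 (n + 1)
    have hf1m := f1 m
    linear_combination hIH - hstep + (1/4 : ℚ) * hQs + (1/8 * cc m) * hf1n
      - (1/8 * cc (n + 1)) * hf1m + (1/4 : ℚ) * hcc
/-- Lemma 2.2 (Lemma 20) of Krattenthaler–Schneider, case `m ≤ n`. -/
theorem binomial_double_sum_lemma20 (m n : ℕ) (h : m ≤ n) :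
    ∑ j ∈ Finset.range (m + 1), ∑ i ∈ Finset.range (j + 1),
      (i : ℚ) * ((2 * n).choose (n + i) : ℚ) * ((2 * m).choose (m + j) : ℚ)
    = -((n : ℚ) / 4) * ((2 * n + 2 * m).choose (n + m) : ℚ)
      + (n : ℚ) * ((4 : ℚ) ^ m / 4) * ((2 * n).choose n : ℚ)
      + ((n : ℚ) / 8) * ∑ ℓ ∈ Finset.range (n - m + 1),
          ((2 * n - 2 * ℓ).choose (n - ℓ) : ℚ) * ((2 * m + 2 * ℓ).choose (m + ℓ) : ℚ)
      - ((n : ℚ) / 2) * ∑ ℓ ∈ Finset.range (n - m),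
          ((2 * n - 2 * ℓ - 2).choose (n - ℓ - 1) : ℚ) * ((2 * m + 2 * ℓ).choose (m + ℓ) : ℚ) := by
  cases n with
  | zero =>
    have hm : m = 0 := by omega
    subst hm
    norm_num
  | succ k =>
    have hm : m ≤ k + 1 := h
    -- LHS
    have hL : ∑ j ∈ range (m + 1), ∑ i ∈ range (j + 1),
          (i : ℚ) * ((2 * (k + 1)).choose ((k + 1) + i) : ℚ) * ((2 * m).choose (m + j) : ℚ)
        = ((k : ℚ) + 1) * (cc (k + 1) / 2) * (∑ j ∈ range (m + 1), ((2 * m).choose (m + j) : ℚ))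
          - ((k : ℚ) + 1) * TT m k := by
      have h1 : ∀ j ∈ range (m + 1), ∑ i ∈ range (j + 1),
            (i : ℚ) * ((2 * (k + 1)).choose ((k + 1) + i) : ℚ) * ((2 * m).choose (m + j) : ℚ)
          = ((k : ℚ) + 1) * (cc (k + 1) / 2) * ((2 * m).choose (m + j) : ℚ)
            - ((k : ℚ) + 1) * (((2 * k + 1).choose (k + 1 + j) : ℚ) * ((2 * m).choose (m + j) : ℚ)) := by
        intro j _
        rw [← Finset.sum_mul, innerSumKS k j, f3 k]
        ring
      rw [Finset.sum_congr rfl h1, Finset.sum_sub_distrib, ← Finset.mul_sum, ← Finset.mul_sum, ← TT]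
    have hSb := rowsum m
    have hM := mainKS m k hm
    -- RHS conversions
    have hA : (∑ ℓ ∈ range ((k + 1) - m + 1),
          ((2 * (k + 1) - 2 * ℓ).choose ((k + 1) - ℓ) : ℚ) * ((2 * m + 2 * ℓ).choose (m + ℓ) : ℚ))
        = (4 * (∑ ℓ ∈ range (k + 1 - m), cc (k - ℓ) * cc (m + ℓ)) - 2 * QQ m k)
          + cc m * cc (k + 1) := by
      have e1 : ∀ ℓ ∈ range ((k + 1) - m + 1),
          ((2 * (k + 1) - 2 * ℓ).choose ((k + 1) - ℓ) : ℚ) * ((2 * m + 2 * ℓ).choose (m + ℓ) : ℚ)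
          = cc (k + 1 - ℓ) * cc (m + ℓ) := by
        intro ℓ hℓ
        simp only [Finset.mem_range] at hℓ
        rw [cc_eq, cc_eq, show 2 * (k + 1 - ℓ) = 2 * (k + 1) - 2 * ℓ by omega,
          show 2 * (m + ℓ) = 2 * m + 2 * ℓ by ring]
      rw [Finset.sum_congr rfl e1, Finset.sum_range_succ,
        show k + 1 - (k + 1 - m) = m by omega, show m + (k + 1 - m) = k + 1 by omega]
      congr 1
      rw [QQ, Finset.mul_sum, Finset.mul_sum, ← Finset.sum_sub_distrib]
      apply Finset.sum_congr rfl
      intro ℓ hℓ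
      simp only [Finset.mem_range] at hℓ
      rw [show k + 1 - ℓ = (k - ℓ) + 1 by omega, f1 (k - ℓ)]
      ring
    have hB : ∑ ℓ ∈ range ((k + 1) - m),
          ((2 * (k + 1) - 2 * ℓ - 2).choose ((k + 1) - ℓ - 1) : ℚ) * ((2 * m + 2 * ℓ).choose (m + ℓ) : ℚ)
        = ∑ ℓ ∈ range (k + 1 - m), cc (k - ℓ) * cc (m + ℓ) := by
      apply Finset.sum_congr rfl
      intro ℓ hℓ
      simp only [Finset.mem_range] at hℓ
      rw [cc_eq, cc_eq, show 2 * (k - ℓ) = 2 * (k + 1) - 2 * ℓ - 2 by omega,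
        show (k + 1) - ℓ - 1 = k - ℓ by omega, show 2 * (m + ℓ) = 2 * m + 2 * ℓ by ring]
    have hcB : ((2 * (k + 1) + 2 * m).choose ((k + 1) + m) : ℚ) = cc (m + k + 1) := by
      rw [cc_eq, show 2 * (m + k + 1) = 2 * (k + 1) + 2 * m by ring,
        show m + k + 1 = (k + 1) + m by ring]
    have hcn : ((2 * (k + 1)).choose (k + 1) : ℚ) = cc (k + 1) := (cc_eq (k + 1)).symm
    rw [hL, hA, hB, hcB, hcn]
    push_cast
    linear_combination (-((k : ℚ) + 1)) * hM + (((k : ℚ) + 1) * cc (k + 1) / 4) * hSb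
end

section
/- Let m and n be integers with 2 ≤ m ≤ n. Then, as an identity of rational numbers, ∑_{j=0}^{m} ∑_{i=0}^{j} j · C(2n, n+i) · C(2m, m+j) = (m/4)·C(2n+2m, n+m) + m·C(2n,n)·C(2m−2, m−2) − (m/8)·∑_{ℓ=0}^{n−m} C(2n−2ℓ, n−ℓ)·C(2m+2ℓ, m+ℓ) + (m/2)·∑_{ℓ=0}^{n−m+1} C(2n−2ℓ, n−ℓ)·C(2m+2ℓ−2, m+ℓ−1). -/
open Finset

namespace KS21

/-- `g i u = C(2i, i+u)` as a rational number. -/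
def g (i u : ℕ) : ℚ := ((2 * i).choose (i + u) : ℕ)

/-- Catalan-type difference. -/
def Cq (k : ℕ) : ℚ := g k 0 - g k 1

/-- `h s u = C(2s+1, s+1+u)` as a rational number. -/
def h (s u : ℕ) : ℚ := ((2 * s + 1).choose (s + 1 + u) : ℕ)

lemma g00 : g 0 0 = 1 := by simp [g]

lemma g0succ (u : ℕ) : g 0 (u + 1) = 0 := by simp [g]

lemma g_eq_zero {i u : ℕ} (hu : i < u) : g i u = 0 := by
  rw [g, Nat.choose_eq_zero_of_lt (by omega)]; simp

/-- Pascal rule, cast to `ℚ`, with flexible index matching. -/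
lemma cc {a b a' b' : ℕ} (ha : a' = a + 1) (hb : b' = b + 1) :
    ((a'.choose b' : ℕ) : ℚ) = (a.choose b : ℕ) + (a.choose (b + 1) : ℕ) := by
  subst ha; subst hb; rw [Nat.choose_succ_succ]; push_cast; ring

/-- Symmetry rule, cast to `ℚ`, with flexible index matching. -/
lemma ccs {a b b' : ℕ} (hb : b + b' = a) :
    ((a.choose b : ℕ) : ℚ) = (a.choose b' : ℕ) := by
  have h2 : b ≤ a := by omega
  have := Nat.choose_symm (n := a) (k := b) h2
  rw [show a - b = b' by omega] at this
  rw [this]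

lemma g_succ_succ (i u : ℕ) : g (i + 1) (u + 1) = g i u + 2 * g i (u + 1) + g i (u + 2) := by
  rw [g, g, g, g,
    cc (show 2*(i+1) = (2*i+1)+1 by ring) (show (i+1)+(u+1) = (i+u+1)+1 by ring),
    cc (show 2*i+1 = (2*i)+1 by ring) (show i+u+1 = (i+u)+1 by ring),
    cc (show 2*i+1 = (2*i)+1 by ring) (show (i+u)+1+1 = (i+u+1)+1 by ring),
    show i+(u+1) = i+u+1 by ring, show i+(u+2) = i+u+1+1 by ring]
  ring

lemma g_succ_zero (i : ℕ) : g (i + 1) 0 = 2 * g i 0 + 2 * g i 1 := by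
  rw [g, g, g,
    cc (show 2*(i+1) = (2*i+1)+1 by ring) (show (i+1)+0 = i+1 by ring),
    ccs (show i + (i+1) = 2*i+1 by ring),
    cc (show 2*i+1 = (2*i)+1 by ring) (show i+1 = i+1 from rfl),
    show i+0 = i by ring, show i+1 = i+1 from rfl]
  ring

lemma h_succ_succ (s u : ℕ) : h (s + 1) (u + 1) = h s u + 2 * h s (u + 1) + h s (u + 2) := by
  rw [h, h, h, h,
    cc (show 2*(s+1)+1 = (2*s+2)+1 by ring) (show (s+1)+1+(u+1) = (s+u+2)+1 by ring),
    cc (show 2*s+2 = (2*s+1)+1 by ring) (show s+u+2 = (s+u+1)+1 by ring),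
    cc (show 2*s+2 = (2*s+1)+1 by ring) (show (s+u+2)+1 = (s+u+2)+1 from rfl),
    show s+1+u = s+u+1 by ring, show s+1+(u+1) = (s+u+1)+1 by ring,
    show s+1+(u+2) = (s+u+2)+1 by ring]
  ring

lemma h_succ_zero (s : ℕ) : h (s + 1) 0 = 3 * h s 0 + h s 1 := by
  rw [h, h, h,
    cc (show 2*(s+1)+1 = (2*s+2)+1 by ring) (show (s+1)+1+0 = (s+1)+1 by ring),
    cc (show 2*s+2 = (2*s+1)+1 by ring) (show s+1 = s+1 from rfl),
    ccs (show s + (s+1) = 2*s+1 by ring),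
    cc (show 2*s+2 = (2*s+1)+1 by ring) (show (s+1)+1 = (s+1)+1 from rfl),
    show s+1+0 = s+1 by ring, show s+1+1 = (s+1)+1 from rfl]
  ring

lemma two_h_zero (s : ℕ) : g (s + 1) 0 = 2 * h s 0 := by
  rw [g, h,
    cc (show 2*(s+1) = (2*s+1)+1 by ring) (show (s+1)+0 = s+1 by ring),
    ccs (show s + (s+1) = 2*s+1 by ring),
    show s+1+0 = s+1 by ring]
  ring

lemma Cq_succ (s : ℕ) : Cq (s + 1) = h s 0 - h s 1 := by
  have e1 : h s 0 = g s 0 + g s 1 := by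
    rw [h, g, g, cc (show 2*s+1 = (2*s)+1 by ring) (show s+1+0 = s+1 by ring),
      show s+0 = s by ring, show s+1 = s+1 from rfl]
  have e2 : h s 1 = g s 1 + g s 2 := by
    rw [h, g, g, cc (show 2*s+1 = (2*s)+1 by ring) (show s+1+1 = (s+1)+1 by ring),
      show s+2 = s+1+1 by ring]
  rw [Cq, g_succ_zero, show (1:ℕ) = 0 + 1 from rfl, g_succ_succ, e1, e2,
    show (0:ℕ)+1 = 1 from rfl, show (0:ℕ)+2 = 2 from rfl]
  ring


/-- Key lemma: Catalan convolution against a central-binomial row. -/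
lemma W : ∀ s u : ℕ, ∑ i ∈ range (s + 1), Cq (s - i) * g i u = h s u := by
  intro s
  induction s with
  | zero =>
    intro u
    rw [Finset.sum_range_one]
    match u with
    | 0 => simp [Cq, g00, g0succ, h]
    | u + 1 =>
      rw [h, Nat.choose_eq_zero_of_lt (by omega)]
      simp [Cq, g00, g0succ]
  | succ s ih =>
    intro u
    rw [Finset.sum_range_succ']
    have hre : ∀ i ∈ range (s + 1), Cq (s + 1 - (i + 1)) * g (i + 1) u
        = Cq (s - i) * g (i + 1) u := by
      intro i _; rw [Nat.succ_sub_succ]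
    rw [Finset.sum_congr rfl hre]
    match u with
    | 0 =>
      have : ∀ i ∈ range (s + 1), Cq (s - i) * g (i + 1) 0
          = 2 * (Cq (s - i) * g i 0) + 2 * (Cq (s - i) * g i 1) := by
        intro i _; rw [g_succ_zero]; ring
      rw [Finset.sum_congr rfl this, Finset.sum_add_distrib, ← Finset.mul_sum, ← Finset.mul_sum,
        ih 0, ih 1, Nat.sub_zero, g00, Cq_succ, h_succ_zero]
      ring
    | u + 1 =>
      have : ∀ i ∈ range (s + 1), Cq (s - i) * g (i + 1) (u + 1)
          = Cq (s - i) * g i u + 2 * (Cq (s - i) * g i (u + 1)) + Cq (s - i) * g i (u + 2) := by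
        intro i _; rw [g_succ_succ]; ring
      rw [Finset.sum_congr rfl this, Finset.sum_add_distrib, Finset.sum_add_distrib,
        ← Finset.mul_sum, ih u, ih (u + 1), ih (u + 2), Nat.sub_zero, g0succ, h_succ_succ]
      ring

/-- Central binomial convolution recurrence. -/
lemma conv (s : ℕ) : ∑ k ∈ range (s + 2), g k 0 * g (s + 1 - k) 0
    = 4 * ∑ k ∈ range (s + 1), g k 0 * g (s - k) 0 := by
  rw [Finset.sum_range_succ]
  have hpt : ∀ k ∈ range (s + 1), g k 0 * g (s + 1 - k) 0
      = 4 * (g k 0 * g (s - k) 0) - 2 * (Cq (s - k) * g k 0) := by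
    intro k hk
    have hk' : k ≤ s := by simpa [Nat.lt_succ_iff] using hk
    rw [show s + 1 - k = (s - k) + 1 by omega, g_succ_zero, Cq]
    ring
  rw [Finset.sum_congr rfl hpt, Finset.sum_sub_distrib, ← Finset.mul_sum, ← Finset.mul_sum,
    W s 0, show s + 1 - (s + 1) = 0 by omega, g00, two_h_zero]
  ring


/-- Vandermonde, cast to `ℚ`. -/
lemma vdm (a b M : ℕ) : (((a + b).choose M : ℕ) : ℚ)
    = ∑ k ∈ range (M + 1), (a.choose k : ℕ) * ((b.choose (M - k) : ℕ) : ℚ) := by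
  rw [Nat.add_choose_eq, Finset.Nat.sum_antidiagonal_eq_sum_range_succ_mk]
  push_cast
  rfl

/-- Expansion of a central binomial coefficient against row `2n`. -/
lemma expand (n i : ℕ) (hi : i ≤ n) :
    g (n + i) 0 = g i 0 * g n 0 + 2 * ∑ u ∈ Ico 1 (n + 1), g i u * g n u := by
  have h0 : g (n + i) 0 = (((2 * i + 2 * n).choose (i + n) : ℕ) : ℚ) := by
    rw [g, show 2 * (n + i) = 2 * i + 2 * n by ring, show n + i + 0 = i + n by ring]
  rw [h0, vdm]
  rw [show i + n + 1 = (i + 1) + n by omega, range_eq_Ico,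
    ← Finset.sum_Ico_consecutive _ (show 0 ≤ i + 1 by omega) (show i + 1 ≤ i + 1 + n by omega),
    ← range_eq_Ico]
  have e1 : ∑ k ∈ range (i + 1), ((2 * i).choose k : ℚ) * ((2 * n).choose (i + n - k) : ℕ)
      = ∑ u ∈ range (i + 1), g i u * g n u := by
    rw [← Finset.sum_range_reflect]
    apply Finset.sum_congr rfl
    intro j hj
    have hj' : j ≤ i := by simpa [Nat.lt_succ_iff] using hj
    rw [show i + 1 - 1 - j = i - j by omega, g, g,
      ccs (show (i - j) + (i + j) = 2 * i by omega),
      show i + n - (i - j) = n + j by omega]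
  have e2 : ∑ k ∈ Ico (i + 1) (i + 1 + n), ((2 * i).choose k : ℚ) * ((2 * n).choose (i + n - k) : ℕ)
      = ∑ u ∈ Ico 1 (n + 1), g i u * g n u := by
    rw [Finset.sum_Ico_eq_sum_range, Finset.sum_Ico_eq_sum_range,
      show i + 1 + n - (i + 1) = n by omega, show n + 1 - 1 = n by omega]
    apply Finset.sum_congr rfl
    intro j hj
    have hj' : j < n := by simpa using hj
    rw [show i + n - (i + 1 + j) = n - (1 + j) by omega,
      ccs (show (n - (1 + j)) + (n + (1 + j)) = 2 * n by omega),
      g, g, show i + 1 + j = i + (1 + j) by ring]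
  have e3 : ∑ u ∈ range (i + 1), g i u * g n u = ∑ u ∈ range (n + 1), g i u * g n u := by
    apply Finset.sum_subset
    · exact Finset.range_subset_range.mpr (by omega)
    · intro x _ hx
      have : i < x := by simp only [Finset.mem_range] at hx ⊢; omega
      rw [g_eq_zero this, zero_mul]
  have e4 : ∑ u ∈ range (n + 1), g i u * g n u
      = g i 0 * g n 0 + ∑ u ∈ Ico 1 (n + 1), g i u * g n u := by
    rw [range_eq_Ico, Finset.sum_eq_sum_Ico_succ_bot (by omega)]
  rw [e1, e2, e3, e4]
  ring

/-- Peeled version of `W`. -/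
lemma Wpeel (s u : ℕ) : ∑ j ∈ range (s + 1), Cq (s - j) * g (j + 1) u
    = h (s + 1) u - Cq (s + 1) * g 0 u := by
  have := W (s + 1) u
  rw [Finset.sum_range_succ'] at this
  have hre : ∀ i ∈ range (s + 1), Cq (s + 1 - (i + 1)) * g (i + 1) u
      = Cq (s - i) * g (i + 1) u := by
    intro i _; rw [Nat.succ_sub_succ]
  rw [Finset.sum_congr rfl hre, Nat.sub_zero] at this
  linarith [this]

/-- The key T-lemma. -/
lemma Tlem (s n : ℕ) (hn : s + 1 ≤ n) :
    ∑ j ∈ range (s + 1), Cq (s - j) * g (n + (j + 1)) 0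
    = (h (s + 1) 0 - Cq (s + 1)) * g n 0
      + 2 * ∑ u ∈ Ico 1 (n + 1), h (s + 1) u * g n u := by
  have e1 : ∀ j ∈ range (s + 1), Cq (s - j) * g (n + (j + 1)) 0
      = Cq (s - j) * g (j + 1) 0 * g n 0
        + 2 * ∑ u ∈ Ico 1 (n + 1), Cq (s - j) * (g (j + 1) u * g n u) := by
    intro j hj
    have hj' : j < s + 1 := by simpa using hj
    rw [expand n (j + 1) (by omega), ← Finset.mul_sum]
    ring
  rw [Finset.sum_congr rfl e1, Finset.sum_add_distrib, ← Finset.sum_mul, Wpeel s 0, ← Finset.mul_sum,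
    Finset.sum_comm]
  have e2 : ∀ u ∈ Ico 1 (n + 1), ∑ j ∈ range (s + 1), Cq (s - j) * (g (j + 1) u * g n u)
      = h (s + 1) u * g n u := by
    intro u hu
    obtain ⟨u', rfl⟩ : ∃ u', u = u' + 1 := by
      refine ⟨u - 1, ?_⟩
      simp only [Finset.mem_Ico] at hu
      omega
    have : ∑ j ∈ range (s + 1), Cq (s - j) * (g (j + 1) (u' + 1) * g n (u' + 1))
        = (∑ j ∈ range (s + 1), Cq (s - j) * g (j + 1) (u' + 1)) * g n (u' + 1) := by
      rw [Finset.sum_mul]; apply Finset.sum_congr rfl; intro j _; ring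
    rw [this, Wpeel, g0succ]
    ring
  rw [Finset.sum_congr rfl e2, g00]
  ring


/-- Triangle sum swap. -/
lemma tri_swap (f : ℕ → ℕ → ℚ) (M : ℕ) :
    ∑ j ∈ range (M + 1), ∑ i ∈ range (j + 1), f i j
    = ∑ i ∈ range (M + 1), ∑ j ∈ Ico i (M + 1), f i j := by
  induction M with
  | zero => simp
  | succ M ih =>
    rw [Finset.sum_range_succ, ih, Finset.sum_range_succ (f := fun i => f i (M + 1))]
    conv_rhs => rw [Finset.sum_range_succ]
    have e1 : ∀ i ∈ range (M + 1), ∑ j ∈ Ico i (M + 1 + 1), f i j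
        = ∑ j ∈ Ico i (M + 1), f i j + f i (M + 1) := by
      intro i hi
      have hi' : i ≤ M + 1 := by simp only [Finset.mem_range] at hi; omega
      rw [Finset.sum_Ico_succ_top hi']
    have e2 : ∑ j ∈ Ico (M + 1) (M + 1 + 1), f (M + 1) j = f (M + 1) (M + 1) := by
      rw [show M + 1 + 1 = (M + 1) + 1 from rfl, Finset.sum_Ico_succ_top (le_refl _),
        Finset.Ico_self, Finset.sum_empty, zero_add]
    rw [Finset.sum_congr rfl e1, Finset.sum_add_distrib, e2]
    ring

/-- Closed form of the weighted tail sum in row `2m`. -/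
lemma Tsum (m : ℕ) : ∀ k, k ≤ m →
    ∑ j ∈ Ico (m - k) (m + 1), (j : ℚ) * ((2 * m).choose (m + j) : ℕ)
    = ((m : ℚ) + (m - k : ℕ)) / 2 * ((2 * m).choose (m + (m - k)) : ℕ) := by
  intro k
  induction k with
  | zero =>
    intro _
    rw [Nat.sub_zero, Finset.sum_Ico_succ_top (le_refl _), Finset.Ico_self, Finset.sum_empty,
      zero_add, show m + m = 2 * m by ring, Nat.choose_self]
    push_cast
    ring
  | succ k ih =>
    intro hk
    have ihh := ih (by omega)
    rw [Finset.sum_eq_sum_Ico_succ_bot (show m - (k + 1) < m + 1 by omega),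
      show m - (k + 1) + 1 = m - k by omega, ihh]
    have key : ((2 * m).choose (m + (m - k)) : ℚ) * ((m : ℚ) + (m - k : ℕ))
        = ((2 * m).choose (m + (m - (k + 1))) : ℚ) * ((k : ℚ) + 1) := by
      have hnat := Nat.choose_succ_right_eq (2 * m) (m + (m - (k + 1)))
      have hidx : m + (m - (k + 1)) + 1 = m + (m - k) := by omega
      have hidx2 : 2 * m - (m + (m - (k + 1))) = k + 1 := by omega
      rw [hidx, hidx2] at hnat
      have keyq := congrArg (Nat.cast (R := ℚ)) hnat
      push_cast at keyq
      have hmk : ((m - k : ℕ) : ℚ) = (m : ℚ) - k := by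
        have : (k : ℕ) ≤ m := by omega
        push_cast [Nat.cast_sub this]; ring
      rw [hmk] at keyq ⊢
      linear_combination keyq
    have hc1 : ((m - k : ℕ) : ℚ) = (m : ℚ) - k := by
      have : (k : ℕ) ≤ m := by omega
      push_cast [Nat.cast_sub this]; ring
    have hc2 : ((m - (k + 1) : ℕ) : ℚ) = (m : ℚ) - k - 1 := by
      have : (k + 1 : ℕ) ≤ m := by omega
      push_cast [Nat.cast_sub this]; ring
    rw [hc1] at key
    rw [hc1, hc2]
    linear_combination key / 2


end KS21

/-- Lemma 2.3 (Lemma 21) of Krattenthaler–Schneider, case `2 ≤ m ≤ n`. -/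
theorem binomial_double_sum_lemma21 (m n : ℕ) (h2 : 2 ≤ m) (h : m ≤ n) :
    ∑ j ∈ Finset.range (m + 1), ∑ i ∈ Finset.range (j + 1),
      (j : ℚ) * ((2 * n).choose (n + i) : ℚ) * ((2 * m).choose (m + j) : ℚ)
    = ((m : ℚ) / 4) * ((2 * n + 2 * m).choose (n + m) : ℚ)
      + (m : ℚ) * ((2 * n).choose n : ℚ) * ((2 * m - 2).choose (m - 2) : ℚ)
      - ((m : ℚ) / 8) * ∑ ℓ ∈ Finset.range (n - m + 1),
          ((2 * n - 2 * ℓ).choose (n - ℓ) : ℚ) * ((2 * m + 2 * ℓ).choose (m + ℓ) : ℚ)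
      + ((m : ℚ) / 2) * ∑ ℓ ∈ Finset.range (n - m + 2),
          ((2 * n - 2 * ℓ).choose (n - ℓ) : ℚ) * ((2 * m + 2 * ℓ - 2).choose (m + ℓ - 1) : ℚ) := by
  obtain ⟨M, rfl⟩ : ∃ M, m = M + 2 := ⟨m - 2, by omega⟩
  obtain ⟨e, rfl⟩ : ∃ e, n = M + 2 + e := ⟨n - (M + 2), by omega⟩
  clear h2 h
  open Finset KS21 in
  simp only [show M + 2 + e - (M + 2) + 1 = e + 1 from by omega,
    show M + 2 + e - (M + 2) + 2 = e + 2 from by omega,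
    show M + 2 - 2 = M from by omega,
    show 2 * (M + 2) - 2 = 2 * M + 2 from by omega]
  -- abbreviations
  set Ssum : ℚ := ∑ i ∈ range (M + 3), ((2 * M + 3).choose (M + 2 - i) : ℚ) * g (M + 2 + e) i
    with hSsum
  set Rt : ℚ := ∑ u ∈ Ico 1 (M + e + 3), h (M + 1) u * g (M + 2 + e) u with hRt
  set CN : ℚ := ∑ t ∈ range (2 * M + e + 5), g t 0 * g (2 * M + e + 4 - t) 0 with hCN
  set C1 : ℚ := ∑ t ∈ range (2 * M + e + 4), g t 0 * g (2 * M + e + 3 - t) 0 with hC1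
  set A' : ℚ := ∑ j ∈ range (M + 2), g (M + 1 - j) 0 * g (M + e + 3 + j) 0 with hA
  set B' : ℚ := ∑ j ∈ range (M + 1), g (M - j) 0 * g (M + e + 3 + j) 0 with hB
  set T' : ℚ := ∑ j ∈ range (M + 1), Cq (M - j) * g (M + e + 3 + j) 0 with hT
  -- Step 1 : closed form for the left-hand side
  have h1 : ∑ j ∈ range (M + 2 + 1), ∑ i ∈ range (j + 1),
      (j : ℚ) * ((2 * (M + 2 + e)).choose (M + 2 + e + i) : ℚ)
        * ((2 * (M + 2)).choose (M + 2 + j) : ℚ)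
      = ((M : ℚ) + 2) * Ssum := by
    rw [tri_swap, hSsum, Finset.mul_sum]
    apply Finset.sum_congr rfl
    intro i hi
    have hi' : i ≤ M + 2 := by simp only [Finset.mem_range] at hi; omega
    have e0 : ∑ j ∈ Ico i (M + 2 + 1), (j : ℚ) * ((2 * (M + 2 + e)).choose (M + 2 + e + i) : ℚ)
          * ((2 * (M + 2)).choose (M + 2 + j) : ℚ)
        = (∑ j ∈ Ico i (M + 2 + 1), (j : ℚ) * ((2 * (M + 2)).choose (M + 2 + j) : ℚ))
          * ((2 * (M + 2 + e)).choose (M + 2 + e + i) : ℚ) := by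
      rw [Finset.sum_mul]; apply Finset.sum_congr rfl; intro j _; ring
    rw [e0]
    have ht := Tsum (M + 2) (M + 2 - i) (by omega)
    rw [show M + 2 - (M + 2 - i) = i from by omega] at ht
    rw [ht]
    have absorb : (((M + 2 : ℕ) : ℚ) + (i : ℕ)) / 2 * ((2 * (M + 2)).choose (M + 2 + i) : ℚ)
        = ((M : ℚ) + 2) * ((2 * M + 3).choose (M + 2 - i) : ℚ) := by
      have hnat := Nat.add_one_mul_choose_eq (2 * M + 3) (M + 1 + i)
      rw [show 2 * M + 3 + 1 = 2 * (M + 2) from by ring,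
        show M + 1 + i + 1 = M + 2 + i from by ring] at hnat
      have hq := congrArg (Nat.cast (R := ℚ)) hnat
      push_cast at hq
      rw [ccs (show (M + 1 + i) + (M + 2 - i) = 2 * M + 3 from by omega)] at hq
      push_cast
      linear_combination -hq / 2
    rw [absorb, g]
    ring
  -- Step 2 : Vandermonde split
  have h2 : Ssum + Rt = h (2 * M + e + 3) 0 := by
    have hv := vdm (2 * M + 3) (2 * M + 2 * e + 4) (2 * M + e + 4)
    rw [show 2 * M + 3 + (2 * M + 2 * e + 4) = 2 * (2 * M + e + 3) + 1 from by ring,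
      show 2 * M + e + 4 + 1 = 2 * M + e + 5 from by omega, range_eq_Ico,
      ← Finset.sum_Ico_consecutive _ (show (0 : ℕ) ≤ M + 3 from by omega)
        (show M + 3 ≤ 2 * M + e + 5 from by omega)] at hv
    have e1 : Ssum = ∑ k ∈ Ico 0 (M + 3),
        ((2 * M + 3).choose k : ℚ) * ((2 * M + 2 * e + 4).choose (2 * M + e + 4 - k) : ℚ) := by
      rw [hSsum, ← range_eq_Ico,
        ← Finset.sum_range_reflect
          (fun k => ((2 * M + 3).choose k : ℚ) * ((2 * M + 2 * e + 4).choose (2 * M + e + 4 - k) : ℚ))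
          (M + 3)]
      apply Finset.sum_congr rfl
      intro i hi
      have hi' : i ≤ M + 2 := by simp only [Finset.mem_range] at hi; omega
      simp only [show M + 3 - 1 - i = M + 2 - i from by omega,
        show 2 * M + e + 4 - (M + 2 - i) = M + 2 + e + i from by omega, g]
      rw [show 2 * (M + 2 + e) = 2 * M + 2 * e + 4 from by ring]
    have e2 : ∑ k ∈ Ico (M + 3) (2 * M + e + 5),
        ((2 * M + 3).choose k : ℚ) * ((2 * M + 2 * e + 4).choose (2 * M + e + 4 - k) : ℚ)
        = Rt := by
      rw [hRt, Finset.sum_Ico_eq_sum_range, Finset.sum_Ico_eq_sum_range]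
      simp only [show 2 * M + e + 5 - (M + 3) = M + e + 2 from by omega,
        show M + e + 3 - 1 = M + e + 2 from by omega]
      apply Finset.sum_congr rfl
      intro j hj
      have hj' : j < M + e + 2 := by simpa using hj
      rw [show 2 * M + e + 4 - (M + 3 + j) = M + e + 1 - j from by omega,
        ccs (show (M + e + 1 - j) + (M + 2 + e + (1 + j)) = 2 * M + 2 * e + 4 from by omega)]
      simp only [h, g]
      rw [show 2 * (M + 1) + 1 = 2 * M + 3 from by ring,
        show M + 1 + 1 + (1 + j) = M + 3 + j from by ring,
        show 2 * (M + 2 + e) = 2 * M + 2 * e + 4 from by ring]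
    rw [← e1, e2] at hv
    rw [← hv]
    simp only [h]
  -- Step 3 : central binomial halving
  have h3 : g (2 * M + e + 4) 0 = 2 * h (2 * M + e + 3) 0 := by
    have := two_h_zero (2 * M + e + 3)
    simpa [show 2 * M + e + 3 + 1 = 2 * M + e + 4 from by omega] using this
  -- Step 4 : first sum on the right-hand side
  have h4 : ∑ ℓ ∈ range (e + 1), ((2 * (M + 2 + e) - 2 * ℓ).choose (M + 2 + e - ℓ) : ℚ)
        * ((2 * (M + 2) + 2 * ℓ).choose (M + 2 + ℓ) : ℚ)
      = CN - 2 * A' := by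
    have hS1 : ∑ ℓ ∈ range (e + 1), ((2 * (M + 2 + e) - 2 * ℓ).choose (M + 2 + e - ℓ) : ℚ)
        * ((2 * (M + 2) + 2 * ℓ).choose (M + 2 + ℓ) : ℚ)
        = ∑ ℓ ∈ range (e + 1), g (M + 2 + e - ℓ) 0 * g (M + 2 + ℓ) 0 := by
      apply Finset.sum_congr rfl
      intro l hl
      have hl' : l ≤ e := by simp only [Finset.mem_range] at hl; omega
      simp only [g, Nat.add_zero]
      rw [show 2 * (M + 2 + e - l) = 2 * (M + 2 + e) - 2 * l from by omega,
        show 2 * (M + 2 + l) = 2 * (M + 2) + 2 * l from by ring]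
    have p1 : ∑ t ∈ range (M + 2), g t 0 * g (2 * M + e + 4 - t) 0 = A' := by
      rw [← Finset.sum_range_reflect (fun t => g t 0 * g (2 * M + e + 4 - t) 0) (M + 2), hA]
      apply Finset.sum_congr rfl
      intro j hj
      have hj' : j ≤ M + 1 := by simp only [Finset.mem_range] at hj; omega
      rw [show M + 2 - 1 - j = M + 1 - j from by omega,
        show 2 * M + e + 4 - (M + 1 - j) = M + e + 3 + j from by omega]
    have p2 : ∑ t ∈ Ico (M + 2) (M + e + 3), g t 0 * g (2 * M + e + 4 - t) 0
        = ∑ ℓ ∈ range (e + 1), g (M + 2 + e - ℓ) 0 * g (M + 2 + ℓ) 0 := by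
      rw [Finset.sum_Ico_eq_sum_range]
      simp only [show M + e + 3 - (M + 2) = e + 1 from by omega]
      apply Finset.sum_congr rfl
      intro j hj
      have hj' : j ≤ e := by simp only [Finset.mem_range] at hj; omega
      rw [show 2 * M + e + 4 - (M + 2 + j) = M + 2 + e - j from by omega]
      ring
    have p3 : ∑ t ∈ Ico (M + e + 3) (2 * M + e + 5), g t 0 * g (2 * M + e + 4 - t) 0 = A' := by
      rw [Finset.sum_Ico_eq_sum_range, hA]
      simp only [show 2 * M + e + 5 - (M + e + 3) = M + 2 from by omega]
      apply Finset.sum_congr rfl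
      intro j hj
      have hj' : j ≤ M + 1 := by simp only [Finset.mem_range] at hj; omega
      rw [show 2 * M + e + 4 - (M + e + 3 + j) = M + 1 - j from by omega]
      ring
    have hsplit : CN = A' + (∑ ℓ ∈ range (e + 1), g (M + 2 + e - ℓ) 0 * g (M + 2 + ℓ) 0) + A' := by
      rw [hCN, range_eq_Ico,
        ← Finset.sum_Ico_consecutive (fun t => g t 0 * g (2 * M + e + 4 - t) 0)
          (show (0 : ℕ) ≤ M + e + 3 from by omega) (show M + e + 3 ≤ 2 * M + e + 5 from by omega),
        ← Finset.sum_Ico_consecutive (fun t => g t 0 * g (2 * M + e + 4 - t) 0)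
          (show (0 : ℕ) ≤ M + 2 from by omega) (show M + 2 ≤ M + e + 3 from by omega)]
      rw [p3, p2, ← range_eq_Ico, p1]
    rw [hS1]
    rw [hsplit]
    ring
  -- Step 5 : second sum on the right-hand side
  have h5 : ∑ ℓ ∈ range (e + 2), ((2 * (M + 2 + e) - 2 * ℓ).choose (M + 2 + e - ℓ) : ℚ)
        * ((2 * (M + 2) + 2 * ℓ - 2).choose (M + 2 + ℓ - 1) : ℚ)
      = C1 - 2 * B' := by
    have hS2 : ∑ ℓ ∈ range (e + 2), ((2 * (M + 2 + e) - 2 * ℓ).choose (M + 2 + e - ℓ) : ℚ)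
        * ((2 * (M + 2) + 2 * ℓ - 2).choose (M + 2 + ℓ - 1) : ℚ)
        = ∑ ℓ ∈ range (e + 2), g (M + 2 + e - ℓ) 0 * g (M + 1 + ℓ) 0 := by
      apply Finset.sum_congr rfl
      intro l hl
      have hl' : l ≤ e + 1 := by simp only [Finset.mem_range] at hl; omega
      simp only [g, Nat.add_zero]
      rw [show 2 * (M + 2 + e - l) = 2 * (M + 2 + e) - 2 * l from by omega,
        show 2 * (M + 1 + l) = 2 * (M + 2) + 2 * l - 2 from by omega,
        show M + 1 + l = M + 2 + l - 1 from by omega]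
    have p1 : ∑ t ∈ range (M + 1), g t 0 * g (2 * M + e + 3 - t) 0 = B' := by
      rw [← Finset.sum_range_reflect (fun t => g t 0 * g (2 * M + e + 3 - t) 0) (M + 1), hB]
      apply Finset.sum_congr rfl
      intro j hj
      have hj' : j ≤ M := by simp only [Finset.mem_range] at hj; omega
      rw [show M + 1 - 1 - j = M - j from by omega,
        show 2 * M + e + 3 - (M - j) = M + e + 3 + j from by omega]
    have p2 : ∑ t ∈ Ico (M + 1) (M + e + 3), g t 0 * g (2 * M + e + 3 - t) 0
        = ∑ ℓ ∈ range (e + 2), g (M + 2 + e - ℓ) 0 * g (M + 1 + ℓ) 0 := by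
      rw [Finset.sum_Ico_eq_sum_range]
      simp only [show M + e + 3 - (M + 1) = e + 2 from by omega]
      apply Finset.sum_congr rfl
      intro j hj
      have hj' : j ≤ e + 1 := by simp only [Finset.mem_range] at hj; omega
      rw [show 2 * M + e + 3 - (M + 1 + j) = M + 2 + e - j from by omega]
      ring
    have p3 : ∑ t ∈ Ico (M + e + 3) (2 * M + e + 4), g t 0 * g (2 * M + e + 3 - t) 0 = B' := by
      rw [Finset.sum_Ico_eq_sum_range, hB]
      simp only [show 2 * M + e + 4 - (M + e + 3) = M + 1 from by omega]
      apply Finset.sum_congr rfl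
      intro j hj
      have hj' : j ≤ M := by simp only [Finset.mem_range] at hj; omega
      rw [show 2 * M + e + 3 - (M + e + 3 + j) = M - j from by omega]
      ring
    have hsplit : C1 = B' + (∑ ℓ ∈ range (e + 2), g (M + 2 + e - ℓ) 0 * g (M + 1 + ℓ) 0) + B' := by
      rw [hC1, range_eq_Ico,
        ← Finset.sum_Ico_consecutive (fun t => g t 0 * g (2 * M + e + 3 - t) 0)
          (show (0 : ℕ) ≤ M + e + 3 from by omega) (show M + e + 3 ≤ 2 * M + e + 4 from by omega),
        ← Finset.sum_Ico_consecutive (fun t => g t 0 * g (2 * M + e + 3 - t) 0)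
          (show (0 : ℕ) ≤ M + 1 from by omega) (show M + 1 ≤ M + e + 3 from by omega)]
      rw [p3, p2, ← range_eq_Ico, p1]
    rw [hS2]
    rw [hsplit]
    ring
  -- Step 6 : convolution recurrence
  have h6 : CN = 4 * C1 := by
    have := conv (2 * M + e + 3)
    simpa [show 2 * M + e + 3 + 2 = 2 * M + e + 5 from by omega,
      show 2 * M + e + 3 + 1 = 2 * M + e + 4 from by omega] using this
  -- Step 7 : extracting the Catalan difference
  have h7 : A' = 4 * B' + g (2 * M + e + 4) 0 - 2 * T' := by
    rw [hA, hB, hT, Finset.sum_range_succ,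
      show M + 1 - (M + 1) = 0 from by omega,
      show M + e + 3 + (M + 1) = 2 * M + e + 4 from by omega, g00, one_mul]
    have e1 : ∀ j ∈ range (M + 1), g (M + 1 - j) 0 * g (M + e + 3 + j) 0
        = 4 * (g (M - j) 0 * g (M + e + 3 + j) 0) - 2 * (Cq (M - j) * g (M + e + 3 + j) 0) := by
      intro j hj
      have hj' : j ≤ M := by simp only [Finset.mem_range] at hj; omega
      rw [show M + 1 - j = (M - j) + 1 from by omega, g_succ_zero, Cq]
      ring
    rw [Finset.sum_congr rfl e1, Finset.sum_sub_distrib, ← Finset.mul_sum, ← Finset.mul_sum]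
    ring
  -- Step 8 : the key evaluation
  have h8 : T' = 2 * ((2 * M + 2).choose M : ℚ) * g (M + 2 + e) 0 + 2 * Rt := by
    have hK : h (M + 1) 0 - Cq (M + 1) = 2 * ((2 * M + 2).choose M : ℚ) := by
      simp only [h, Cq, g]
      rw [show 2 * (M + 1) + 1 = (2 * M + 2) + 1 from by ring,
        show M + 1 + 1 + 0 = (M + 1) + 1 from by omega,
        cc rfl rfl,
        show 2 * (M + 1) = 2 * M + 2 from by ring,
        show M + 1 + 0 = M + 1 from by omega,
        ccs (show (M + 1 + 1) + M = 2 * M + 2 from by omega)]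
      ring
    have ht := Tlem M (M + 2 + e) (by omega)
    simp only [show ∀ j : ℕ, M + 2 + e + (j + 1) = M + e + 3 + j from fun j => by omega,
      show M + 2 + e + 1 = M + e + 3 from by omega] at ht
    rw [hT, ht, ← hRt, hK]
  -- cast normalizations in the goal
  have hcN : ((2 * (M + 2 + e) + 2 * (M + 2)).choose (M + 2 + e + (M + 2)) : ℚ)
      = g (2 * M + e + 4) 0 := by
    simp only [g, Nat.add_zero]
    rw [show 2 * (2 * M + e + 4) = 2 * (M + 2 + e) + 2 * (M + 2) from by ring,
      show 2 * M + e + 4 = M + 2 + e + (M + 2) from by ring]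
  have hcn : ((2 * (M + 2 + e)).choose (M + 2 + e) : ℚ) = g (M + 2 + e) 0 := by
    simp only [g, Nat.add_zero]
  rw [h1, h4, h5, hcN, hcn]
  push_cast
  linear_combination ((M : ℚ) + 2) * h2 - (((M : ℚ) + 2) / 2) * h3 + (((M : ℚ) + 2) / 8) * h6
    - (((M : ℚ) + 2) / 4) * h7 + (((M : ℚ) + 2) / 2) * h8
end

section
/- Let m and n be integers with 1 ≤ m ≤ n. Then, as an identity of rational numbers, ∑_{j=0}^{m} ∑_{i=0}^{j} i·j · C(2n, n+i) · C(2m, m+j) = (mn/2)·C(2n+2m−2, n+m−1) − (mn/2)·C(2n+2m−2, n+m−2) + (mn/8)·∑_{ℓ=0}^{n−m} C(2n−2ℓ, n−ℓ)·C(2m+2ℓ, m+ℓ) − (mn/2)·∑_{ℓ=0}^{n−m−1} C(2n−2ℓ−2, n−ℓ−1)·C(2m+2ℓ, m+ℓ), where the last sum is empty when m = n. -/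
namespace KSLemma22

/-- Rational-valued binomial coefficient. -/
noncomputable def q (a b : ℕ) : ℚ := (a.choose b : ℚ)

lemma pas (a b : ℕ) : q (a+1) (b+1) = q a b + q a (b+1) := by
  unfold q; exact_mod_cast Nat.choose_succ_succ a b

lemma qzero {a b : ℕ} (h : a < b) : q a b = 0 := by
  unfold q; exact_mod_cast Nat.choose_eq_zero_of_lt h

lemma qsymm' {a b c : ℕ} (h1 : b ≤ a) (h2 : b + c = a) : q a b = q a c := by
  unfold q
  congr 1
  rw [← Nat.choose_symm (show c ≤ a by omega)]
  congr 1; omega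

lemma qsymm_mid (k : ℕ) : q (2*k+1) k = q (2*k+1) (k+1) :=
  qsymm' (by omega) (by omega)

lemma qcongr {a b a' b' : ℕ} (h1 : a = a') (h2 : b = b') : q a b = q a' b' := by rw [h1, h2]

lemma pas' {A B a b b' : ℕ} (hA : A = a+1) (hB : B = b+1) (h1 : b' = b+1) :
    q A B = q a b + q a b' := by subst hA hB h1; exact pas a b

/-- `(i+1) * C(2ν+2, ν+2+i) = (ν+1) * (C(2ν+1, ν+1+i) - C(2ν+1, ν+2+i))` for `i ≤ ν`. -/
lemma id1 (ν i : ℕ) (h : i ≤ ν) :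
    ((i : ℚ) + 1) * q (2*ν+2) (ν+2+i)
      = ((ν : ℚ)+1) * (q (2*ν+1) (ν+1+i) - q (2*ν+1) (ν+2+i)) := by
  have h1 := Nat.add_one_mul_choose_eq (2*ν+1) (ν+1+i)
  have h2 := Nat.choose_mul_succ_eq (2*ν+1) (ν+2+i)
  have e1 : (2*ν+1)+1 = 2*ν+2 := by omega
  have e2 : (ν+1+i)+1 = ν+2+i := by omega
  have e3 : (2*ν+1+1) - (ν+2+i) = ν - i := by omega
  rw [e1, e2] at h1
  rw [e1, e3] at h2
  have h1' : ((2*ν+2 : ℕ) : ℚ) * q (2*ν+1) (ν+1+i) = q (2*ν+2) (ν+2+i) * ((ν+2+i : ℕ) : ℚ) := by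
    unfold q; exact_mod_cast h1
  have h2' : q (2*ν+1) (ν+2+i) * ((2*ν+2 : ℕ) : ℚ) = q (2*ν+2) (ν+2+i) * ((ν - i : ℕ) : ℚ) := by
    unfold q; exact_mod_cast h2
  have hc : ((ν - i : ℕ) : ℚ) = (ν : ℚ) - (i : ℚ) := by
    exact Nat.cast_sub h
  rw [hc] at h2'
  push_cast at h1' h2'
  linear_combination (-(1/2) : ℚ) * h1' + (1/2) * h2'

/-- telescoped inner sum -/
lemma sumI (ν J : ℕ) (hJ : J ≤ ν + 1) :
    ∑ i ∈ Finset.range (J+1), (i : ℚ) * q (2*ν+2) (ν+1+i)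
      = ((ν : ℚ)+1) * (q (2*ν+1) (ν+1) - q (2*ν+1) (ν+1+J)) := by
  induction J with
  | zero => simp
  | succ J ih =>
    have hJ' : J ≤ ν + 1 := by omega
    rw [Finset.sum_range_succ, ih hJ']
    have hi : J ≤ ν := by omega
    have := id1 ν J hi
    have e : ν + 1 + (J+1) = ν + 2 + J := by omega
    rw [e]
    push_cast
    linear_combination this

/-- `C(2ν+1,ν) - C(2ν+1,ν+2) = 2*C(2ν+2,ν+1) - (1/2)*C(2ν+4,ν+2)` (Catalan identity). -/
lemma catq (ν : ℕ) :
    q (2*ν+1) ν - q (2*ν+1) (ν+2)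
      = 2 * q (2*ν+2) (ν+1) - (1/2) * q (2*ν+4) (ν+2) := by
  have p1 : q (2*ν+4) (ν+2) = q (2*ν+3) (ν+1) + q (2*ν+3) (ν+2) :=
    pas' (by omega) (by omega) (by omega)
  have s1 : q (2*ν+3) (ν+1) = q (2*ν+3) (ν+2) := by
    unfold q
    have h : (2*ν+3) - (ν+2) = ν+1 := by omega
    rw [← h, Nat.choose_symm (by omega)]
  have p2 : q (2*ν+3) (ν+2) = q (2*ν+2) (ν+1) + q (2*ν+2) (ν+2) :=
    pas' (by omega) (by omega) (by omega)
  have p3 : q (2*ν+2) (ν+1) = q (2*ν+1) ν + q (2*ν+1) (ν+1) :=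
    pas' (by omega) (by omega) (by omega)
  have p4 : q (2*ν+2) (ν+2) = q (2*ν+1) (ν+1) + q (2*ν+1) (ν+2) :=
    pas' (by omega) (by omega) (by omega)
  linear_combination (1/2:ℚ) * p1 + (1/2) * s1 + p2 - p3 + p4


/-- difference of entries at distance 2 in row `2ν+1` -/
noncomputable def dd (ν i : ℕ) : ℚ := q (2*ν+1) (ν+i) - q (2*ν+1) (ν+2+i)
/-- entry in row `2μ+1` -/
noncomputable def vv (μ i : ℕ) : ℚ := q (2*μ+1) (μ+1+i)

/-- The central difference sum. -/
noncomputable def Lam (μ ν : ℕ) : ℚ := ∑ i ∈ Finset.range (μ+1), dd ν i * vv μ i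

lemma dd_zero (ν : ℕ) : dd ν 0 = q (2*ν+1) ν - q (2*ν+1) (ν+2) := by simp [dd]

lemma vv_zero (μ : ℕ) : vv μ 0 = q (2*μ+1) (μ+1) := by simp [vv]

lemma vv_top (μ j : ℕ) (h : μ + 1 ≤ j) : vv μ j = 0 := qzero (by omega)

lemma vv_succ_exp (μ i : ℕ) : vv (μ+1) (i+1) = vv μ i + 2 * vv μ (i+1) + vv μ (i+2) := by
  unfold vv
  have a1 : q (2*(μ+1)+1) (μ+1+1+(i+1)) = q (2*μ+2) (μ+2+i) + q (2*μ+2) (μ+3+i) :=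
    pas' (by omega) (by omega) (by omega)
  have a2 : q (2*μ+2) (μ+2+i) = q (2*μ+1) (μ+1+i) + q (2*μ+1) (μ+2+i) :=
    pas' (by omega) (by omega) (by omega)
  have a3 : q (2*μ+2) (μ+3+i) = q (2*μ+1) (μ+2+i) + q (2*μ+1) (μ+3+i) :=
    pas' (by omega) (by omega) (by omega)
  rw [a1, a2, a3,
    qcongr (rfl : 2*μ+1 = 2*μ+1) (show μ+1+(i+1) = μ+2+i by omega),
    qcongr (rfl : 2*μ+1 = 2*μ+1) (show μ+1+(i+2) = μ+3+i by omega)]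
  ring

lemma dd_succ_exp (ν i : ℕ) : dd (ν+1) (i+1) = dd ν i + 2 * dd ν (i+1) + dd ν (i+2) := by
  unfold dd
  have a1 : q (2*(ν+1)+1) (ν+1+(i+1)) = q (2*ν+2) (ν+1+i) + q (2*ν+2) (ν+2+i) :=
    pas' (by omega) (by omega) (by omega)
  have a2 : q (2*(ν+1)+1) (ν+1+2+(i+1)) = q (2*ν+2) (ν+3+i) + q (2*ν+2) (ν+4+i) :=
    pas' (by omega) (by omega) (by omega)
  have b1 : q (2*ν+2) (ν+1+i) = q (2*ν+1) (ν+i) + q (2*ν+1) (ν+1+i) :=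
    pas' (by omega) (by omega) (by omega)
  have b2 : q (2*ν+2) (ν+2+i) = q (2*ν+1) (ν+1+i) + q (2*ν+1) (ν+2+i) :=
    pas' (by omega) (by omega) (by omega)
  have b3 : q (2*ν+2) (ν+3+i) = q (2*ν+1) (ν+2+i) + q (2*ν+1) (ν+3+i) :=
    pas' (by omega) (by omega) (by omega)
  have b4 : q (2*ν+2) (ν+4+i) = q (2*ν+1) (ν+3+i) + q (2*ν+1) (ν+4+i) :=
    pas' (by omega) (by omega) (by omega)
  rw [a1, a2, b1, b2, b3, b4,
    qcongr (rfl : 2*ν+1 = 2*ν+1) (show ν+(i+1) = ν+1+i by omega),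
    qcongr (rfl : 2*ν+1 = 2*ν+1) (show ν+2+(i+1) = ν+3+i by omega),
    qcongr (rfl : 2*ν+1 = 2*ν+1) (show ν+(i+2) = ν+2+i by omega),
    qcongr (rfl : 2*ν+1 = 2*ν+1) (show ν+2+(i+2) = ν+4+i by omega)]
  ring

lemma dd_succ_zero (ν : ℕ) : dd (ν+1) 0 = dd ν 0 + dd ν 1 := by
  unfold dd
  have a1 : q (2*(ν+1)+1) (ν+1+0) = q (2*ν+2) ν + q (2*ν+2) (ν+1) :=
    pas' (by omega) (by omega) (by omega)
  have a2 : q (2*(ν+1)+1) (ν+1+2+0) = q (2*ν+2) (ν+2) + q (2*ν+2) (ν+3) :=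
    pas' (by omega) (by omega) (by omega)
  have s : q (2*ν+2) ν = q (2*ν+2) (ν+2) := qsymm' (by omega) (by omega)
  have b1 : q (2*ν+2) (ν+1) = q (2*ν+1) ν + q (2*ν+1) (ν+1) :=
    pas' (by omega) (by omega) (by omega)
  have b2 : q (2*ν+2) (ν+2) = q (2*ν+1) (ν+1) + q (2*ν+1) (ν+2) :=
    pas' (by omega) (by omega) (by omega)
  have b3 : q (2*ν+2) (ν+3) = q (2*ν+1) (ν+2) + q (2*ν+1) (ν+3) :=
    pas' (by omega) (by omega) (by omega)
  rw [a1, a2, s, b1, b2, b3,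
    qcongr (rfl : 2*ν+1 = 2*ν+1) (show ν+(0:ℕ) = ν by omega),
    qcongr (rfl : 2*ν+1 = 2*ν+1) (show ν+2+(0:ℕ) = ν+2 by omega),
    qcongr (rfl : 2*ν+1 = 2*ν+1) (show ν+(1:ℕ) = ν+1 by omega),
    qcongr (rfl : 2*ν+1 = 2*ν+1) (show ν+2+(1:ℕ) = ν+3 by omega)]
  ring

lemma vv_succ_zero (μ : ℕ) : vv (μ+1) 0 = 3 * vv μ 0 + vv μ 1 := by
  unfold vv
  have a1 : q (2*(μ+1)+1) (μ+1+1+0) = q (2*μ+2) (μ+1) + q (2*μ+2) (μ+2) :=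
    pas' (by omega) (by omega) (by omega)
  have b1 : q (2*μ+2) (μ+1) = q (2*μ+1) μ + q (2*μ+1) (μ+1) :=
    pas' (by omega) (by omega) (by omega)
  have b2 : q (2*μ+2) (μ+2) = q (2*μ+1) (μ+1) + q (2*μ+1) (μ+2) :=
    pas' (by omega) (by omega) (by omega)
  rw [a1, b1, b2, qsymm_mid μ,
    qcongr (rfl : 2*μ+1 = 2*μ+1) (show μ+1+(0:ℕ) = μ+1 by omega),
    qcongr (rfl : 2*μ+1 = 2*μ+1) (show μ+1+(1:ℕ) = μ+2 by omega)]
  ring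

/-- The anti-diagonal recurrence. -/
lemma lamRec (μ ν : ℕ) :
    Lam μ (ν+1) = Lam (μ+1) ν - 2 * (q (2*ν+1) ν - q (2*ν+1) (ν+2)) * q (2*μ+1) (μ+1) := by
  have hA : Lam μ (ν+1)
      = (∑ i ∈ Finset.range (μ+1), dd (ν+1) (i+1) * vv μ (i+1)) + dd (ν+1) 0 * vv μ 0 := by
    unfold Lam
    rw [Finset.sum_range_succ' (fun i => dd (ν+1) i * vv μ i) μ]
    congr 1
    rw [Finset.sum_range_succ]
    rw [vv_top μ (μ+1) (by omega)]
    ring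
  have hB : Lam (μ+1) ν
      = (∑ i ∈ Finset.range (μ+1), dd ν (i+1) * vv (μ+1) (i+1)) + dd ν 0 * vv (μ+1) 0 := by
    unfold Lam
    rw [Finset.sum_range_succ' (fun i => dd ν i * vv (μ+1) i) (μ+1)]
  have htel : ∑ i ∈ Finset.range (μ+1),
      (dd ν (i+1) * vv (μ+1) (i+1) - dd (ν+1) (i+1) * vv μ (i+1))
      = (dd ν (μ+1) * vv μ (μ+2) - dd ν (μ+2) * vv μ (μ+1))
        - (dd ν 0 * vv μ 1 - dd ν 1 * vv μ 0) := by
    have hpt : ∀ i ∈ Finset.range (μ+1),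
        dd ν (i+1) * vv (μ+1) (i+1) - dd (ν+1) (i+1) * vv μ (i+1)
        = (fun i => dd ν i * vv μ (i+1) - dd ν (i+1) * vv μ i) (i+1)
          - (fun i => dd ν i * vv μ (i+1) - dd ν (i+1) * vv μ i) i := by
      intro i _
      simp only
      rw [vv_succ_exp, dd_succ_exp]
      ring
    rw [Finset.sum_congr rfl hpt,
      Finset.sum_range_sub (fun i => dd ν i * vv μ (i+1) - dd ν (i+1) * vv μ i) (μ+1)]
  have e1 : vv μ (μ+1) = 0 := vv_top μ (μ+1) (by omega)
  have e2 : vv μ (μ+2) = 0 := vv_top μ (μ+2) (by omega)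
  rw [e1, e2] at htel
  have hsum := Finset.sum_sub_distrib (s := Finset.range (μ+1))
    (f := fun i => dd ν (i+1) * vv (μ+1) (i+1)) (g := fun i => dd (ν+1) (i+1) * vv μ (i+1))
  rw [hsum] at htel
  rw [← dd_zero, ← vv_zero]
  rw [hA, hB, dd_succ_zero, vv_succ_zero]
  linear_combination -htel

/-- central binomial coefficient -/
noncomputable def Cc (k : ℕ) : ℚ := q (2*k) k

lemma ccongr {a b : ℕ} (h : a = b) : Cc a = Cc b := by rw [h]

lemma cc_double (k : ℕ) : Cc (k+1) = 2 * q (2*k+1) (k+1) := by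
  unfold Cc
  have : q (2*(k+1)) (k+1) = q (2*k+1) k + q (2*k+1) (k+1) :=
    pas' (by omega) (by omega) (by omega)
  rw [this, qsymm_mid k]; ring

lemma catq' (ν : ℕ) :
    q (2*ν+1) ν - q (2*ν+1) (ν+2) = 2 * Cc (ν+1) - (1/2) * Cc (ν+2) := by
  have h := catq ν
  rw [show Cc (ν+1) = q (2*ν+2) (ν+1) from ccongr rfl ▸ (by unfold Cc; exact qcongr (by omega) rfl),
      show Cc (ν+2) = q (2*ν+4) (ν+2) from by unfold Cc; exact qcongr (by omega) rfl]
  exact h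

/-- Base case: `Λ μ μ = C(2μ+1, μ+1)^2`. -/
lemma lamDiag (μ : ℕ) : Lam μ μ = q (2*μ+1) (μ+1) ^ 2 := by
  unfold Lam
  have hpt : ∀ i ∈ Finset.range (μ+1), dd μ i * vv μ i
      = (fun i => q (2*μ+1) (μ+i) * q (2*μ+1) (μ+1+i)) i
        - (fun i => q (2*μ+1) (μ+i) * q (2*μ+1) (μ+1+i)) (i+1) := by
    intro i _
    simp only [dd, vv]
    rw [qcongr (rfl : 2*μ+1 = 2*μ+1) (show μ+(i+1) = μ+1+i by omega),
        qcongr (rfl : 2*μ+1 = 2*μ+1) (show μ+1+(i+1) = μ+2+i by omega)]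
    ring
  rw [Finset.sum_congr rfl hpt, Finset.sum_range_sub']
  rw [qzero (show 2*μ+1 < μ+1+(μ+1) by omega),
      qcongr (rfl : 2*μ+1 = 2*μ+1) (show μ+(0:ℕ) = μ by omega),
      qcongr (rfl : 2*μ+1 = 2*μ+1) (show μ+1+(0:ℕ) = μ+1 by omega),
      qsymm_mid μ]
  ring

/-- Base case helper: `Λ (μ+1) μ = C(2μ+2, μ+1)^2 = Cc(μ+1)^2`. -/
lemma lamAux (μ : ℕ) : Lam (μ+1) μ = Cc (μ+1) ^ 2 := by
  unfold Lam
  have hpt : ∀ i ∈ Finset.range (μ+2), dd μ i * vv (μ+1) i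
      = (fun i => q (2*μ+2) (μ+1+i) ^ 2) i - (fun i => q (2*μ+2) (μ+1+i) ^ 2) (i+1) := by
    intro i _
    simp only [dd, vv]
    have a1 : q (2*μ+2) (μ+1+i) = q (2*μ+1) (μ+i) + q (2*μ+1) (μ+1+i) :=
      pas' (by omega) (by omega) (by omega)
    have a2 : q (2*μ+2) (μ+1+(i+1)) = q (2*μ+1) (μ+1+i) + q (2*μ+1) (μ+2+i) :=
      pas' (by omega) (by omega) (by omega)
    have a3 : q (2*(μ+1)+1) (μ+1+1+i) = q (2*μ+2) (μ+1+i) + q (2*μ+2) (μ+1+(i+1)) :=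
      pas' (by omega) (by omega) (by omega)
    rw [a3, a1, a2]
    ring
  rw [Finset.sum_congr rfl hpt, Finset.sum_range_sub']
  rw [qzero (show 2*μ+2 < μ+1+(μ+2) by omega)]
  unfold Cc
  rw [qcongr (show 2*μ+2 = 2*(μ+1) by omega) (show μ+1+(0:ℕ) = μ+1 by omega)]
  ring

/-- The key lemma, by two-step induction along anti-diagonals. -/
lemma key : ∀ d μ : ℕ, Lam μ (μ+d)
    = (1/4) * (∑ ℓ ∈ Finset.range (d+1), Cc (μ+1+ℓ) * Cc (μ+1+(d-ℓ)))
      - ∑ ℓ ∈ Finset.range d, Cc (μ+1+ℓ) * Cc (μ+(d-ℓ)) := by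
  intro d
  induction d using Nat.strong_induction_on with
  | _ d ih =>
    match d with
    | 0 =>
      intro μ
      simp only [Nat.add_zero, Nat.zero_add, Nat.sub_zero, Finset.sum_range_one,
        Finset.range_zero, Finset.sum_empty]
      rw [lamDiag μ, cc_double μ]
      ring
    | 1 =>
      intro μ
      have hrec := lamRec μ μ
      rw [lamAux μ, catq' μ] at hrec
      rw [hrec]
      rw [show Finset.range (1+1) = Finset.range (1+1) from rfl]
      rw [Finset.sum_range_succ, Finset.sum_range_one, Finset.sum_range_one]
      rw [show μ+1+(1-0) = μ+2 by omega, show μ+1+1 = μ+2 by omega,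
          show μ+1+(1-1) = μ+1 by omega, show μ+(1-0) = μ+1 by omega,
          show μ+1+0 = μ+1 by omega]
      rw [cc_double μ]
      ring
    | (e+2) =>
      intro μ
      have hrec := lamRec μ (μ+e+1)
      rw [show μ+(e+2) = (μ+e+1)+1 by omega, hrec]
      have hih := ih e (by omega) (μ+1)
      rw [show (μ+1)+e = (μ+e)+1 by omega] at hih
      rw [hih, catq' (μ+e+1)]
      -- bookkeeping for the two sums
      have hS1 : ∑ ℓ ∈ Finset.range (e+2+1), Cc (μ+1+ℓ) * Cc (μ+1+(e+2-ℓ))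
          = (∑ ℓ ∈ Finset.range (e+1), Cc (μ+1+1+ℓ) * Cc (μ+1+1+(e-ℓ)))
            + 2 * Cc (μ+1) * Cc (μ+e+3) := by
        rw [Finset.sum_range_succ]
        rw [show Finset.range (e+2) = Finset.range ((e+1)+1) from rfl,
          Finset.sum_range_succ']
        rw [show μ+1+(e+2) = μ+e+3 by omega, show μ+1+(e+2-(e+2)) = μ+1 by omega,
            show μ+1+0 = μ+1 by omega, show μ+1+(e+2-0) = μ+e+3 by omega]
        have : ∀ ℓ ∈ Finset.range (e+1), Cc (μ+1+(ℓ+1)) * Cc (μ+1+(e+2-(ℓ+1)))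
            = Cc (μ+1+1+ℓ) * Cc (μ+1+1+(e-ℓ)) := by
          intro ℓ hℓ
          simp only [Finset.mem_range] at hℓ
          rw [ccongr (show μ+1+(ℓ+1) = μ+1+1+ℓ by omega),
              ccongr (show μ+1+(e+2-(ℓ+1)) = μ+1+1+(e-ℓ) by omega)]
        rw [Finset.sum_congr rfl this]
        ring
      have hS2 : ∑ ℓ ∈ Finset.range (e+2), Cc (μ+1+ℓ) * Cc (μ+(e+2-ℓ))
          = (∑ ℓ ∈ Finset.range e, Cc (μ+1+1+ℓ) * Cc (μ+1+(e-ℓ)))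
            + 2 * Cc (μ+1) * Cc (μ+e+2) := by
        rw [show Finset.range (e+2) = Finset.range ((e+1)+1) from rfl,
          Finset.sum_range_succ, Finset.sum_range_succ']
        rw [show μ+1+(e+1) = μ+e+2 by omega, show μ+(e+2-(e+1)) = μ+1 by omega,
            show μ+1+0 = μ+1 by omega, show μ+(e+2-0) = μ+e+2 by omega]
        have : ∀ ℓ ∈ Finset.range e, Cc (μ+1+(ℓ+1)) * Cc (μ+(e+2-(ℓ+1)))
            = Cc (μ+1+1+ℓ) * Cc (μ+1+(e-ℓ)) := by
          intro ℓ hℓ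
          simp only [Finset.mem_range] at hℓ
          rw [ccongr (show μ+1+(ℓ+1) = μ+1+1+ℓ by omega),
              ccongr (show μ+(e+2-(ℓ+1)) = μ+1+(e-ℓ) by omega)]
        rw [Finset.sum_congr rfl this]
        ring
      rw [hS1, hS2]
      rw [show (μ+e+1)+1 = μ+e+2 by omega, show (μ+e+1)+2 = μ+e+3 by omega,
          cc_double μ]
      ring

noncomputable def Bq (μ ν : ℕ) : ℚ :=
  ∑ i ∈ Finset.range (μ+1), q (2*μ+1) (μ+1+i) * q (2*ν+1) (ν+2+i)
noncomputable def Btq (μ ν : ℕ) : ℚ :=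
  ∑ i ∈ Finset.range (μ+1), q (2*μ+1) (μ+1+i) * q (2*ν+1) (ν+i)
noncomputable def Eq (μ ν : ℕ) : ℚ :=
  ∑ i ∈ Finset.range (μ+1), q (2*μ+1) (μ+2+i) * q (2*ν+1) (ν+2+i)

lemma lam_eq_sub (μ ν : ℕ) : Lam μ ν = Btq μ ν - Bq μ ν := by
  unfold Lam Btq Bq
  rw [← Finset.sum_sub_distrib]
  refine Finset.sum_congr rfl fun i _ => ?_
  simp only [dd, vv]
  ring

/-- truncation of a sum whose terms vanish beyond `M` -/
lemma sum_trunc {N M : ℕ} (f : ℕ → ℚ) (h : M ≤ N) (hz : ∀ j, M ≤ j → f j = 0) :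
    ∑ j ∈ Finset.range N, f j = ∑ j ∈ Finset.range M, f j := by
  refine (Finset.sum_subset (Finset.range_subset_range.mpr h) fun x _ hx => ?_).symm
  exact hz x (by simpa using hx)

/-- Vandermonde, cast to ℚ, over a range. -/
lemma vand (a b k : ℕ) :
    q (a+b) k = ∑ j ∈ Finset.range (k+1), q a j * q b (k-j) := by
  unfold q
  rw [Nat.add_choose_eq, Finset.Nat.sum_antidiagonal_eq_sum_range_succ_mk]
  push_cast
  rfl

/-- first halving: `2*(E + P_μ P_ν) = C(2μ+2ν+2, μ+ν+1)`. -/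
lemma V1 (μ ν : ℕ) (h : μ ≤ ν) :
    2 * (Eq μ ν + q (2*μ+1) (μ+1) * q (2*ν+1) (ν+1)) = q (2*μ+2*ν+2) (μ+ν+1) := by
  have hv : q (2*μ+2*ν+2) (μ+ν+1)
      = ∑ j ∈ Finset.range ((μ+ν+1)+1), q (2*μ+1) j * q (2*ν+1) (μ+ν+1-j) := by
    rw [qcongr (show 2*μ+2*ν+2 = (2*μ+1)+(2*ν+1) by omega) (rfl : μ+ν+1 = μ+ν+1)]
    exact vand (2*μ+1) (2*ν+1) (μ+ν+1)
  rw [hv, show (μ+ν+1)+1 = (μ+1)+(ν+1) by omega, Finset.sum_range_add]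
  -- lower half
  have hlow : ∑ j ∈ Finset.range (μ+1), q (2*μ+1) j * q (2*ν+1) (μ+ν+1-j)
      = ∑ j ∈ Finset.range (μ+1), q (2*μ+1) (μ+1+j) * q (2*ν+1) (ν+1+j) := by
    rw [← Finset.sum_range_reflect]
    refine Finset.sum_congr rfl fun j hj => ?_
    simp only [Finset.mem_range] at hj
    rw [qsymm' (a := 2*μ+1) (b := μ+1-1-j) (c := μ+1+j) (by omega) (by omega),
        qcongr (rfl : 2*ν+1 = 2*ν+1) (show μ+ν+1-(μ+1-1-j) = ν+1+j by omega)]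
  -- upper half
  have hup : ∑ j ∈ Finset.range (ν+1), q (2*μ+1) (μ+1+j) * q (2*ν+1) (μ+ν+1-(μ+1+j))
      = ∑ j ∈ Finset.range (μ+1), q (2*μ+1) (μ+1+j) * q (2*ν+1) (ν+1+j) := by
    have h1 : ∀ j ∈ Finset.range (ν+1),
        q (2*μ+1) (μ+1+j) * q (2*ν+1) (μ+ν+1-(μ+1+j))
        = q (2*μ+1) (μ+1+j) * q (2*ν+1) (ν+1+j) := by
      intro j hj
      simp only [Finset.mem_range] at hj
      rw [qsymm' (a := 2*ν+1) (b := μ+ν+1-(μ+1+j)) (c := ν+1+j) (by omega) (by omega)]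
    rw [Finset.sum_congr rfl h1]
    exact sum_trunc _ (by omega) fun j hj => by
      rw [qzero (show 2*μ+1 < μ+1+j by omega)]; ring
  rw [hlow, hup]
  -- identify with Eq + PμPν
  have hEf : ∑ j ∈ Finset.range (μ+1), q (2*μ+1) (μ+1+j) * q (2*ν+1) (ν+1+j)
      = Eq μ ν + q (2*μ+1) (μ+1) * q (2*ν+1) (ν+1) := by
    rw [Finset.sum_range_succ' (fun j => q (2*μ+1) (μ+1+j) * q (2*ν+1) (ν+1+j)) μ]
    unfold Eq
    rw [Finset.sum_range_succ]
    rw [qzero (show 2*μ+1 < μ+2+μ by omega)]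
    have : ∀ j ∈ Finset.range μ, q (2*μ+1) (μ+1+(j+1)) * q (2*ν+1) (ν+1+(j+1))
        = q (2*μ+1) (μ+2+j) * q (2*ν+1) (ν+2+j) := by
      intro j _
      rw [qcongr (rfl : 2*μ+1 = 2*μ+1) (show μ+1+(j+1) = μ+2+j by omega),
          qcongr (rfl : 2*ν+1 = 2*ν+1) (show ν+1+(j+1) = ν+2+j by omega)]
    rw [Finset.sum_congr rfl this]
    rw [qcongr (rfl : 2*μ+1 = 2*μ+1) (show μ+1+(0:ℕ) = μ+1 by omega),
        qcongr (rfl : 2*ν+1 = 2*ν+1) (show ν+1+(0:ℕ) = ν+1 by omega)]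
    ring
  rw [hEf]
  ring

/-- second halving: `B + B̃ = C(2μ+2ν+2, μ+ν)`. -/
lemma V2 (μ ν : ℕ) (h : μ ≤ ν) :
    Bq μ ν + Btq μ ν = q (2*μ+2*ν+2) (μ+ν) := by
  have hv : q (2*μ+2*ν+2) (μ+ν)
      = ∑ j ∈ Finset.range ((μ+ν)+1), q (2*μ+1) j * q (2*ν+1) (μ+ν-j) := by
    rw [qcongr (show 2*μ+2*ν+2 = (2*μ+1)+(2*ν+1) by omega) (rfl : μ+ν = μ+ν)]
    exact vand (2*μ+1) (2*ν+1) (μ+ν)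
  rw [hv, show (μ+ν)+1 = (μ+1)+ν by omega, Finset.sum_range_add]
  -- lower half is B̃
  have hlow : ∑ j ∈ Finset.range (μ+1), q (2*μ+1) j * q (2*ν+1) (μ+ν-j) = Btq μ ν := by
    rw [← Finset.sum_range_reflect]
    unfold Btq
    refine Finset.sum_congr rfl fun j hj => ?_
    simp only [Finset.mem_range] at hj
    rw [qsymm' (a := 2*μ+1) (b := μ+1-1-j) (c := μ+1+j) (by omega) (by omega),
        qcongr (rfl : 2*ν+1 = 2*ν+1) (show μ+ν-(μ+1-1-j) = ν+j by omega)]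
  -- upper half is B
  have hup : ∑ j ∈ Finset.range ν, q (2*μ+1) (μ+1+j) * q (2*ν+1) (μ+ν-(μ+1+j)) = Bq μ ν := by
    have h1 : ∀ j ∈ Finset.range ν,
        q (2*μ+1) (μ+1+j) * q (2*ν+1) (μ+ν-(μ+1+j))
        = q (2*μ+1) (μ+1+j) * q (2*ν+1) (ν+2+j) := by
      intro j hj
      simp only [Finset.mem_range] at hj
      rw [qsymm' (a := 2*ν+1) (b := μ+ν-(μ+1+j)) (c := ν+2+j) (by omega) (by omega)]
    rw [Finset.sum_congr rfl h1]
    unfold Bq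
    have hz : ∀ j, μ+ν ≤ j → q (2*μ+1) (μ+1+j) * q (2*ν+1) (ν+2+j) = 0 := by
      intro j hj
      rw [qzero (show 2*ν+1 < ν+2+j by omega)]; ring
    rw [show (∑ j ∈ Finset.range ν, q (2*μ+1) (μ+1+j) * q (2*ν+1) (ν+2+j))
        = ∑ j ∈ Finset.range (μ+ν+1), q (2*μ+1) (μ+1+j) * q (2*ν+1) (ν+2+j) from
      (sum_trunc _ (by omega) fun j hj => by
        rcases Nat.lt_or_ge j ν with hlt | hge
        · exact absurd hj (by omega)
        · rw [qzero (show 2*ν+1 < ν+2+j by omega)]; ring).symm]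
    exact sum_trunc _ (by omega) fun j hj => by
      rw [qzero (show 2*μ+1 < μ+1+j by omega)]; ring
  rw [hlow, hup]
  ring

/-- Evaluation of the double sum. -/
lemma lhs_eval (μ d : ℕ) :
    ∑ j ∈ Finset.range (μ+1+1), ∑ i ∈ Finset.range (j+1),
      (i : ℚ) * (j : ℚ) * q (2*(μ+1+d)) (μ+1+d+i) * q (2*(μ+1)) (μ+1+j)
    = ((μ:ℚ)+1) * ((μ:ℚ)+(d:ℚ)+1) * (q (2*(μ+d)+1) (μ+d+1) * q (2*μ+1) (μ+1)
        - Bq μ (μ+d) + Eq μ (μ+d)) := by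
  set ν := μ + d with hν
  have hνd : μ ≤ ν := by omega
  -- canonicalize and evaluate inner sums
  have h1 : ∀ j ∈ Finset.range (μ+1+1),
      ∑ i ∈ Finset.range (j+1), (i : ℚ) * (j : ℚ) * q (2*(μ+1+d)) (μ+1+d+i) * q (2*(μ+1)) (μ+1+j)
      = (((ν:ℚ)+1) * (q (2*ν+1) (ν+1) - q (2*ν+1) (ν+1+j))) * ((j:ℚ) * q (2*μ+2) (μ+1+j)) := by
    intro j hj
    simp only [Finset.mem_range] at hj
    have hc : ∀ i : ℕ, (i : ℚ) * (j : ℚ) * q (2*(μ+1+d)) (μ+1+d+i) * q (2*(μ+1)) (μ+1+j)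
        = ((i:ℚ) * q (2*ν+2) (ν+1+i)) * ((j:ℚ) * q (2*μ+2) (μ+1+j)) := by
      intro i
      rw [qcongr (show 2*(μ+1+d) = 2*ν+2 by omega) (show μ+1+d+i = ν+1+i by omega),
          qcongr (show 2*(μ+1) = 2*μ+2 by omega) (rfl : μ+1+j = μ+1+j)]
      ring
    rw [Finset.sum_congr rfl (fun i _ => hc i), ← Finset.sum_mul,
        sumI ν j (by omega)]
  rw [Finset.sum_congr rfl h1]
  have h2 : ∀ j ∈ Finset.range (μ+1+1),
      (((ν:ℚ)+1) * (q (2*ν+1) (ν+1) - q (2*ν+1) (ν+1+j))) * ((j:ℚ) * q (2*μ+2) (μ+1+j))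
      = (((ν:ℚ)+1) * q (2*ν+1) (ν+1)) * ((j:ℚ) * q (2*μ+2) (μ+1+j))
        - ((ν:ℚ)+1) * (((j:ℚ) * q (2*μ+2) (μ+1+j)) * q (2*ν+1) (ν+1+j)) := by
    intro j _; ring
  rw [Finset.sum_congr rfl h2, Finset.sum_sub_distrib, ← Finset.mul_sum, ← Finset.mul_sum]
  -- T0
  have hT0 : ∑ j ∈ Finset.range (μ+1+1), (j:ℚ) * q (2*μ+2) (μ+1+j)
      = ((μ:ℚ)+1) * q (2*μ+1) (μ+1) := by
    have := sumI μ (μ+1) (by omega)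
    rw [this, qzero (show 2*μ+1 < μ+1+(μ+1) by omega)]
    ring
  -- U
  have hU : ∑ j ∈ Finset.range (μ+1+1), ((j:ℚ) * q (2*μ+2) (μ+1+j)) * q (2*ν+1) (ν+1+j)
      = ((μ:ℚ)+1) * (Bq μ ν - Eq μ ν) := by
    rw [Finset.sum_range_succ' (fun j => ((j:ℚ) * q (2*μ+2) (μ+1+j)) * q (2*ν+1) (ν+1+j)) (μ+1)]
    have hforall : ∀ i ∈ Finset.range (μ+1),
        (((i+1 : ℕ):ℚ) * q (2*μ+2) (μ+1+(i+1))) * q (2*ν+1) (ν+1+(i+1))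
        = ((μ:ℚ)+1) * ((q (2*μ+1) (μ+1+i) * q (2*ν+1) (ν+2+i))
            - (q (2*μ+1) (μ+2+i) * q (2*ν+1) (ν+2+i))) := by
      intro i hi
      simp only [Finset.mem_range] at hi
      have hid := id1 μ i (by omega)
      rw [qcongr (rfl : 2*μ+2 = 2*μ+2) (show μ+1+(i+1) = μ+2+i by omega),
          qcongr (rfl : 2*ν+1 = 2*ν+1) (show ν+1+(i+1) = ν+2+i by omega)]
      push_cast
      linear_combination q (2*ν+1) (ν+2+i) * hid
    rw [Finset.sum_congr rfl hforall, ← Finset.mul_sum, Finset.sum_sub_distrib]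
    unfold Bq Eq
    push_cast
    ring
  rw [hT0, hU]
  have hq1 : q (2*(μ+d)+1) (μ+d+1) = q (2*ν+1) (ν+1) := qcongr (by omega) (by omega)
  rw [hq1]
  push_cast [hν]
  ring

end KSLemma22

open KSLemma22 in
/-- Lemma 2.4 (Lemma 22) of Krattenthaler–Schneider, case `1 ≤ m ≤ n`. -/
theorem binomial_double_sum_lemma22 (m n : ℕ) (h1 : 1 ≤ m) (h : m ≤ n) :
    ∑ j ∈ Finset.range (m + 1), ∑ i ∈ Finset.range (j + 1),
      (i : ℚ) * (j : ℚ) * ((2 * n).choose (n + i) : ℚ) * ((2 * m).choose (m + j) : ℚ)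
    = ((m : ℚ) * (n : ℚ) / 2) * ((2 * n + 2 * m - 2).choose (n + m - 1) : ℚ)
      - ((m : ℚ) * (n : ℚ) / 2) * ((2 * n + 2 * m - 2).choose (n + m - 2) : ℚ)
      + ((m : ℚ) * (n : ℚ) / 8) * ∑ ℓ ∈ Finset.range (n - m + 1),
          ((2 * n - 2 * ℓ).choose (n - ℓ) : ℚ) * ((2 * m + 2 * ℓ).choose (m + ℓ) : ℚ)
      - ((m : ℚ) * (n : ℚ) / 2) * ∑ ℓ ∈ Finset.range (n - m),
          ((2 * n - 2 * ℓ - 2).choose (n - ℓ - 1) : ℚ) * ((2 * m + 2 * ℓ).choose (m + ℓ) : ℚ) := by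
  obtain ⟨μ, rfl⟩ : ∃ μ, m = μ + 1 := ⟨m - 1, by omega⟩
  obtain ⟨d, rfl⟩ : ∃ d, n = μ + 1 + d := ⟨n - (μ + 1), by omega⟩
  have hμν : μ ≤ μ + d := by omega
  have hq : ∀ a b : ℕ, ((a.choose b : ℕ) : ℚ) = q a b := fun _ _ => rfl
  simp only [hq]
  rw [lhs_eval μ d]
  -- range arguments of the two ℓ-sums
  rw [show μ + 1 + d - (μ + 1) + 1 = d + 1 by omega, show μ + 1 + d - (μ + 1) = d by omega]
  -- convert the ℓ-sums to `Cc` form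
  have hS1 : ∑ ℓ ∈ Finset.range (d+1),
      q (2*(μ+1+d) - 2*ℓ) (μ+1+d-ℓ) * q (2*(μ+1) + 2*ℓ) (μ+1+ℓ)
      = ∑ ℓ ∈ Finset.range (d+1), Cc (μ+1+ℓ) * Cc (μ+1+(d-ℓ)) := by
    refine Finset.sum_congr rfl fun ℓ hℓ => ?_
    simp only [Finset.mem_range] at hℓ
    rw [show q (2*(μ+1+d) - 2*ℓ) (μ+1+d-ℓ) = Cc (μ+1+(d-ℓ)) from
          (qcongr (show 2*(μ+1+(d-ℓ)) = 2*(μ+1+d)-2*ℓ by omega)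
            (show μ+1+(d-ℓ) = μ+1+d-ℓ by omega)).symm,
        show q (2*(μ+1) + 2*ℓ) (μ+1+ℓ) = Cc (μ+1+ℓ) from
          (qcongr (show 2*(μ+1+ℓ) = 2*(μ+1)+2*ℓ by omega) rfl).symm]
    ring
  have hS2 : ∑ ℓ ∈ Finset.range d,
      q (2*(μ+1+d) - 2*ℓ - 2) (μ+1+d-ℓ-1) * q (2*(μ+1) + 2*ℓ) (μ+1+ℓ)
      = ∑ ℓ ∈ Finset.range d, Cc (μ+1+ℓ) * Cc (μ+(d-ℓ)) := by
    refine Finset.sum_congr rfl fun ℓ hℓ => ?_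
    simp only [Finset.mem_range] at hℓ
    rw [show q (2*(μ+1+d) - 2*ℓ - 2) (μ+1+d-ℓ-1) = Cc (μ+(d-ℓ)) from
          (qcongr (show 2*(μ+(d-ℓ)) = 2*(μ+1+d)-2*ℓ-2 by omega)
            (show μ+(d-ℓ) = μ+1+d-ℓ-1 by omega)).symm,
        show q (2*(μ+1) + 2*ℓ) (μ+1+ℓ) = Cc (μ+1+ℓ) from
          (qcongr (show 2*(μ+1+ℓ) = 2*(μ+1)+2*ℓ by omega) rfl).symm]
    ring
  rw [hS1, hS2]
  -- central binomials C1, C2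
  rw [show q (2*(μ+1+d) + 2*(μ+1) - 2) (μ+1+d+(μ+1)-1) = q (2*μ+2*(μ+d)+2) (μ+(μ+d)+1) from
        qcongr (by omega) (by omega),
      show q (2*(μ+1+d) + 2*(μ+1) - 2) (μ+1+d+(μ+1)-2) = q (2*μ+2*(μ+d)+2) (μ+(μ+d)) from
        qcongr (by omega) (by omega)]
  have hV1 := V1 μ (μ+d) hμν
  have hV2 := V2 μ (μ+d) hμν
  have hkey := key d μ
  rw [lam_eq_sub] at hkey
  push_cast
  linear_combination (((μ:ℚ)+1) * ((μ:ℚ)+(d:ℚ)+1) / 2) * hV1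
    - (((μ:ℚ)+1) * ((μ:ℚ)+(d:ℚ)+1) / 2) * hV2
    + (((μ:ℚ)+1) * ((μ:ℚ)+(d:ℚ)+1) / 2) * hkey
end

section
/- Let n be a non-negative integer and let r be a real number with 0 < r < 1/2. Then (1/(2πi)) · ∮_{|z|=r} dz / (z^{n+1} (1−z)^{n+1} (1−2z)) = 4^n. -/
/-!
Put `w = z (1 - z)` and `u = 1 - 2 z`, so that `u ^ 2 = 1 - 4 w`. Summing the geometric series in
`4 w` gives the partial fraction decomposition
`1 / (w ^ (n + 1) u) = ∑_{k ≤ n} 4 ^ (n - k) u / w ^ (k + 1) + 4 ^ (n + 1) / u`.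
For `k ≥ 1` the term `u / w ^ (k + 1)` is the derivative of `-w ^ (-k) / k` and integrates to zero;
the `k = 0` term is `4 ^ n / z - 4 ^ n / (1 - z)`, and `4 ^ (n + 1) / u - 4 ^ n / (1 - z)` is
holomorphic on the disc `|z| < 1 / 2`. Only the residue `4 ^ n` of `4 ^ n / z` survives.
-/

open Complex Finset Metric Set Real

lemma one_div_pow_succ_mul_eq_sum {K : Type*} [Field K] {w u : K} (hw : w ≠ 0) (hu : u ≠ 0)
    (huw : u ^ 2 = 1 - 4 * w) (n : ℕ) :
    1 / (w ^ (n + 1) * u) =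
      ∑ k ∈ range (n + 1), 4 ^ (n - k) * (u / w ^ (k + 1)) + 4 ^ (n + 1) / u := by
  have hterm : ∀ k ∈ range (n + 1),
      4 ^ (n - k) * (u / w ^ (k + 1)) = u * (4 * w) ^ (n - k) / w ^ (n + 1) := by
    intro k hk
    rw [mul_pow, ← Nat.sub_add_cancel (Nat.lt_succ_iff.mp (mem_range.mp hk))]
    simp only [Nat.add_sub_cancel, pow_add]
    field_simp
  have hgeom := geom_sum₂_mul (1 : K) (4 * w) (n + 1)
  simp only [one_pow, one_mul, Nat.add_sub_cancel] at hgeom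
  rw [mul_pow] at hgeom
  rw [sum_congr rfl hterm, ← sum_div, ← mul_sum]
  field_simp
  linear_combination -hgeom - (∑ i ∈ range (n + 1), (4 * w) ^ (n - i)) * huw

lemma HasDerivAt.neg_inv_pow_succ_div {𝕜 : Type*} [NontriviallyNormedField 𝕜] [CharZero 𝕜]
    {w : 𝕜 → 𝕜} {w' z : 𝕜} (hw : HasDerivAt w w' z) (hz : w z ≠ 0) (m : ℕ) :
    HasDerivAt (fun y => -(w y)⁻¹ ^ (m + 1) / (m + 1)) (w' / w z ^ (m + 2)) z := by
  refine (((hw.fun_inv hz).fun_pow (m + 1)).neg.div_const _).congr_deriv ?_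
  have := Nat.cast_add_one_ne_zero (R := 𝕜) m
  push_cast
  rw [inv_pow]
  field_simp
  ring

theorem circleIntegral_eq_two_pi_I_mul_of_eqOn {f h g g' : ℂ → ℂ} {c a : ℂ} {R : ℝ} (hR : 0 < R)
    (hf : CircleIntegrable f c R) (hh : DiffContOnCl ℂ h (ball c R))
    (hg : ∀ z ∈ sphere c R, HasDerivAt g (g' z) z)
    (hfg : EqOn f (fun z => a * (z - c)⁻¹ + h z + g' z) (sphere c R)) :
    ∮ z in C(c, R), f z = 2 * π * I * a := by
  have hinv : CircleIntegrable (fun z => a * (z - c)⁻¹) c R :=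
    (continuousOn_const.mul ((continuousOn_id.sub continuousOn_const).inv₀ fun z hz =>
      sub_ne_zero.mpr (ne_of_mem_sphere hz hR.ne'))).circleIntegrable hR.le
  have hh' : CircleIntegrable h c R :=
    (hh.continuousOn_ball.mono sphere_subset_closedBall).circleIntegrable hR.le
  have hg' : ∮ z in C(c, R), (f z - a * (z - c)⁻¹ - h z) = 0 := by
    rw [circleIntegral.integral_congr hR.le (g := g') fun z hz => by simp only [hfg hz]; ring]
    exact circleIntegral.integral_eq_zero_of_hasDerivWithinAt hR.le fun z hz =>
      (hg z hz).hasDerivWithinAt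
  rw [circleIntegral.integral_sub (f := fun z => f z - a * (z - c)⁻¹) (hf.sub hinv) hh',
    circleIntegral.integral_sub hf hinv,
    hh.circleIntegral_eq_zero hR.le, circleIntegral.integral_const_mul,
    circleIntegral.integral_sub_center_inv c hR.ne'] at hg'
  linear_combination hg'

lemma one_div_pow_mul_pow_mul_eq {z : ℂ} (hz : z ≠ 0) (hz₁ : 1 - z ≠ 0) (hz₂ : 1 - 2 * z ≠ 0)
    (n : ℕ) :
    1 / (z ^ (n + 1) * (1 - z) ^ (n + 1) * (1 - 2 * z)) = 4 ^ n * z⁻¹ +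
      (4 ^ (n + 1) / (1 - 2 * z) - 4 ^ n / (1 - z)) +
      ∑ k ∈ range n, 4 ^ (n - (k + 1)) * ((1 - 2 * z) / (z * (1 - z)) ^ (k + 2)) := by
  rw [← mul_pow, one_div_pow_succ_mul_eq_sum (mul_ne_zero hz hz₁) hz₂ (by ring), sum_range_succ']
  have hlast : (4 : ℂ) ^ (n - 0) * ((1 - 2 * z) / (z * (1 - z)) ^ (0 + 1)) =
      4 ^ n * z⁻¹ - 4 ^ n / (1 - z) := by
    rw [Nat.sub_zero]
    field_simp
    ring
  rw [hlast]
  ring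

/-- Lemma 4.1 (Lemma 11) of Krattenthaler–Schneider. -/
theorem contour_integral_lemma11 (n : ℕ) (r : ℝ) (hr0 : 0 < r) (hr : r < 1 / 2) :
    (1 / (2 * (Real.pi : ℂ) * Complex.I)) *
      (∮ z in C(0, r), 1 / (z ^ (n + 1) * (1 - z) ^ (n + 1) * (1 - 2 * z)))
    = (4 : ℂ) ^ n := by
  have hball : ∀ z ∈ closedBall (0 : ℂ) r, 1 - z ≠ 0 ∧ 1 - 2 * z ≠ 0 := fun z hz => by
    have hz : ‖z‖ < 1 / 2 := (mem_closedBall_zero_iff.mp hz).trans_lt hr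
    refine ⟨(isUnit_one_sub_of_norm_lt_one (by linarith)).ne_zero,
      (isUnit_one_sub_of_norm_lt_one ?_).ne_zero⟩
    rw [norm_mul, RCLike.norm_ofNat]
    linarith
  have hsphere : ∀ z ∈ sphere (0 : ℂ) r, z ≠ 0 ∧ 1 - z ≠ 0 ∧ 1 - 2 * z ≠ 0 := fun z hz =>
    ⟨ne_zero_of_mem_sphere hr0.ne' ⟨z, hz⟩, hball z (sphere_subset_closedBall hz)⟩
  rw [circleIntegral_eq_two_pi_I_mul_of_eqOn hr0 (a := 4 ^ n)
    (h := fun z => 4 ^ (n + 1) / (1 - 2 * z) - 4 ^ n / (1 - z))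
    (g' := fun z => ∑ k ∈ range n, 4 ^ (n - (k + 1)) * ((1 - 2 * z) / (z * (1 - z)) ^ (k + 2)))
    (g := fun z => ∑ k ∈ range n, 4 ^ (n - (k + 1)) * (-(z * (1 - z))⁻¹ ^ (k + 1) / (k + 1)))
    ?_ ?_ ?_ fun z hz => by
      obtain ⟨hz, hz₁, hz₂⟩ := hsphere z hz
      simp only [sub_zero, one_div_pow_mul_pow_mul_eq hz hz₁ hz₂]]
  · field_simp [Real.pi_ne_zero, I_ne_zero]
  · refine (continuousOn_const.div (by fun_prop) fun z hz => ?_).circleIntegrable hr0.le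
    obtain ⟨hz, hz₁, hz₂⟩ := hsphere z hz
    exact mul_ne_zero (mul_ne_zero (pow_ne_zero _ hz) (pow_ne_zero _ hz₁)) hz₂
  · refine DifferentiableOn.diffContOnCl_ball (fun z hz => ?_) subset_rfl
    obtain ⟨hz₁, hz₂⟩ := hball z hz
    fun_prop (disch := assumption)
  · intro z hz
    obtain ⟨hz, hz₁, -⟩ := hsphere z hz
    have hw : HasDerivAt (fun y => y * (1 - y)) (1 - 2 * z) z :=
      ((hasDerivAt_id' z).mul ((hasDerivAt_id' z).const_sub 1)).congr_deriv (by ring)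
    exact HasDerivAt.fun_sum fun k _ =>
      (hw.neg_inv_pow_succ_div (mul_ne_zero hz hz₁) k).const_mul _
end

section
/- Let n be a non-negative integer and let r be a real number with 0 < r < 1/2. Then (1/(2πi)) · ∮_{|z|=r} dz / (z^{n+1} (1−z)^{n} (1−2z)) = 4^n/2 + (1/2)·C(2n, n). -/
/-!
Write `I(m, k)` for the integral with `z ^ (m + 1)` and `(1 - z) ^ k` in the denominator. The
partial fraction `1 / (z (1 - z)) = 1 / z + 1 / (1 - z)` gives Pascal's recurrence
`I(m + 1, k + 1) = I(m + 1, k) + I(m, k + 1)`, while `I(0, k) = 2πi` by Cauchy's formula and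
`I(m + 1, 0) = 2 I(m, 0)` because `z ^ (-(m + 2))` integrates to zero. The partial row sums
`∑_{i ≤ m} C(m + k, i)` satisfy the same recurrence, so `I(n, n) = 2πi ∑_{i ≤ n} C(2n, i)`, and by
the symmetry of the row of `C(2n, ·)` this half-row sum is `(4 ^ n + C(2n, n)) / 2`.
-/

open Complex Metric Finset Real

namespace KrattenthalerSchneider

theorem two_mul_sum_range_choose_two_mul (n : ℕ) :
    2 * ∑ i ∈ range (n + 1), (2 * n).choose i = 4 ^ n + (2 * n).choose n := by
  have reflect : ∑ i ∈ range (n + 1), (2 * n).choose i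
      = ∑ i ∈ Ico n (2 * n + 1), (2 * n).choose i := by
    calc ∑ i ∈ range (n + 1), (2 * n).choose i
        = ∑ i ∈ Ico 0 (n + 1), (2 * n).choose (2 * n - i) := by
          rw [range_eq_Ico]
          exact sum_congr rfl fun i hi => (Nat.choose_symm (by simp at hi; lia)).symm
      _ = ∑ i ∈ Ico n (2 * n + 1), (2 * n).choose i := by
          rw [sum_Ico_reflect _ 0 (by lia), Nat.sub_zero, show 2 * n + 1 - (n + 1) = n by lia]
  calc 2 * ∑ i ∈ range (n + 1), (2 * n).choose i
      = (∑ i ∈ range n, (2 * n).choose i) + ∑ i ∈ Ico n (2 * n + 1), (2 * n).choose i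
        + (2 * n).choose n := by
        rw [two_mul]
        nth_rewrite 2 [reflect]
        rw [sum_range_succ]
        ring
    _ = 4 ^ n + (2 * n).choose n := by
        rw [sum_range_add_sum_Ico _ (by lia), Nat.sum_range_choose, pow_mul]
        norm_num

theorem sum_range_choose_succ (m n : ℕ) :
    ∑ i ∈ range (m + 1), (n + 1).choose i
      = ∑ i ∈ range (m + 1), n.choose i + ∑ i ∈ range m, n.choose i := by
  rw [sum_range_succ' _ m, sum_range_succ' (fun i => n.choose i) m]
  simp only [Nat.choose_succ_succ, sum_add_distrib, Nat.choose_zero_right]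
  ring

noncomputable def integrand (m k : ℕ) (z : ℂ) : ℂ :=
  1 / (z ^ (m + 1) * (1 - z) ^ k * (1 - 2 * z))

theorem one_sub_mul_ne_zero {c z : ℂ} (hc : ‖c‖ ≤ 2) (hz : ‖z‖ < 1 / 2) : 1 - c * z ≠ 0 := by
  intro h
  have h1 : ‖c * z‖ = 1 := by rw [← sub_eq_zero.mp h, norm_one]
  rw [norm_mul] at h1
  nlinarith [norm_nonneg c, norm_nonneg z]

theorem integrand_succ_succ {m k : ℕ} {z : ℂ} (hz : z ≠ 0) (hz1 : 1 - z ≠ 0) :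
    integrand (m + 1) (k + 1) z = integrand (m + 1) k z + integrand m (k + 1) z := by
  simp only [integrand, one_div, mul_inv]
  field_simp
  ring

theorem integrand_succ_zero_sub_two_mul {m : ℕ} {z : ℂ} (hz : z ≠ 0) (hz2 : 1 - 2 * z ≠ 0) :
    integrand (m + 1) 0 z - 2 * integrand m 0 z = z ^ (-(m + 2 : ℤ)) := by
  rw [zpow_neg, show (m + 2 : ℤ) = (m + 2 : ℕ) by push_cast; ring, zpow_natCast]
  simp only [integrand]
  field_simp
  ring

section

variable {r : ℝ} (hr0 : 0 < r) (hr : r < 1 / 2)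
include hr0 hr

theorem denominators_ne_zero_of_mem_sphere {z : ℂ} (hz : z ∈ sphere (0 : ℂ) r) :
    z ≠ 0 ∧ 1 - z ≠ 0 ∧ 1 - 2 * z ≠ 0 := by
  have hz' : ‖z‖ < 1 / 2 := by rw [mem_sphere_zero_iff_norm.mp hz]; exact hr
  refine ⟨?_, ?_, one_sub_mul_ne_zero (by norm_num) hz'⟩
  · rw [← norm_pos_iff, mem_sphere_zero_iff_norm.mp hz]
    exact hr0
  · simpa using one_sub_mul_ne_zero (c := 1) (by norm_num) hz'

theorem circleIntegrable_integrand (m k : ℕ) : CircleIntegrable (integrand m k) 0 r := by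
  refine ContinuousOn.circleIntegrable hr0.le (continuousOn_const.div (by fun_prop) ?_)
  intro z hz
  obtain ⟨h0, h1, h2⟩ := denominators_ne_zero_of_mem_sphere hr0 hr hz
  exact mul_ne_zero (mul_ne_zero (pow_ne_zero _ h0) (pow_ne_zero _ h1)) h2

theorem circleIntegral_integrand_zero (k : ℕ) :
    (∮ z in C(0, r), integrand 0 k z) = 2 * π * I := by
  set g : ℂ → ℂ := fun z => ((1 - z) ^ k * (1 - 2 * z))⁻¹
  have hg : DifferentiableOn ℂ g (closedBall 0 r) := by
    refine DifferentiableOn.inv (by fun_prop) fun z hz => ?_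
    have hz' : ‖z‖ < 1 / 2 := (mem_closedBall_zero_iff.mp hz).trans_lt hr
    have h1 : 1 - z ≠ 0 := by simpa using one_sub_mul_ne_zero (c := 1) (by norm_num) hz'
    exact mul_ne_zero (pow_ne_zero _ h1) (one_sub_mul_ne_zero (by norm_num) hz')
  calc (∮ z in C(0, r), integrand 0 k z) = ∮ z in C(0, r), (z - 0)⁻¹ • g z := by
        simp only [integrand, g, sub_zero, smul_eq_mul, zero_add, pow_one, one_div, mul_inv,
          mul_assoc]
    _ = 2 * π * I := by
        rw [hg.circleIntegral_sub_inv_smul (mem_ball_self hr0)]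
        simp [g]

theorem circleIntegral_integrand_succ_zero (m : ℕ) :
    (∮ z in C(0, r), integrand (m + 1) 0 z) = 2 * ∮ z in C(0, r), integrand m 0 z := by
  have h : (∮ z in C(0, r), integrand (m + 1) 0 z - 2 * integrand m 0 z) = 0 := by
    rw [circleIntegral.integral_congr hr0.le (g := fun z => (z - 0) ^ (-(m + 2 : ℤ)))]
    · exact circleIntegral.integral_sub_zpow_of_ne (by lia) _ _ _
    · intro z hz
      obtain ⟨h0, -, h2⟩ := denominators_ne_zero_of_mem_sphere hr0 hr hz
      simpa using integrand_succ_zero_sub_two_mul h0 h2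
  have h2 : CircleIntegrable (fun z => 2 * integrand m 0 z) 0 r :=
    (circleIntegrable_integrand hr0 hr m 0).const_smul
  rwa [circleIntegral.integral_sub (circleIntegrable_integrand hr0 hr _ _) h2,
    circleIntegral.integral_const_mul, sub_eq_zero] at h

theorem circleIntegral_integrand_succ_succ (m k : ℕ) :
    (∮ z in C(0, r), integrand (m + 1) (k + 1) z)
      = (∮ z in C(0, r), integrand (m + 1) k z) + ∮ z in C(0, r), integrand m (k + 1) z := by
  rw [← circleIntegral.integral_add (circleIntegrable_integrand hr0 hr _ _)
    (circleIntegrable_integrand hr0 hr _ _)]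
  refine circleIntegral.integral_congr hr0.le fun z hz => ?_
  obtain ⟨h0, h1, -⟩ := denominators_ne_zero_of_mem_sphere hr0 hr hz
  exact integrand_succ_succ h0 h1

theorem circleIntegral_integrand (m k : ℕ) :
    (∮ z in C(0, r), integrand m k z)
      = 2 * π * I * ∑ i ∈ range (m + 1), ((m + k).choose i : ℂ) := by
  induction m generalizing k with
  | zero => simp [circleIntegral_integrand_zero hr0 hr]
  | succ m ihm =>
    induction k with
    | zero =>
      rw [circleIntegral_integrand_succ_zero hr0 hr, ihm 0]
      simp only [add_zero, ← Nat.cast_sum, Nat.sum_range_choose]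
      push_cast
      ring
    | succ k ihk =>
      rw [circleIntegral_integrand_succ_succ hr0 hr, ihk, ihm (k + 1), ← mul_add]
      rw [show m + (k + 1) = m + 1 + k by ring]
      congr 1
      exact_mod_cast (sum_range_choose_succ (m + 1) (m + 1 + k)).symm

end

end KrattenthalerSchneider

open KrattenthalerSchneider

/-- Lemma 4.2 (Lemma 15) of Krattenthaler–Schneider. -/
theorem contour_integral_lemma15 (n : ℕ) (r : ℝ) (hr0 : 0 < r) (hr : r < 1 / 2) :
    (1 / (2 * (Real.pi : ℂ) * Complex.I)) *
      (∮ z in C(0, r), 1 / (z ^ (n + 1) * (1 - z) ^ n * (1 - 2 * z)))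
    = (4 : ℂ) ^ n / 2 + (1 / 2 : ℂ) * ((2 * n).choose n : ℂ) := by
  have integral : (∮ z in C(0, r), 1 / (z ^ (n + 1) * (1 - z) ^ n * (1 - 2 * z)))
      = 2 * π * I * ∑ i ∈ range (n + 1), ((n + n).choose i : ℂ) :=
    circleIntegral_integrand hr0 hr n n
  have half_row : 2 * ∑ i ∈ range (n + 1), ((2 * n).choose i : ℂ) = 4 ^ n + (2 * n).choose n := by
    exact_mod_cast two_mul_sum_range_choose_two_mul n
  rw [integral, ← two_mul]
  field_simp [two_pi_I_ne_zero]
  linear_combination half_row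
end

section
/- Let n and k be non-negative integers and let c₀, …, c_k be rational numbers such that for every integer j one has j^{2k} = ∑_{b=0}^{k} c_b · ∏_{r=0}^{b−1} ((n−r)² − j²). Then, as an identity of rational numbers, ∑_{j=1}^{n} j^{2k} · C(2n, n+j) = −(δ/2)·C(2n, n) + 4^n · ∑_{b=0}^{k} c_b · (2n−2b+1)_{2b} · 4^{−b}/2, where δ = 1 if k = 0 and δ = 0 if k > 0. -/
open Finset

lemma ascPoch_prod (m : ℕ) (x : ℚ) :
    (ascPochhammer ℚ m).eval x = ∏ i ∈ range m, (x + i) := by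
  induction m with
  | zero => simp
  | succ m ih => rw [ascPochhammer_succ_eval, prod_range_succ, ih]

lemma df_prod (x b : ℕ) (h : b ≤ x) :
    (x.descFactorial b : ℚ) = ∏ r ∈ range b, ((x : ℚ) - r) := by
  rw [Nat.descFactorial_eq_prod_range, Nat.cast_prod]
  exact Finset.prod_congr rfl fun r hr =>
    Nat.cast_sub ((Finset.mem_range.mp hr).le.trans h)

lemma nat_key (n b i : ℕ) (hbn : b ≤ n) (hbi : b ≤ i) (hi : i ≤ 2 * n - b) :
    (2 * n - i).descFactorial b * i.descFactorial b * (2 * n).choose i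
      = (2 * n).descFactorial (2 * b) * (2 * n - 2 * b).choose (i - b) := by
  have hi2 : i ≤ 2 * n := by omega
  apply Nat.eq_of_mul_eq_mul_right (show 0 < (i - b).factorial * (2 * n - b - i).factorial by
    positivity)
  have e1 : (i - b).factorial * i.descFactorial b = i.factorial :=
    Nat.factorial_mul_descFactorial hbi
  have e2 : (2 * n - i - b).factorial * (2 * n - i).descFactorial b = (2 * n - i).factorial :=
    Nat.factorial_mul_descFactorial (by omega)
  have e3 : (2 * n - 2 * b).factorial * (2 * n).descFactorial (2 * b) = (2 * n).factorial := by
    have := Nat.factorial_mul_descFactorial (n := 2 * n) (k := 2 * b) (by omega)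
    rwa [show 2 * n - 2 * b = 2 * n - 2 * b from rfl] at this
  have e4 : (2 * n - 2 * b).choose (i - b) * (i - b).factorial
      * (2 * n - 2 * b - (i - b)).factorial = (2 * n - 2 * b).factorial :=
    Nat.choose_mul_factorial_mul_factorial (by omega)
  have e5 : (2 * n).choose i * i.factorial * (2 * n - i).factorial = (2 * n).factorial :=
    Nat.choose_mul_factorial_mul_factorial hi2
  calc (2 * n - i).descFactorial b * i.descFactorial b * (2 * n).choose i
        * ((i - b).factorial * (2 * n - b - i).factorial)
      = ((i - b).factorial * i.descFactorial b)
        * ((2 * n - i - b).factorial * (2 * n - i).descFactorial b) * (2 * n).choose i := by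
        rw [show 2 * n - b - i = 2 * n - i - b from by omega]; ring
    _ = (2 * n).choose i * i.factorial * (2 * n - i).factorial := by rw [e1, e2]; ring
    _ = (2 * n).factorial := e5
    _ = (2 * n - 2 * b).factorial * (2 * n).descFactorial (2 * b) := e3.symm
    _ = ((2 * n - 2 * b).choose (i - b) * (i - b).factorial
          * (2 * n - 2 * b - (i - b)).factorial) * (2 * n).descFactorial (2 * b) := by rw [e4]
    _ = (2 * n).descFactorial (2 * b) * (2 * n - 2 * b).choose (i - b)
        * ((i - b).factorial * (2 * n - b - i).factorial) := by
        rw [show 2 * n - 2 * b - (i - b) = 2 * n - b - i from by omega]; ring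

lemma pointwise (n b i : ℕ) (hbn : b ≤ n) (hbi : b ≤ i) (hi : i ≤ 2 * n - b) :
    (∏ r ∈ range b, (((n : ℚ) - r) ^ 2 - ((i : ℚ) - n) ^ 2)) * ((2 * n).choose i : ℚ)
      = ((2 * n).descFactorial (2 * b) : ℚ) * ((2 * n - 2 * b).choose (i - b) : ℚ) := by
  have hi2 : i ≤ 2 * n := by omega
  have hp : ∏ r ∈ range b, (((n : ℚ) - r) ^ 2 - ((i : ℚ) - n) ^ 2)
      = (((2 * n - i).descFactorial b : ℚ)) * ((i.descFactorial b : ℚ)) := by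
    rw [df_prod _ _ (by omega), df_prod _ _ hbi, ← prod_mul_distrib]
    refine Finset.prod_congr rfl fun r hr => ?_
    rw [Nat.cast_sub hi2]
    push_cast
    ring
  rw [hp]
  rw [← Nat.cast_mul, ← Nat.cast_mul, nat_key n b i hbn hbi hi, Nat.cast_mul]

lemma prod_zero_low (n b i : ℕ) (hib : i < b) :
    (∏ r ∈ range b, (((n : ℚ) - r) ^ 2 - ((i : ℚ) - n) ^ 2)) = 0 := by
  apply Finset.prod_eq_zero (Finset.mem_range.mpr hib)
  ring

lemma prod_zero_high (n b i : ℕ) (hi2 : i ≤ 2 * n) (hib : 2 * n - i < b) :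
    (∏ r ∈ range b, (((n : ℚ) - r) ^ 2 - ((i : ℚ) - n) ^ 2)) = 0 := by
  apply Finset.prod_eq_zero (Finset.mem_range.mpr hib)
  rw [Nat.cast_sub hi2]
  push_cast
  ring

lemma Asum (n b : ℕ) :
    ∑ i ∈ range (2 * n + 1),
      (∏ r ∈ range b, (((n : ℚ) - r) ^ 2 - ((i : ℚ) - n) ^ 2)) * ((2 * n).choose i : ℚ)
    = ((2 * n).descFactorial (2 * b) : ℚ) * 2 ^ (2 * n - 2 * b) := by
  by_cases hbn : b ≤ n
  · rw [← Finset.sum_subset (show Finset.Icc b (2 * n - b) ⊆ range (2 * n + 1) by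
      intro i hi; simp only [Finset.mem_Icc] at hi; simp only [Finset.mem_range]; omega)]
    · rw [Finset.sum_congr rfl (fun i hi => by
        simp only [Finset.mem_Icc] at hi
        exact pointwise n b i hbn hi.1 hi.2), ← Finset.mul_sum]
      congr 1
      rw [show Finset.Icc b (2 * n - b) = Finset.Icc (b + 0) (b + (2 * n - 2 * b)) by
            rw [Nat.add_zero, show b + (2 * n - 2 * b) = 2 * n - b from by omega],
          ← Finset.map_add_left_Icc, Finset.sum_map]
      simp only [addLeftEmbedding_apply, Nat.add_sub_cancel_left]
      rw [show Finset.Icc 0 (2 * n - 2 * b) = range (2 * n - 2 * b + 1) by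
          rw [← Nat.Ico_zero_eq_range, Finset.Ico_add_one_right_eq_Icc]]
      rw [← Nat.cast_sum, Nat.sum_range_choose]
      push_cast
      ring
    · intro i hi hni
      simp only [Finset.mem_range] at hi
      simp only [Finset.mem_Icc, not_and_or, not_le] at hni
      rcases hni with h | h
      · rw [prod_zero_low n b i h, zero_mul]
      · rw [prod_zero_high n b i (by omega) (by omega), zero_mul]
  · push_neg at hbn
    rw [Nat.descFactorial_eq_zero_iff_lt.mpr (by omega), Nat.cast_zero, zero_mul]
    apply Finset.sum_eq_zero
    intro i hi
    simp only [Finset.mem_range] at hi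
    by_cases hin : i ≤ n
    · rw [prod_zero_low n b i (by omega), zero_mul]
    · rw [prod_zero_high n b i (by omega) (by omega), zero_mul]

/-- Lemma 5.2, Eq. (5.4) of Krattenthaler–Schneider. -/
theorem single_sum_even_power (n k : ℕ) (c : ℕ → ℚ)
    (hc : ∀ j : ℤ, (j : ℚ) ^ (2 * k)
      = ∑ b ∈ Finset.range (k + 1), c b *
          ∏ r ∈ Finset.range b, (((n : ℚ) - (r : ℚ)) ^ 2 - (j : ℚ) ^ 2)) :
    ∑ j ∈ Finset.Icc 1 n, (j : ℚ) ^ (2 * k) * ((2 * n).choose (n + j) : ℚ)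
    = -((if k = 0 then (1 : ℚ) else 0) / 2) * ((2 * n).choose n : ℚ)
      + 4 ^ n * ∑ b ∈ Finset.range (k + 1),
          c b * (ascPochhammer ℚ (2 * b)).eval (2 * (n : ℚ) - 2 * (b : ℚ) + 1)
            / 4 ^ b / 2 := by
  set f : ℕ → ℚ := fun i => ((i : ℚ) - n) ^ (2 * k) * ((2 * n).choose i : ℚ) with hf
  set S : ℚ := ∑ j ∈ Finset.Icc 1 n, (j : ℚ) ^ (2 * k) * ((2 * n).choose (n + j) : ℚ) with hS
  -- Step 1: symmetry
  have hfsym : ∀ j ∈ Finset.Icc 1 n, f (n - j) = (j : ℚ) ^ (2 * k) * ((2 * n).choose (n + j) : ℚ) := by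
    intro j hj
    simp only [Finset.mem_Icc] at hj
    have hcast : ((n - j : ℕ) : ℚ) = (n : ℚ) - j := Nat.cast_sub hj.2
    have hch : (2 * n).choose (n - j) = (2 * n).choose (n + j) := by
      rw [show n - j = 2 * n - (n + j) from by omega]
      exact Nat.choose_symm (by omega)
    rw [hf]
    simp only [hcast, hch]
    rw [show (n : ℚ) - j - n = -(j : ℚ) by ring, Even.neg_pow (even_two_mul k)]
  have hfadd : ∀ j ∈ Finset.Icc 1 n, f (n + j) = (j : ℚ) ^ (2 * k) * ((2 * n).choose (n + j) : ℚ) := by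
    intro j hj
    rw [hf]
    push_cast
    ring_nf
  have hfn : f n = (if k = 0 then (1 : ℚ) else 0) * ((2 * n).choose n : ℚ) := by
    rw [hf]
    simp only [sub_self]
    by_cases hk : k = 0
    · simp [hk]
    · rw [zero_pow (by omega), if_neg hk, zero_mul]
  have hT2 : ∑ i ∈ range (2 * n + 1), f i
      = (if k = 0 then (1 : ℚ) else 0) * ((2 * n).choose n : ℚ) + 2 * S := by
    rw [range_eq_Ico, ← Finset.sum_Ico_consecutive f (show 0 ≤ n + 1 by omega)
      (show n + 1 ≤ 2 * n + 1 by omega)]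
    have h1 : ∑ i ∈ Finset.Ico 0 (n + 1), f i = S + f n := by
      rw [← range_eq_Ico, Finset.sum_range_succ]
      congr 1
      rw [hS, Finset.sum_congr rfl fun j hj => (hfsym j hj).symm,
        ← Finset.Ico_add_one_right_eq_Icc, Finset.sum_Ico_eq_sum_range]
      refine (Finset.sum_range_reflect f n).symm.trans ?_
      exact Finset.sum_congr rfl fun i _ => by rw [Nat.sub_sub]
    have h2 : ∑ i ∈ Finset.Ico (n + 1) (2 * n + 1), f i = S := by
      rw [Finset.Ico_add_one_right_eq_Icc, show (2 * n : ℕ) = n + n from by omega,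
        ← Finset.map_add_left_Icc 1 n n, Finset.sum_map]
      rw [hS]
      refine Finset.sum_congr rfl fun j hj => ?_
      rw [addLeftEmbedding_apply]
      exact hfadd j hj
    rw [h1, h2, hfn]
    ring
  -- Step 2: expand via hc and Asum
  have hT1 : ∑ i ∈ range (2 * n + 1), f i
      = ∑ b ∈ range (k + 1), c b * (((2 * n).descFactorial (2 * b) : ℚ) * 2 ^ (2 * n - 2 * b)) := by
    have hci : ∀ i : ℕ, ((i : ℚ) - n) ^ (2 * k)
        = ∑ b ∈ range (k + 1), c b *
            ∏ r ∈ range b, (((n : ℚ) - r) ^ 2 - ((i : ℚ) - n) ^ 2) := by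
      intro i
      have := hc ((i : ℤ) - (n : ℤ))
      push_cast at this
      exact this
    calc ∑ i ∈ range (2 * n + 1), f i
        = ∑ i ∈ range (2 * n + 1), ∑ b ∈ range (k + 1),
            c b * ((∏ r ∈ range b, (((n : ℚ) - r) ^ 2 - ((i : ℚ) - n) ^ 2))
              * ((2 * n).choose i : ℚ)) := by
          refine Finset.sum_congr rfl fun i _ => ?_
          rw [hf]
          simp only
          rw [hci i, Finset.sum_mul]
          exact Finset.sum_congr rfl fun b _ => by ring
      _ = ∑ b ∈ range (k + 1), c b *
            ∑ i ∈ range (2 * n + 1),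
              (∏ r ∈ range b, (((n : ℚ) - r) ^ 2 - ((i : ℚ) - n) ^ 2))
                * ((2 * n).choose i : ℚ) := by
          rw [Finset.sum_comm]
          exact Finset.sum_congr rfl fun b _ => by rw [Finset.mul_sum]
      _ = _ := Finset.sum_congr rfl fun b _ => by rw [Asum]
  -- Step 3: identify the RHS summands
  have hterm : ∀ b ∈ range (k + 1),
      4 ^ n * (c b * (ascPochhammer ℚ (2 * b)).eval (2 * (n : ℚ) - 2 * (b : ℚ) + 1)
          / 4 ^ b / 2)
      = c b * (((2 * n).descFactorial (2 * b) : ℚ) * 2 ^ (2 * n - 2 * b)) / 2 := by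
    intro b _
    by_cases hbn : b ≤ n
    · have hev : (ascPochhammer ℚ (2 * b)).eval (2 * (n : ℚ) - 2 * (b : ℚ) + 1)
          = ((2 * n).descFactorial (2 * b) : ℚ) := by
        rw [show (2 * (n : ℚ) - 2 * (b : ℚ) + 1) = ((2 * n - 2 * b + 1 : ℕ) : ℚ) by
          rw [Nat.cast_add, Nat.cast_sub (by omega : 2 * b ≤ 2 * n)]; push_cast; ring]
        rw [← ascPochhammer_eval_cast, ascPochhammer_nat_eq_descFactorial,
          show 2 * n - 2 * b + 1 + 2 * b - 1 = 2 * n from by omega]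
      rw [hev]
      have h4 : (4 : ℚ) ^ n = 2 ^ (2 * n - 2 * b) * 4 ^ b := by
        rw [show (4 : ℚ) = 2 ^ 2 from by norm_num, ← pow_mul, ← pow_mul, ← pow_add]
        congr 1
        omega
      rw [h4]
      have : (4 : ℚ) ^ b ≠ 0 := by positivity
      field_simp
    · push_neg at hbn
      have hev : (ascPochhammer ℚ (2 * b)).eval (2 * (n : ℚ) - 2 * (b : ℚ) + 1) = 0 := by
        rw [ascPoch_prod]
        apply Finset.prod_eq_zero (Finset.mem_range.mpr (show 2 * b - 1 - 2 * n < 2 * b from by omega))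
        rw [Nat.cast_sub (by omega : 2 * n ≤ 2 * b - 1), Nat.cast_sub (by omega : 1 ≤ 2 * b)]
        push_cast
        ring
      rw [hev, Nat.descFactorial_eq_zero_iff_lt.mpr (by omega), Nat.cast_zero]
      ring
  -- Final assembly
  have hsum : 4 ^ n * ∑ b ∈ range (k + 1),
      c b * (ascPochhammer ℚ (2 * b)).eval (2 * (n : ℚ) - 2 * (b : ℚ) + 1) / 4 ^ b / 2
      = (∑ i ∈ range (2 * n + 1), f i) / 2 := by
    rw [Finset.mul_sum, Finset.sum_congr rfl hterm, hT1, Finset.sum_div]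
  rw [hsum, hT2]
  ring
end

section
/- Let n and k be non-negative integers and let c₀, …, c_k be rational numbers such that for every integer j one has j^{2k} = ∑_{b=0}^{k} c_b · ∏_{r=0}^{b−1} ((n−r)² − j²). Then, as an identity of rational numbers, ∑_{j=1}^{n} j^{2k+1} · C(2n, n+j) = (1/2)·C(2n, n) · ∑_{b=0}^{k} c_b · (n−b)_{b+1} · (n−b+1)_{b}. -/
open Finset

/-- ascPochhammer as a product. -/
lemma ascP_prod (k : ℕ) (x : ℚ) :
    (ascPochhammer ℚ k).eval x = ∏ i ∈ Finset.range k, (x + i) := by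
  induction k with
  | zero => simp
  | succ k ih => rw [ascPochhammer_succ_eval, ih, Finset.prod_range_succ]

/-- Telescoping sum: `∑ j j C(2m, m+j) = (m/2) C(2m,m)`. -/
lemma sumB (m : ℕ) :
    ∑ j ∈ Finset.Icc 1 m, (j : ℚ) * ((2 * m).choose (m + j) : ℚ)
      = (m : ℚ) / 2 * ((2 * m).choose m : ℚ) := by
  obtain rfl | ⟨m', rfl⟩ : m = 0 ∨ ∃ m', m = m' + 1 := by
    rcases m with _ | m'
    · exact Or.inl rfl
    · exact Or.inr ⟨m', rfl⟩
  · simp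
  have hIco : Finset.Icc 1 (m' + 1) = Finset.Ico 1 (m' + 1 + 1) := by
    ext x; simp [Nat.lt_succ_iff]
  rw [hIco, Finset.sum_Ico_eq_sum_range]
  simp only [Nat.add_sub_cancel]
  have key : ∀ i : ℕ,
      ((1 + i : ℕ) : ℚ) * ((2 * (m' + 1)).choose (m' + 1 + (1 + i)) : ℚ)
        = (fun t : ℕ => ((m' : ℚ) + 1) * ((2 * m' + 1).choose (m' + 1 + t) : ℚ)) i
          - (fun t : ℕ => ((m' : ℚ) + 1) * ((2 * m' + 1).choose (m' + 1 + t) : ℚ)) (i + 1) := by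
    intro i
    have e1 := Nat.add_one_mul_choose_eq (2 * m' + 1) (m' + 1 + i)
    have e2 := Nat.choose_succ_succ (2 * m' + 1) (m' + 1 + i)
    have i1 : m' + 1 + (1 + i) = (m' + 1 + i) + 1 := by omega
    have i4 : 2 * (m' + 1) = (2 * m' + 1) + 1 := by omega
    simp only
    rw [i1, i4]
    have e1q : ((2 * m' + 1 + 1 : ℕ) : ℚ) * ((2 * m' + 1).choose (m' + 1 + i) : ℚ)
        = (((2 * m' + 1) + 1).choose ((m' + 1 + i) + 1) : ℚ) * ((m' + 1 + i + 1 : ℕ) : ℚ) := by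
      exact_mod_cast congrArg (fun t : ℕ => (t : ℚ)) e1
    have e2q : ((((2 * m' + 1) + 1)).choose ((m' + 1 + i) + 1) : ℚ)
        = ((2 * m' + 1).choose (m' + 1 + i) : ℚ) + ((2 * m' + 1).choose ((m' + 1 + i) + 1) : ℚ) := by
      exact_mod_cast congrArg (fun t : ℕ => (t : ℚ)) e2
    have hidx : m' + 1 + (i + 1) = (m' + 1 + i) + 1 := by omega
    rw [hidx]
    push_cast at e1q e2q ⊢
    linear_combination (-1 : ℚ) * e1q + (-(m' : ℚ) - 1) * e2q
  rw [Finset.sum_congr rfl (fun i _ => key i), Finset.sum_range_sub']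
  have hz : (2 * m' + 1).choose (m' + 1 + (m' + 1)) = 0 :=
    Nat.choose_eq_zero_of_lt (by omega)
  rw [hz]
  have hdouble : (2 * (m' + 1)).choose (m' + 1) = 2 * ((2 * m' + 1).choose (m' + 1 + 0)) := by
    have h2m : 2 * (m' + 1) = (2 * m' + 1) + 1 := by omega
    have e2 := Nat.choose_succ_succ (2 * m' + 1) m'
    have hsymm : (2 * m' + 1).choose m' = (2 * m' + 1).choose (m' + 1) := by
      have h := Nat.choose_symm (show m' + 1 ≤ 2 * m' + 1 by omega)
      have hsub : 2 * m' + 1 - (m' + 1) = m' := by omega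
      rw [hsub] at h
      exact h
    rw [h2m, e2, hsymm]
    simp only [Nat.succ_eq_add_one, Nat.add_zero] at *
    omega
  rw [hdouble]
  push_cast
  ring

/-- Per-term product identity. -/
lemma prodC (i b j : ℕ) :
    ((2 * (j + i + b)).choose (j + i + b + j) : ℚ) *
        ∏ r ∈ Finset.range b, ((((j + i + b : ℕ) : ℚ) - (r : ℚ)) ^ 2 - (j : ℚ) ^ 2)
      = ((2 * (j + i + b)).descFactorial (2 * b) : ℚ) * ((2 * (j + i)).choose (j + i + j) : ℚ) := by
  have hprod : ∏ r ∈ Finset.range b, ((((j + i + b : ℕ) : ℚ) - (r : ℚ)) ^ 2 - (j : ℚ) ^ 2)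
      = (((j + i + b + j).descFactorial b : ℕ) : ℚ) * (((i + b).descFactorial b : ℕ) : ℚ) := by
    rw [Nat.descFactorial_eq_prod_range, Nat.descFactorial_eq_prod_range]
    push_cast
    rw [← Finset.prod_mul_distrib]
    refine Finset.prod_congr rfl ?_
    intro r hr
    rw [Finset.mem_range] at hr
    rw [Nat.cast_sub (by omega : r ≤ j + i + b + j), Nat.cast_sub (by omega : r ≤ i + b)]
    push_cast
    ring
  rw [hprod]
  have hFG : (((2 * j + i).factorial : ℕ) : ℚ) * (((i).factorial : ℕ) : ℚ) ≠ 0 := by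
    positivity
  apply mul_right_cancel₀ hFG
  -- nat facts
  have h1n : (2 * j + i).factorial * (j + i + b + j).descFactorial b
      = (j + i + b + j).factorial := by
    have h := Nat.factorial_mul_descFactorial (show b ≤ j + i + b + j by omega)
    have e : j + i + b + j - b = 2 * j + i := by omega
    rwa [e] at h
  have h2n : (i).factorial * (i + b).descFactorial b = (i + b).factorial := by
    have h := Nat.factorial_mul_descFactorial (show b ≤ i + b by omega)
    have e : i + b - b = i := by omega
    rwa [e] at h
  have h3n : (2 * (j + i + b)).choose (j + i + b + j) * (j + i + b + j).factorial
        * (i + b).factorial = (2 * (j + i + b)).factorial := by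
    have h := Nat.choose_mul_factorial_mul_factorial
      (show j + i + b + j ≤ 2 * (j + i + b) by omega)
    have e : 2 * (j + i + b) - (j + i + b + j) = i + b := by omega
    rwa [e] at h
  have h4n : (2 * (j + i)).factorial * (2 * (j + i + b)).descFactorial (2 * b)
      = (2 * (j + i + b)).factorial := by
    have h := Nat.factorial_mul_descFactorial (show 2 * b ≤ 2 * (j + i + b) by omega)
    have e : 2 * (j + i + b) - 2 * b = 2 * (j + i) := by omega
    rwa [e] at h
  have h5n : (2 * (j + i)).choose (j + i + j) * (2 * j + i).factorial * (i).factorial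
      = (2 * (j + i)).factorial := by
    have h := Nat.choose_mul_factorial_mul_factorial
      (show j + i + j ≤ 2 * (j + i) by omega)
    have e1 : 2 * (j + i) - (j + i + j) = i := by omega
    have e2 : (j + i + j).factorial = (2 * j + i).factorial := by
      congr 1; omega
    rwa [e1, e2] at h
  have h1 : ((2 * j + i).factorial : ℚ) * ((j + i + b + j).descFactorial b : ℚ)
      = ((j + i + b + j).factorial : ℚ) := by exact_mod_cast congrArg (fun t : ℕ => (t : ℚ)) h1n
  have h2 : ((i).factorial : ℚ) * ((i + b).descFactorial b : ℚ)
      = ((i + b).factorial : ℚ) := by exact_mod_cast congrArg (fun t : ℕ => (t : ℚ)) h2n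
  have h3 : ((2 * (j + i + b)).choose (j + i + b + j) : ℚ) * ((j + i + b + j).factorial : ℚ)
        * ((i + b).factorial : ℚ)
      = ((2 * (j + i + b)).factorial : ℚ) := by exact_mod_cast congrArg (fun t : ℕ => (t : ℚ)) h3n
  have h4 : ((2 * (j + i)).factorial : ℚ) * ((2 * (j + i + b)).descFactorial (2 * b) : ℚ)
      = ((2 * (j + i + b)).factorial : ℚ) := by
    exact_mod_cast congrArg (fun t : ℕ => (t : ℚ)) h4n
  have h5 : ((2 * (j + i)).choose (j + i + j) : ℚ) * ((2 * j + i).factorial : ℚ)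
        * ((i).factorial : ℚ)
      = ((2 * (j + i)).factorial : ℚ) := by exact_mod_cast congrArg (fun t : ℕ => (t : ℚ)) h5n
  linear_combination
    (((2 * (j + i + b)).choose (j + i + b + j) : ℚ) * ((i + b).descFactorial b : ℚ)
        * ((i).factorial : ℚ)) * h1
    + (((2 * (j + i + b)).choose (j + i + b + j) : ℚ) * ((j + i + b + j).factorial : ℚ)) * h2
    + h3 - h4 - ((2 * (j + i + b)).descFactorial (2 * b) : ℚ) * h5

/-- The closed form constant identity. -/
lemma constId (m b : ℕ) :
    ((2 * (m + b)).descFactorial (2 * b) : ℚ) * ((m : ℚ) / 2 * ((2 * m).choose m : ℚ))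
      = (1 / 2 : ℚ) * ((2 * (m + b)).choose (m + b) : ℚ) * (m.ascFactorial (b + 1) : ℚ)
          * ((m + 1).ascFactorial b : ℚ) := by
  obtain rfl | ⟨m', rfl⟩ : m = 0 ∨ ∃ m', m = m' + 1 := by
    rcases m with _ | m'
    · exact Or.inl rfl
    · exact Or.inr ⟨m', rfl⟩
  · rw [Nat.zero_ascFactorial b]
    push_cast
    ring
  have hne : ((m'.factorial : ℕ) : ℚ) * (((m' + 1).factorial : ℕ) : ℚ) ≠ 0 := by positivity
  apply mul_right_cancel₀ hne
  have f1n : m'.factorial * (m' + 1).ascFactorial (b + 1) = (m' + 1 + b).factorial := by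
    have h := Nat.factorial_mul_ascFactorial m' (b + 1)
    have e : m' + (b + 1) = m' + 1 + b := by omega
    rwa [e] at h
  have f2n : (m' + 1).factorial * (m' + 1 + 1).ascFactorial b = (m' + 1 + b).factorial := by
    exact Nat.factorial_mul_ascFactorial (m' + 1) b
  have f3n : (2 * (m' + 1 + b)).choose (m' + 1 + b) * (m' + 1 + b).factorial
        * (m' + 1 + b).factorial = (2 * (m' + 1 + b)).factorial := by
    have h := Nat.choose_mul_factorial_mul_factorial
      (show m' + 1 + b ≤ 2 * (m' + 1 + b) by omega)
    have e : 2 * (m' + 1 + b) - (m' + 1 + b) = m' + 1 + b := by omega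
    rwa [e] at h
  have f4n : (2 * (m' + 1)).factorial * (2 * (m' + 1 + b)).descFactorial (2 * b)
      = (2 * (m' + 1 + b)).factorial := by
    have h := Nat.factorial_mul_descFactorial (show 2 * b ≤ 2 * (m' + 1 + b) by omega)
    have e : 2 * (m' + 1 + b) - 2 * b = 2 * (m' + 1) := by omega
    rwa [e] at h
  have f5n : (2 * (m' + 1)).choose (m' + 1) * (m' + 1).factorial * (m' + 1).factorial
      = (2 * (m' + 1)).factorial := by
    have h := Nat.choose_mul_factorial_mul_factorial (show m' + 1 ≤ 2 * (m' + 1) by omega)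
    have e : 2 * (m' + 1) - (m' + 1) = m' + 1 := by omega
    rwa [e] at h
  have f6n : (m' + 1).factorial = (m' + 1) * m'.factorial := Nat.factorial_succ m'
  have f1 : ((m'.factorial : ℕ) : ℚ) * (((m' + 1).ascFactorial (b + 1) : ℕ) : ℚ)
      = (((m' + 1 + b).factorial : ℕ) : ℚ) := by exact_mod_cast congrArg (fun t : ℕ => (t : ℚ)) f1n
  have f2 : (((m' + 1).factorial : ℕ) : ℚ) * (((m' + 1 + 1).ascFactorial b : ℕ) : ℚ)
      = (((m' + 1 + b).factorial : ℕ) : ℚ) := by exact_mod_cast congrArg (fun t : ℕ => (t : ℚ)) f2n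
  have f3 : (((2 * (m' + 1 + b)).choose (m' + 1 + b) : ℕ) : ℚ)
        * (((m' + 1 + b).factorial : ℕ) : ℚ) * (((m' + 1 + b).factorial : ℕ) : ℚ)
      = (((2 * (m' + 1 + b)).factorial : ℕ) : ℚ) := by
    exact_mod_cast congrArg (fun t : ℕ => (t : ℚ)) f3n
  have f4 : (((2 * (m' + 1)).factorial : ℕ) : ℚ)
        * (((2 * (m' + 1 + b)).descFactorial (2 * b) : ℕ) : ℚ)
      = (((2 * (m' + 1 + b)).factorial : ℕ) : ℚ) := by
    exact_mod_cast congrArg (fun t : ℕ => (t : ℚ)) f4n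
  have f5 : (((2 * (m' + 1)).choose (m' + 1) : ℕ) : ℚ) * (((m' + 1).factorial : ℕ) : ℚ)
        * (((m' + 1).factorial : ℕ) : ℚ)
      = (((2 * (m' + 1)).factorial : ℕ) : ℚ) := by
    exact_mod_cast congrArg (fun t : ℕ => (t : ℚ)) f5n
  have f6 : (((m' + 1).factorial : ℕ) : ℚ) = ((m' : ℚ) + 1) * ((m'.factorial : ℕ) : ℚ) := by
    exact_mod_cast congrArg (fun t : ℕ => (t : ℚ)) f6n
  have hm : ((m' + 1 : ℕ) : ℚ) = (m' : ℚ) + 1 := by push_cast; ring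
  rw [hm]
  linear_combination
    ((-1 : ℚ) / 2 * ((2 * (m' + 1 + b)).descFactorial (2 * b) : ℚ)
        * ((2 * (m' + 1)).choose (m' + 1) : ℚ) * (((m' + 1).factorial : ℕ) : ℚ)) * f6
    + ((1 : ℚ) / 2 * ((2 * (m' + 1 + b)).descFactorial (2 * b) : ℚ)) * f5
    + (1 / 2 : ℚ) * f4
    - (1 / 2 : ℚ) * f3
    - ((1 / 2 : ℚ) * (((2 * (m' + 1 + b)).choose (m' + 1 + b) : ℕ) : ℚ)
        * (((m' + 1 + 1).ascFactorial b : ℕ) : ℚ) * (((m' + 1).factorial : ℕ) : ℚ)) * f1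
    - ((1 / 2 : ℚ) * (((2 * (m' + 1 + b)).choose (m' + 1 + b) : ℕ) : ℚ)
        * (((m' + 1 + b).factorial : ℕ) : ℚ)) * f2

/-- Single-sum evaluation for one `b`. -/
lemma sumA (n b : ℕ) :
    ∑ j ∈ Finset.Icc 1 n, (j : ℚ) * ((2 * n).choose (n + j) : ℚ) *
        ∏ r ∈ Finset.range b, (((n : ℚ) - (r : ℚ)) ^ 2 - (j : ℚ) ^ 2)
      = (1 / 2 : ℚ) * ((2 * n).choose n : ℚ)
          * (ascPochhammer ℚ (b + 1)).eval ((n : ℚ) - (b : ℚ))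
          * (ascPochhammer ℚ b).eval ((n : ℚ) - (b : ℚ) + 1) := by
  by_cases hbn : b ≤ n
  · obtain ⟨m, rfl⟩ : ∃ m, n = m + b := ⟨n - b, by omega⟩
    -- restrict the sum to `Icc 1 m`
    have hsubset : Finset.Icc 1 m ⊆ Finset.Icc 1 (m + b) :=
      Finset.Icc_subset_Icc_right (by omega)
    have hzero : ∀ j ∈ Finset.Icc 1 (m + b), j ∉ Finset.Icc 1 m →
        (j : ℚ) * ((2 * (m + b)).choose (m + b + j) : ℚ) *
          ∏ r ∈ Finset.range b, ((((m + b : ℕ) : ℚ) - (r : ℚ)) ^ 2 - (j : ℚ) ^ 2) = 0 := by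
      intro j hj hj'
      rw [Finset.mem_Icc] at hj hj'
      have hjm : m + 1 ≤ j := by omega
      have hr : m + b - j ∈ Finset.range b := Finset.mem_range.2 (by omega)
      have hfac : (((m + b : ℕ) : ℚ) - ((m + b - j : ℕ) : ℚ)) ^ 2 - (j : ℚ) ^ 2 = 0 := by
        rw [Nat.cast_sub (by omega : j ≤ m + b)]
        ring
      rw [Finset.prod_eq_zero hr hfac, mul_zero]
    rw [← Finset.sum_subset hsubset hzero]
    have hterm : ∀ j ∈ Finset.Icc 1 m,
        (j : ℚ) * ((2 * (m + b)).choose (m + b + j) : ℚ) *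
            ∏ r ∈ Finset.range b, ((((m + b : ℕ) : ℚ) - (r : ℚ)) ^ 2 - (j : ℚ) ^ 2)
          = ((2 * (m + b)).descFactorial (2 * b) : ℚ) *
              ((j : ℚ) * ((2 * m).choose (m + j) : ℚ)) := by
      intro j hj
      rw [Finset.mem_Icc] at hj
      have hp := prodC (m - j) b j
      rw [show j + (m - j) = m by omega] at hp
      rw [mul_assoc, hp]
      ring
    rw [Finset.sum_congr rfl hterm, ← Finset.mul_sum, sumB]
    -- evaluate the Pochhammer symbols
    have hc1 : ((m + b : ℕ) : ℚ) - (b : ℚ) = ((m : ℕ) : ℚ) := by push_cast; ring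
    have hc2 : ((m + b : ℕ) : ℚ) - (b : ℚ) + 1 = ((m + 1 : ℕ) : ℚ) := by push_cast; ring
    rw [hc1]
    rw [show ((m : ℕ) : ℚ) + 1 = ((m + 1 : ℕ) : ℚ) by push_cast; ring]
    rw [← ascPochhammer_eval_cast, ← ascPochhammer_eval_cast,
      ascPochhammer_nat_eq_ascFactorial, ascPochhammer_nat_eq_ascFactorial]
    exact constId m b
  · -- b > n : both sides vanish
    push_neg at hbn
    have hL : ∀ j ∈ Finset.Icc 1 n,
        (j : ℚ) * ((2 * n).choose (n + j) : ℚ) *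
          ∏ r ∈ Finset.range b, (((n : ℚ) - (r : ℚ)) ^ 2 - (j : ℚ) ^ 2) = 0 := by
      intro j hj
      rw [Finset.mem_Icc] at hj
      have hr : n - j ∈ Finset.range b := Finset.mem_range.2 (by omega)
      have hz : ((n : ℚ) - ((n - j : ℕ) : ℚ)) ^ 2 - (j : ℚ) ^ 2 = 0 := by
        rw [Nat.cast_sub (by omega : j ≤ n)]
        ring
      rw [Finset.prod_eq_zero hr hz, mul_zero]
    rw [Finset.sum_congr rfl hL, Finset.sum_const, smul_zero]
    have hz2 : (ascPochhammer ℚ (b + 1)).eval ((n : ℚ) - (b : ℚ)) = 0 := by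
      rw [ascP_prod]
      refine Finset.prod_eq_zero (Finset.mem_range.2 (show b - n < b + 1 by omega)) ?_
      rw [Nat.cast_sub (by omega : n ≤ b)]
      ring
    rw [hz2]
    ring

/-- Lemma 5.2, Eq. (5.5) of Krattenthaler–Schneider. -/
theorem single_sum_odd_power (n k : ℕ) (c : ℕ → ℚ)
    (hc : ∀ j : ℤ, (j : ℚ) ^ (2 * k)
      = ∑ b ∈ Finset.range (k + 1), c b *
          ∏ r ∈ Finset.range b, (((n : ℚ) - (r : ℚ)) ^ 2 - (j : ℚ) ^ 2)) :
    ∑ j ∈ Finset.Icc 1 n, (j : ℚ) ^ (2 * k + 1) * ((2 * n).choose (n + j) : ℚ)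
    = (1 / 2 : ℚ) * ((2 * n).choose n : ℚ) *
        ∑ b ∈ Finset.range (k + 1),
          c b * (ascPochhammer ℚ (b + 1)).eval ((n : ℚ) - (b : ℚ))
            * (ascPochhammer ℚ b).eval ((n : ℚ) - (b : ℚ) + 1) := by
  have step1 : ∀ j ∈ Finset.Icc 1 n,
      (j : ℚ) ^ (2 * k + 1) * ((2 * n).choose (n + j) : ℚ)
        = ∑ b ∈ Finset.range (k + 1),
            c b * ((j : ℚ) * ((2 * n).choose (n + j) : ℚ) *
              ∏ r ∈ Finset.range b, (((n : ℚ) - (r : ℚ)) ^ 2 - (j : ℚ) ^ 2)) := by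
    intro j _
    have hj := hc (j : ℤ)
    push_cast at hj
    rw [pow_succ, hj, Finset.sum_mul, Finset.sum_mul]
    refine Finset.sum_congr rfl ?_
    intro b _
    ring
  rw [Finset.sum_congr rfl step1, Finset.sum_comm]
  have step2 : ∀ b ∈ Finset.range (k + 1),
      ∑ j ∈ Finset.Icc 1 n,
          c b * ((j : ℚ) * ((2 * n).choose (n + j) : ℚ) *
            ∏ r ∈ Finset.range b, (((n : ℚ) - (r : ℚ)) ^ 2 - (j : ℚ) ^ 2))
        = c b * ((1 / 2 : ℚ) * ((2 * n).choose n : ℚ)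
            * (ascPochhammer ℚ (b + 1)).eval ((n : ℚ) - (b : ℚ))
            * (ascPochhammer ℚ b).eval ((n : ℚ) - (b : ℚ) + 1)) := by
    intro b _
    rw [← Finset.mul_sum, sumA]
  rw [Finset.sum_congr rfl step2, Finset.mul_sum]
  refine Finset.sum_congr rfl ?_
  intro b _
  ring
end
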